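/- arXiv:math/0005051 — 4 statements merged into one kernel-verified Lean document; each statement's English description precedes it below -/
import Mathlib

section
/- For two contravariant metrics g₁^{ij}(u) and g₂^{ij}(u) on an open set U ⊆ ℝ^N, the tensor M^{ijk}(u) = g₁^{is}Γ₂^{jk}_s − g₂^{js}Γ₁^{ik}_s − g₁^{js}Γ₂^{ik}_s + g₂^{is}Γ₁^{jk}_s vanishes identically on U if and only if the metrics g₁ and g₂ are almost compatible. -/
open Matrix

/-- Partial derivative of a scalar function on `ℝ^N` in the `s`-th coordinate direction. -/
noncomputable def pdv {N : ℕ} (f : (Fin N → ℝ) → ℝ) (s : Fin N) (u : Fin N → ℝ) : ℝ :=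
  fderiv ℝ f u (Pi.single s 1)

/-- Levi-Civita Christoffel symbols `Γ^i_{jk}` of a contravariant metric `g^{ij}`
(whose covariant form is the inverse matrix). -/
noncomputable def christoffel {N : ℕ} (g : (Fin N → ℝ) → Matrix (Fin N) (Fin N) ℝ)
    (i j k : Fin N) (u : Fin N → ℝ) : ℝ :=
  (1 / 2) * ∑ s : Fin N, g u i s *
    (pdv (fun v => (g v)⁻¹ s k) j u + pdv (fun v => (g v)⁻¹ j s) k u
      - pdv (fun v => (g v)⁻¹ j k) s u)

/-- Contravariant Christoffel symbols `Γ^{ij}_k = g^{is} Γ^j_{sk}`. -/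
noncomputable def christoffelCon {N : ℕ} (g : (Fin N → ℝ) → Matrix (Fin N) (Fin N) ℝ)
    (i j k : Fin N) (u : Fin N → ℝ) : ℝ :=
  ∑ s : Fin N, g u i s * christoffel g j s k u

/-- Riemann curvature tensor
`R^i_{jkl} = −∂Γ^i_{jl}/∂u^k + ∂Γ^i_{jk}/∂u^l − Γ^i_{pk}Γ^p_{jl} + Γ^i_{pl}Γ^p_{jk}`. -/
noncomputable def riemann {N : ℕ} (g : (Fin N → ℝ) → Matrix (Fin N) (Fin N) ℝ)
    (i j k l : Fin N) (u : Fin N → ℝ) : ℝ :=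
  - pdv (fun v => christoffel g i j l v) k u + pdv (fun v => christoffel g i j k v) l u
    - ∑ p : Fin N, christoffel g i p k u * christoffel g p j l u
    + ∑ p : Fin N, christoffel g i p l u * christoffel g p j k u

/-- Curvature with raised index: `R^{ij}_{kl} = g^{is} R^j_{skl}`. -/
noncomputable def riemannCon {N : ℕ} (g : (Fin N → ℝ) → Matrix (Fin N) (Fin N) ℝ)
    (i j k l : Fin N) (u : Fin N → ℝ) : ℝ :=
  ∑ s : Fin N, g u i s * riemann g j s k l u

/-- A contravariant (pseudo-Riemannian) metric on `U`: smooth, symmetric, nondegenerate. -/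
def IsMetricOn {N : ℕ} (U : Set (Fin N → ℝ))
    (g : (Fin N → ℝ) → Matrix (Fin N) (Fin N) ℝ) : Prop :=
  (∀ i j, ContDiffOn ℝ (⊤ : ℕ∞) (fun u => g u i j) U) ∧
  (∀ u ∈ U, (g u).IsSymm) ∧ (∀ u ∈ U, (g u).det ≠ 0)

/-- Almost compatibility: each admissible linear combination has Levi-Civita
connection given by the same linear combination. -/
def AlmostCompatibleOn {N : ℕ} (U : Set (Fin N → ℝ))
    (g₁ g₂ : (Fin N → ℝ) → Matrix (Fin N) (Fin N) ℝ) : Prop :=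
  ∀ l₁ l₂ : ℝ, (∃ u ∈ U, (l₁ • g₁ u + l₂ • g₂ u).det ≠ 0) →
    ∀ u ∈ U, (l₁ • g₁ u + l₂ • g₂ u).det ≠ 0 →
      ∀ i j k, christoffelCon (fun v => l₁ • g₁ v + l₂ • g₂ v) i j k u
        = l₁ * christoffelCon g₁ i j k u + l₂ * christoffelCon g₂ i j k u

/-- Compatibility: almost compatibility together with the analogous linear relation
for the curvature tensors. -/
def CompatibleOn {N : ℕ} (U : Set (Fin N → ℝ))
    (g₁ g₂ : (Fin N → ℝ) → Matrix (Fin N) (Fin N) ℝ) : Prop :=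
  AlmostCompatibleOn U g₁ g₂ ∧
  ∀ l₁ l₂ : ℝ, (∃ u ∈ U, (l₁ • g₁ u + l₂ • g₂ u).det ≠ 0) →
    ∀ u ∈ U, (l₁ • g₁ u + l₂ • g₂ u).det ≠ 0 →
      ∀ i j k l, riemannCon (fun v => l₁ • g₁ v + l₂ • g₂ v) i j k l u
        = l₁ * riemannCon g₁ i j k l u + l₂ * riemannCon g₂ i j k l u

/-- The affinor `v^i_j = g₁^{is} g_{2,sj}` of a pair of metrics. -/
noncomputable def affinor {N : ℕ} (g₁ g₂ : (Fin N → ℝ) → Matrix (Fin N) (Fin N) ℝ)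
    (u : Fin N → ℝ) : Matrix (Fin N) (Fin N) ℝ :=
  g₁ u * (g₂ u)⁻¹

/-- The Nijenhuis tensor `N^k_{ij}` of an affinor `w^i_j(u)` (first index up). -/
noncomputable def nijenhuis {N : ℕ} (w : (Fin N → ℝ) → Matrix (Fin N) (Fin N) ℝ)
    (k i j : Fin N) (u : Fin N → ℝ) : ℝ :=
  ∑ s : Fin N, (w u s i * pdv (fun v => w v k j) s u - w u s j * pdv (fun v => w v k i) s u
    + w u k s * pdv (fun v => w v s i) j u - w u k s * pdv (fun v => w v s j) i u)

/-- The tensor `M^{ijk} = g₁^{is}Γ₂^{jk}_s − g₂^{js}Γ₁^{ik}_s − g₁^{js}Γ₂^{ik}_s + g₂^{is}Γ₁^{jk}_s`. -/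
noncomputable def Mtensor {N : ℕ} (g₁ g₂ : (Fin N → ℝ) → Matrix (Fin N) (Fin N) ℝ)
    (i j k : Fin N) (u : Fin N → ℝ) : ℝ :=
  ∑ s : Fin N, (g₁ u i s * christoffelCon g₂ j k s u - g₂ u j s * christoffelCon g₁ i k s u
    - g₁ u j s * christoffelCon g₂ i k s u + g₂ u i s * christoffelCon g₁ j k s u)

/-- A nonsingular pair of metrics: at every point, `det(g₁ − λ g₂) = 0` has `N`
pairwise distinct roots. -/
def NonsingularPairOn {N : ℕ} (U : Set (Fin N → ℝ))
    (g₁ g₂ : (Fin N → ℝ) → Matrix (Fin N) (Fin N) ℝ) : Prop :=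
  ∀ u ∈ U, ∃ lam : Fin N → ℝ, Function.Injective lam ∧
    ∀ m, (g₁ u - lam m • g₂ u).det = 0

section AuxLemmas

open Filter

variable {N : ℕ}

lemma pdv_congr {f₁ f₂ : (Fin N → ℝ) → ℝ} {u : Fin N → ℝ} (h : f₁ =ᶠ[nhds u] f₂) (s : Fin N) :
    pdv f₁ s u = pdv f₂ s u := by
  simp only [pdv]
  rw [h.fderiv_eq]

lemma pdv_const {c : ℝ} {s : Fin N} {u : Fin N → ℝ} : pdv (fun _ => c) s u = 0 := by
  simp [pdv]

lemma pdv_sum {ι : Type*} {t : Finset ι} {f : ι → (Fin N → ℝ) → ℝ} {s : Fin N} {u : Fin N → ℝ}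
    (hf : ∀ i ∈ t, DifferentiableAt ℝ (f i) u) :
    pdv (fun v => ∑ i ∈ t, f i v) s u = ∑ i ∈ t, pdv (f i) s u := by
  simp only [pdv]
  rw [fderiv_fun_sum hf]
  simp

lemma pdv_mul {f g : (Fin N → ℝ) → ℝ} {s : Fin N} {u : Fin N → ℝ}
    (hf : DifferentiableAt ℝ f u) (hg : DifferentiableAt ℝ g u) :
    pdv (fun v => f v * g v) s u = pdv f s u * g u + f u * pdv g s u := by
  simp only [pdv]
  rw [fderiv_fun_mul hf hg]
  simp only [ContinuousLinearMap.add_apply, ContinuousLinearMap.smul_apply, smul_eq_mul]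
  ring

lemma pdv_lin {f g : (Fin N → ℝ) → ℝ} {s : Fin N} {u : Fin N → ℝ} (a b : ℝ)
    (hf : DifferentiableAt ℝ f u) (hg : DifferentiableAt ℝ g u) :
    pdv (fun v => a * f v + b * g v) s u = a * pdv f s u + b * pdv g s u := by
  simp only [pdv]
  rw [fderiv_fun_add ((hf.const_mul a)) ((hg.const_mul b)), fderiv_const_mul hf a,
    fderiv_const_mul hg b]
  simp

lemma differentiableAt_det {A : (Fin N → ℝ) → Matrix (Fin N) (Fin N) ℝ} {u : Fin N → ℝ}
    (hA : ∀ i j, DifferentiableAt ℝ (fun v => A v i j) u) :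
    DifferentiableAt ℝ (fun v => (A v).det) u := by
  have heq : (fun v => (A v).det)
      = fun v => ∑ σ : Equiv.Perm (Fin N),
          ((Equiv.Perm.sign σ : ℤ) : ℝ) * ∏ i, A v (σ i) i := by
    funext v
    rw [Matrix.det_apply']
  rw [heq]
  refine DifferentiableAt.fun_sum fun σ _ => DifferentiableAt.const_mul ?_ _
  exact (HasFDerivAt.finset_prod (fun i _ => (hA (σ i) i).hasFDerivAt)).differentiableAt

lemma differentiableAt_inv_entry {g : (Fin N → ℝ) → Matrix (Fin N) (Fin N) ℝ} {u : Fin N → ℝ}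
    (hg : ∀ i j, DifferentiableAt ℝ (fun v => g v i j) u)
    (hdet : (g u).det ≠ 0) (i j : Fin N) :
    DifferentiableAt ℝ (fun v => (g v)⁻¹ i j) u := by
  have heq : (fun v => (g v)⁻¹ i j)
      = fun v => ((g v).det)⁻¹ * ((g v).updateRow j (Pi.single i 1)).det := by
    funext v
    rw [Matrix.inv_def, Matrix.smul_apply, Matrix.adjugate_apply, Ring.inverse_eq_inv,
      smul_eq_mul]
  rw [heq]
  refine DifferentiableAt.mul ((differentiableAt_det hg).inv hdet) (differentiableAt_det ?_)
  intro a b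
  have h2 : (fun v => (g v).updateRow j (Pi.single i 1) a b)
      = fun v => if a = j then (Pi.single i 1 : Fin N → ℝ) b else g v a b := by
    funext v
    rw [Matrix.updateRow_apply]
  rw [h2]
  by_cases hab : a = j
  · simp only [if_pos hab]
    exact differentiableAt_const _
  · simp only [if_neg hab]
    exact hg a b

lemma pdv_inv_symm {g : (Fin N → ℝ) → Matrix (Fin N) (Fin N) ℝ} {u : Fin N → ℝ}
    (hsymm : ∀ᶠ v in nhds u, (g v).IsSymm) (a b c : Fin N) :
    pdv (fun v => (g v)⁻¹ a b) c u = pdv (fun v => (g v)⁻¹ b a) c u := by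
  refine pdv_congr ?_ c
  filter_upwards [hsymm] with v hv
  have hinv : ((g v)⁻¹).IsSymm := by
    unfold Matrix.IsSymm
    rw [Matrix.transpose_nonsing_inv, hv.eq]
  exact hinv.apply b a

lemma sum_mul_pdv_inv {g : (Fin N → ℝ) → Matrix (Fin N) (Fin N) ℝ} {u : Fin N → ℝ}
    (hg : ∀ i j, DifferentiableAt ℝ (fun v => g v i j) u)
    (hinv : ∀ i j, DifferentiableAt ℝ (fun v => (g v)⁻¹ i j) u)
    (hne : ∀ᶠ v in nhds u, (g v).det ≠ 0)
    (a b k : Fin N) :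
    ∑ s, g u a s * pdv (fun v => (g v)⁻¹ s b) k u
      = - ∑ s, pdv (fun v => g v a s) k u * (g u)⁻¹ s b := by
  have h0 : pdv (fun v => ∑ s, g v a s * (g v)⁻¹ s b) k u = 0 := by
    have hev : (fun v => ∑ s, g v a s * (g v)⁻¹ s b)
        =ᶠ[nhds u] fun _ => (1 : Matrix (Fin N) (Fin N) ℝ) a b := by
      filter_upwards [hne] with v hv
      have h1 : g v * (g v)⁻¹ = 1 := Matrix.mul_nonsing_inv _ (isUnit_iff_ne_zero.2 hv)
      calc (∑ s, g v a s * (g v)⁻¹ s b) = (g v * (g v)⁻¹) a b := (Matrix.mul_apply).symm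
        _ = (1 : Matrix (Fin N) (Fin N) ℝ) a b := by rw [h1]
    rw [pdv_congr hev, pdv_const]
  rw [pdv_sum (fun s _ => (hg a s).fun_mul (hinv s b))] at h0
  rw [Finset.sum_congr rfl fun s _ => pdv_mul (hg a s) (hinv s b)] at h0
  rw [Finset.sum_add_distrib] at h0
  linarith [h0]

lemma algebra_A (G Hm : Matrix (Fin N) (Fin N) ℝ)
    (D : Fin N → Fin N → Fin N → ℝ) (E : Fin N → Fin N → ℝ) (k : Fin N)
    (hGsym : ∀ a b, G a b = G b a)
    (hDsym : ∀ a b c, D a b c = D b a c)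
    (hkey : ∀ a b, ∑ s, G a s * D s b k = - ∑ s, E a s * Hm s b)
    (hHG : ∀ p q, ∑ s, Hm p s * G s q = if p = q then (1:ℝ) else 0)
    (i j : Fin N) :
    (∑ s, G i s * (1 / 2 * ∑ p, G j p * (D p k s + D s p k - D s k p)))
      + (∑ s, G j s * (1 / 2 * ∑ p, G i p * (D p k s + D s p k - D s k p))) = - E i j := by
  have expand : ∀ a b : Fin N,
      (∑ s : Fin N, G a s * (1 / 2 * ∑ p : Fin N, G b p * (D p k s + D s p k - D s k p)))
        = ∑ s : Fin N, ∑ p : Fin N, 1 / 2 * (G a s * G b p * (D p k s + D s p k - D s k p)) := by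
    intro a b
    refine Finset.sum_congr rfl fun s _ => ?_
    rw [Finset.mul_sum, Finset.mul_sum]
    exact Finset.sum_congr rfl fun p _ => by ring
  rw [expand i j, expand j i]
  have comm : (∑ s : Fin N, ∑ p : Fin N, 1 / 2 * (G j s * G i p * (D p k s + D s p k - D s k p)))
      = ∑ s : Fin N, ∑ p : Fin N, 1 / 2 * (G j p * G i s * (D s k p + D p s k - D p k s)) :=
    Finset.sum_comm
  rw [comm, ← Finset.sum_add_distrib]
  have merge : ∀ s : Fin N,
      ((∑ p : Fin N, 1 / 2 * (G i s * G j p * (D p k s + D s p k - D s k p)))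
        + ∑ p : Fin N, 1 / 2 * (G j p * G i s * (D s k p + D p s k - D p k s)))
      = ∑ p : Fin N, G i s * D s p k * G p j := by
    intro s
    rw [← Finset.sum_add_distrib]
    refine Finset.sum_congr rfl fun p _ => ?_
    have h1 : D p s k = D s p k := hDsym p s k
    have h2 : G j p = G p j := hGsym j p
    linear_combination (1 / 2 * (G i s * G j p)) * h1 + (G i s * D s p k) * h2
  rw [Finset.sum_congr rfl fun s _ => merge s]
  have step2 : (∑ s : Fin N, ∑ p : Fin N, G i s * D s p k * G p j)
      = ∑ p : Fin N, (∑ s : Fin N, G i s * D s p k) * G p j := by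
    rw [Finset.sum_comm]
    exact Finset.sum_congr rfl fun p _ => (Finset.sum_mul _ _ _).symm
  rw [step2]
  rw [Finset.sum_congr rfl fun p (_ : p ∈ Finset.univ) =>
    (by rw [hkey i p] : (∑ s : Fin N, G i s * D s p k) * G p j
      = (- ∑ s : Fin N, E i s * Hm s p) * G p j)]
  have t1 : ∀ p, (- ∑ s : Fin N, E i s * Hm s p) * G p j
      = ∑ s : Fin N, -(E i s * (Hm s p * G p j)) := by
    intro p
    rw [neg_mul, Finset.sum_mul, ← Finset.sum_neg_distrib]
    exact Finset.sum_congr rfl fun s _ => by ring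
  rw [Finset.sum_congr rfl fun p _ => t1 p, Finset.sum_comm]
  have t2 : ∀ s, (∑ p : Fin N, -(E i s * (Hm s p * G p j)))
      = -(E i s * (if s = j then (1:ℝ) else 0)) := by
    intro s
    rw [Finset.sum_neg_distrib, ← Finset.mul_sum, hHG s j]
  rw [Finset.sum_congr rfl fun s _ => t2 s, Finset.sum_neg_distrib]
  congr 1
  simp

lemma christoffelCon_add_symm {g : (Fin N → ℝ) → Matrix (Fin N) (Fin N) ℝ} {u : Fin N → ℝ}
    (hdiffg : ∀ i j, DifferentiableAt ℝ (fun v => g v i j) u)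
    (hsymm : ∀ᶠ v in nhds u, (g v).IsSymm)
    (hdet : (g u).det ≠ 0) (i j k : Fin N) :
    christoffelCon g i j k u + christoffelCon g j i k u = - pdv (fun v => g v i j) k u := by
  have hne : ∀ᶠ v in nhds u, (g v).det ≠ 0 :=
    (differentiableAt_det hdiffg).continuousAt.eventually_ne hdet
  have hinv : ∀ a b, DifferentiableAt ℝ (fun v => (g v)⁻¹ a b) u :=
    fun a b => differentiableAt_inv_entry hdiffg hdet a b
  have hGsym : ∀ a b, g u a b = g u b a := fun a b => hsymm.self_of_nhds.apply b a
  have hHG : ∀ p q, ∑ s, (g u)⁻¹ p s * g u s q = if p = q then (1:ℝ) else 0 := by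
    intro p q
    have h1 : (g u)⁻¹ * g u = 1 := Matrix.nonsing_inv_mul _ (isUnit_iff_ne_zero.2 hdet)
    have h2 : ((g u)⁻¹ * g u) p q = (1 : Matrix (Fin N) (Fin N) ℝ) p q := by rw [h1]
    rw [Matrix.mul_apply] at h2
    rw [h2, Matrix.one_apply]
  simp only [christoffelCon, christoffel]
  exact algebra_A (g u) (g u)⁻¹ (fun a b c => pdv (fun v => (g v)⁻¹ a b) c u)
    (fun a b => pdv (fun v => g v a b) k u) k hGsym
    (fun a b c => pdv_inv_symm hsymm a b c)
    (fun a b => sum_mul_pdv_inv hdiffg hinv hne a b k) hHG i j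

lemma christoffel_swap {g : (Fin N → ℝ) → Matrix (Fin N) (Fin N) ℝ} {u : Fin N → ℝ}
    (hsymm : ∀ᶠ v in nhds u, (g v).IsSymm) (a b c : Fin N) :
    christoffel g a b c u = christoffel g a c b u := by
  simp only [christoffel]
  congr 1
  refine Finset.sum_congr rfl fun s _ => ?_
  rw [pdv_inv_symm hsymm s c b, pdv_inv_symm hsymm b s c, pdv_inv_symm hsymm b c s]
  ring

lemma christoffelCon_raise_symm {g : (Fin N → ℝ) → Matrix (Fin N) (Fin N) ℝ} {u : Fin N → ℝ}
    (hsymm : ∀ᶠ v in nhds u, (g v).IsSymm) (i j k : Fin N) :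
    ∑ s, g u i s * christoffelCon g j k s u = ∑ s, g u j s * christoffelCon g i k s u := by
  simp only [christoffelCon]
  calc ∑ s : Fin N, g u i s * ∑ p : Fin N, g u j p * christoffel g k p s u
      = ∑ s : Fin N, ∑ p : Fin N, g u i s * (g u j p * christoffel g k p s u) :=
        Finset.sum_congr rfl fun s _ => by rw [Finset.mul_sum]
    _ = ∑ s : Fin N, ∑ p : Fin N, g u i p * (g u j s * christoffel g k s p u) :=
        Finset.sum_comm
    _ = ∑ s : Fin N, ∑ p : Fin N, g u j s * (g u i p * christoffel g k p s u) :=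
        Finset.sum_congr rfl fun s _ => Finset.sum_congr rfl fun p _ => by
          rw [christoffel_swap hsymm k s p]; ring
    _ = ∑ s : Fin N, g u j s * ∑ p : Fin N, g u i p * christoffel g k p s u :=
        Finset.sum_congr rfl fun s _ => by rw [Finset.mul_sum]

lemma chain_zero {γ : Type*} (f : γ → γ → γ → ℝ)
    (csym : ∀ a b c, f a b c = f b a c)
    (canti : ∀ a b c, f a b c = - f a c b) (a b c : γ) : f a b c = 0 := by
  have h := calc f a b c = f b a c := csym a b c
    _ = -f b c a := canti b a c
    _ = -f c b a := by rw [csym b c a]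
    _ = f c a b := by rw [canti c b a, neg_neg]
    _ = f a c b := csym c a b
    _ = -f a b c := canti a c b
  linarith

lemma uniq_aux (G : Matrix (Fin N) (Fin N) ℝ) (hdet : G.det ≠ 0)
    (A B : Fin N → Fin N → Fin N → ℝ)
    (h1 : ∀ i j k, A i j k + A j i k = B i j k + B j i k)
    (h2 : ∀ i j k, ∑ s, G i s * A j k s = ∑ s, G j s * A i k s)
    (h3 : ∀ i j k, ∑ s, G i s * B j k s = ∑ s, G j s * B i k s)
    (i j k : Fin N) : A i j k = B i j k := by
  have csym : ∀ a b c : Fin N,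
      (fun a b c => ∑ s, G a s * (A b c s - B b c s)) a b c
        = (fun a b c => ∑ s, G a s * (A b c s - B b c s)) b a c := by
    intro a b c
    simp only [mul_sub, Finset.sum_sub_distrib]
    rw [h2 a b c, h3 a b c]
  have canti : ∀ a b c : Fin N,
      (fun a b c => ∑ s, G a s * (A b c s - B b c s)) a b c
        = - (fun a b c => ∑ s, G a s * (A b c s - B b c s)) a c b := by
    intro a b c
    simp only
    have hz : (∑ s, G a s * (A b c s - B b c s)) + (∑ s, G a s * (A c b s - B c b s)) = 0 := by
      rw [← Finset.sum_add_distrib]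
      refine Finset.sum_eq_zero fun s _ => ?_
      linear_combination (G a s) * h1 b c s
    linarith
  have czero := fun a b c =>
    chain_zero (fun a b c => ∑ s, G a s * (A b c s - B b c s)) csym canti a b c
  have hmv : G.mulVec (fun s => A i j s - B i j s) = 0 := by
    funext a
    have := czero a i j
    simpa [Matrix.mulVec, dotProduct] using this
  have hx : (fun s => A i j s - B i j s) = 0 := by
    have h4 : G⁻¹.mulVec (G.mulVec (fun s => A i j s - B i j s)) = G⁻¹.mulVec 0 := by
      rw [hmv]
    rwa [Matrix.mulVec_mulVec, Matrix.nonsing_inv_mul _ (isUnit_iff_ne_zero.2 hdet),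
      Matrix.one_mulVec, Matrix.mulVec_zero] at h4
  have h5 := congrFun hx k
  simp only [Pi.zero_apply] at h5
  linarith

lemma sum_expand (l₁ l₂ : ℝ) (X Y P Q : Fin N → ℝ) :
    ∑ s, (l₁ * X s + l₂ * Y s) * (l₁ * P s + l₂ * Q s)
      = l₁ * l₁ * ∑ s, X s * P s + l₁ * l₂ * ∑ s, X s * Q s
        + l₁ * l₂ * ∑ s, Y s * P s + l₂ * l₂ * ∑ s, Y s * Q s := by
  rw [Finset.mul_sum, Finset.mul_sum, Finset.mul_sum, Finset.mul_sum,
    ← Finset.sum_add_distrib, ← Finset.sum_add_distrib, ← Finset.sum_add_distrib]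
  exact Finset.sum_congr rfl fun s _ => by ring

end AuxLemmas

/-- the tensor `M^{ijk}` vanishes identically iff the metrics are
almost compatible. -/
theorem Mtensor_vanishes_iff_almost_compatible {N : ℕ}
    (U : Set (Fin N → ℝ)) (hU : IsOpen U)
    (g₁ g₂ : (Fin N → ℝ) → Matrix (Fin N) (Fin N) ℝ)
    (hg₁ : IsMetricOn U g₁) (hg₂ : IsMetricOn U g₂) :
    (∀ u ∈ U, ∀ i j k, Mtensor g₁ g₂ i j k u = 0) ↔ AlmostCompatibleOn U g₁ g₂ := by
  obtain ⟨hg₁d, hg₁s, hg₁det⟩ := hg₁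
  obtain ⟨hg₂d, hg₂s, hg₂det⟩ := hg₂
  have hdiff₁ : ∀ u ∈ U, ∀ i j, DifferentiableAt ℝ (fun v => g₁ v i j) u := fun u hu i j =>
    ((hg₁d i j).contDiffAt (hU.mem_nhds hu)).differentiableAt (by simp)
  have hdiff₂ : ∀ u ∈ U, ∀ i j, DifferentiableAt ℝ (fun v => g₂ v i j) u := fun u hu i j =>
    ((hg₂d i j).contDiffAt (hU.mem_nhds hu)).differentiableAt (by simp)
  have hsymm₁ : ∀ u ∈ U, ∀ᶠ v in nhds u, (g₁ v).IsSymm := fun u hu =>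
    Filter.eventually_of_mem (hU.mem_nhds hu) (fun v hv => hg₁s v hv)
  have hsymm₂ : ∀ u ∈ U, ∀ᶠ v in nhds u, (g₂ v).IsSymm := fun u hu =>
    Filter.eventually_of_mem (hU.mem_nhds hu) (fun v hv => hg₂s v hv)
  constructor
  · -- M = 0 → almost compatible
    intro hM l₁ l₂ _ u hu hdet i j k
    have hent : ∀ (a b : Fin N),
        (fun v => (l₁ • g₁ v + l₂ • g₂ v) a b)
          = fun v => l₁ * g₁ v a b + l₂ * g₂ v a b := by
      intro a b
      funext v
      simp [Matrix.add_apply, Matrix.smul_apply, smul_eq_mul]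
    have hdiffc : ∀ a b, DifferentiableAt ℝ (fun v => (l₁ • g₁ v + l₂ • g₂ v) a b) u := by
      intro a b
      rw [hent a b]
      exact ((hdiff₁ u hu a b).const_mul l₁).add ((hdiff₂ u hu a b).const_mul l₂)
    have hsymc : ∀ᶠ v in nhds u, (l₁ • g₁ v + l₂ • g₂ v).IsSymm := by
      filter_upwards [hsymm₁ u hu, hsymm₂ u hu] with v h1 h2
      exact (h1.smul l₁).add (h2.smul l₂)
    refine uniq_aux (l₁ • g₁ u + l₂ • g₂ u) hdet
      (fun a b c => christoffelCon (fun v => l₁ • g₁ v + l₂ • g₂ v) a b c u)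
      (fun a b c => l₁ * christoffelCon g₁ a b c u + l₂ * christoffelCon g₂ a b c u)
      ?_ ?_ ?_ i j k
    · -- h1
      intro a b c
      have hc := christoffelCon_add_symm (g := fun v => l₁ • g₁ v + l₂ • g₂ v)
        hdiffc hsymc hdet a b c
      have hA1 := christoffelCon_add_symm (hdiff₁ u hu) (hsymm₁ u hu) (hg₁det u hu) a b c
      have hA2 := christoffelCon_add_symm (hdiff₂ u hu) (hsymm₂ u hu) (hg₂det u hu) a b c
      have hpdv : pdv (fun v => (l₁ • g₁ v + l₂ • g₂ v) a b) c u
          = l₁ * pdv (fun v => g₁ v a b) c u + l₂ * pdv (fun v => g₂ v a b) c u := by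
        rw [hent a b]
        exact pdv_lin l₁ l₂ (hdiff₁ u hu a b) (hdiff₂ u hu a b)
      beta_reduce at hc
      linear_combination hc - hpdv - l₁ * hA1 - l₂ * hA2
    · -- h2
      intro a b c
      exact christoffelCon_raise_symm (g := fun v => l₁ • g₁ v + l₂ • g₂ v) hsymc a b c
    · -- h3
      intro a b c
      have e₁ := christoffelCon_raise_symm (g := g₁) (hsymm₁ u hu) a b c
      have e₂ := christoffelCon_raise_symm (g := g₂) (hsymm₂ u hu) a b c
      have hm := hM u hu a b c
      simp only [Mtensor] at hm
      rw [Finset.sum_add_distrib, Finset.sum_sub_distrib, Finset.sum_sub_distrib] at hm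
      show (∑ s, (l₁ • g₁ u + l₂ • g₂ u) a s
            * (l₁ * christoffelCon g₁ b c s u + l₂ * christoffelCon g₂ b c s u))
          = ∑ s, (l₁ • g₁ u + l₂ • g₂ u) b s
            * (l₁ * christoffelCon g₁ a c s u + l₂ * christoffelCon g₂ a c s u)
      simp only [Matrix.add_apply, Matrix.smul_apply, smul_eq_mul]
      rw [sum_expand l₁ l₂ (fun s => g₁ u a s) (fun s => g₂ u a s)
        (fun s => christoffelCon g₁ b c s u) (fun s => christoffelCon g₂ b c s u),
        sum_expand l₁ l₂ (fun s => g₁ u b s) (fun s => g₂ u b s)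
        (fun s => christoffelCon g₁ a c s u) (fun s => christoffelCon g₂ a c s u)]
      linear_combination (l₁ * l₁) * e₁ + (l₂ * l₂) * e₂ + (l₁ * l₂) * hm
  · -- almost compatible → M = 0
    intro hAC u hu i j k
    have hcont : Continuous fun t : ℝ => ((1:ℝ) • g₁ u + t • g₂ u).det :=
      (continuous_const.add (continuous_id.smul continuous_const)).matrix_det
    have h0 : ((1:ℝ) • g₁ u + (0:ℝ) • g₂ u).det ≠ 0 := by
      simpa [one_smul, zero_smul] using hg₁det u hu
    have hev : ∀ᶠ t in nhds (0:ℝ), ((1:ℝ) • g₁ u + t • g₂ u).det ≠ 0 :=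
      hcont.continuousAt.eventually_ne h0
    obtain ⟨t, htdet, ht0⟩ :=
      ((hev.filter_mono (nhdsWithin_le_nhds (s := {(0:ℝ)}ᶜ))).and
        (eventually_mem_nhdsWithin (a := (0:ℝ)) (s := {(0:ℝ)}ᶜ))).exists
    have ht0' : (t : ℝ) ≠ 0 := ht0
    have hc := hAC 1 t ⟨u, hu, htdet⟩ u hu htdet
    have hsymc : ∀ᶠ v in nhds u, ((1:ℝ) • g₁ v + t • g₂ v).IsSymm := by
      filter_upwards [hsymm₁ u hu, hsymm₂ u hu] with v h1 h2
      exact (h1.smul (1:ℝ)).add (h2.smul t)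
    have hraise := christoffelCon_raise_symm (g := fun v => (1:ℝ) • g₁ v + t • g₂ v)
      hsymc i j k
    simp only [hc] at hraise
    simp only [Matrix.add_apply, Matrix.smul_apply, smul_eq_mul] at hraise
    rw [sum_expand (1:ℝ) t (fun s => g₁ u i s) (fun s => g₂ u i s)
        (fun s => christoffelCon g₁ j k s u) (fun s => christoffelCon g₂ j k s u),
      sum_expand (1:ℝ) t (fun s => g₁ u j s) (fun s => g₂ u j s)
        (fun s => christoffelCon g₁ i k s u) (fun s => christoffelCon g₂ i k s u)] at hraise
    have e₁ := christoffelCon_raise_symm (g := g₁) (hsymm₁ u hu) i j k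
    have e₂ := christoffelCon_raise_symm (g := g₂) (hsymm₂ u hu) i j k
    simp only [Mtensor]
    rw [Finset.sum_add_distrib, Finset.sum_sub_distrib, Finset.sum_sub_distrib]
    refine mul_left_cancel₀ ht0' ?_
    linear_combination hraise - e₁ - (t * t) * e₂
end

section
/- Two contravariant metrics g₁^{ij}(u) and g₂^{ij}(u) on an open set U ⊆ ℝ^N are almost compatible if and only if the Nijenhuis tensor N^k_{ij}(u) of the affinor v^i_j(u) = g₁^{is}(u)g_{2,sj}(u) vanishes identically on U. -/
open Matrix

namespace Mok

variable {N : ℕ}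

lemma diffAt_finset_prod {ι : Type*} {E : Type*} [NormedAddCommGroup E] [NormedSpace ℝ E]
    {s : Finset ι} {f : ι → E → ℝ} {x : E} (h : ∀ i ∈ s, DifferentiableAt ℝ (f i) x) :
    DifferentiableAt ℝ (fun y => ∏ i ∈ s, f i y) x := by
  classical
  induction s using Finset.induction_on with
  | empty => simpa using differentiableAt_const (1 : ℝ)
  | insert a s hni ih =>
    simp only [Finset.prod_insert hni]
    exact (h a (Finset.mem_insert_self a s)).mul
      (ih fun i hi => h i (Finset.mem_insert_of_mem hi))

lemma pdv_congr_nhds {f g : (Fin N → ℝ) → ℝ} {s : Fin N} {u : Fin N → ℝ}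
    (h : f =ᶠ[nhds u] g) : pdv f s u = pdv g s u := by
  unfold pdv; rw [h.fderiv_eq]

lemma pdv_const {c : ℝ} {s : Fin N} {u : Fin N → ℝ} : pdv (fun _ => c) s u = 0 := by
  unfold pdv; rw [fderiv_fun_const]; simp

lemma pdv_add {f g : (Fin N → ℝ) → ℝ} {s : Fin N} {u : Fin N → ℝ}
    (hf : DifferentiableAt ℝ f u) (hg : DifferentiableAt ℝ g u) :
    pdv (fun v => f v + g v) s u = pdv f s u + pdv g s u := by
  unfold pdv; rw [fderiv_fun_add hf hg]; simp

lemma pdv_const_mul {f : (Fin N → ℝ) → ℝ} {s : Fin N} {u : Fin N → ℝ} (c : ℝ)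
    (hf : DifferentiableAt ℝ f u) :
    pdv (fun v => c * f v) s u = c * pdv f s u := by
  unfold pdv; rw [fderiv_const_mul hf]; simp

lemma pdv_mul {f g : (Fin N → ℝ) → ℝ} {s : Fin N} {u : Fin N → ℝ}
    (hf : DifferentiableAt ℝ f u) (hg : DifferentiableAt ℝ g u) :
    pdv (fun v => f v * g v) s u = f u * pdv g s u + g u * pdv f s u := by
  unfold pdv; rw [fderiv_fun_mul hf hg]; simp

lemma pdv_sum {ι : Type*} {t : Finset ι} {f : ι → (Fin N → ℝ) → ℝ} {s : Fin N} {u : Fin N → ℝ}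
    (hf : ∀ i ∈ t, DifferentiableAt ℝ (f i) u) :
    pdv (fun v => ∑ i ∈ t, f i v) s u = ∑ i ∈ t, pdv (f i) s u := by
  unfold pdv; rw [fderiv_fun_sum hf]; simp

-- differentiability of entries of smooth-on-U matrix map
lemma entry_diffAt {U : Set (Fin N → ℝ)} (hU : IsOpen U)
    {g : (Fin N → ℝ) → Matrix (Fin N) (Fin N) ℝ}
    (hg : ∀ i j, ContDiffOn ℝ (⊤ : ℕ∞) (fun u => g u i j) U) {u : Fin N → ℝ} (hu : u ∈ U) (i j : Fin N) :
    DifferentiableAt ℝ (fun v => g v i j) u :=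
  ((hg i j).contDiffAt (hU.mem_nhds hu)).differentiableAt (by simp)

lemma det_diffAt {M : (Fin N → ℝ) → Matrix (Fin N) (Fin N) ℝ} {u : Fin N → ℝ}
    (h : ∀ i j, DifferentiableAt ℝ (fun v => M v i j) u) :
    DifferentiableAt ℝ (fun v => (M v).det) u := by
  simp only [Matrix.det_apply']
  exact DifferentiableAt.fun_sum fun σ _ =>
    (differentiableAt_const _).mul (diffAt_finset_prod fun i _ => h _ _)

lemma inv_entry_diffAt {M : (Fin N → ℝ) → Matrix (Fin N) (Fin N) ℝ} {u : Fin N → ℝ}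
    (h : ∀ i j, DifferentiableAt ℝ (fun v => M v i j) u)
    (hdet : (M u).det ≠ 0) (i j : Fin N) :
    DifferentiableAt ℝ (fun v => (M v)⁻¹ i j) u := by
  have hadj : DifferentiableAt ℝ (fun v => (M v).adjugate i j) u := by
    simp only [Matrix.adjugate_apply]
    apply det_diffAt
    intro p q
    simp only [Matrix.updateRow_apply]
    by_cases hp : p = j
    · simp only [hp, if_pos rfl]; exact differentiableAt_const _
    · simp only [if_neg hp]; exact h p q
  have heq : (fun v => (M v)⁻¹ i j) = fun v => ((M v).det)⁻¹ * (M v).adjugate i j := by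
    funext v; rw [Matrix.inv_def]; simp [Ring.inverse_eq_inv']
  rw [heq]
  exact ((det_diffAt h).inv hdet).mul hadj


lemma mul_inv_delta {M : Matrix (Fin N) (Fin N) ℝ} (hdet : M.det ≠ 0) (j p : Fin N) :
    ∑ t, M j t * M⁻¹ t p = if j = p then 1 else 0 := by
  have h1 : M * M⁻¹ = 1 := Matrix.mul_nonsing_inv M (isUnit_iff_ne_zero.2 hdet)
  have h2 := congrArg (fun X => X j p) h1
  simpa [Matrix.mul_apply, Matrix.one_apply] using h2

lemma inv_mul_delta {M : Matrix (Fin N) (Fin N) ℝ} (hdet : M.det ≠ 0) (j p : Fin N) :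
    ∑ t, M⁻¹ j t * M t p = if j = p then 1 else 0 := by
  have h1 : M⁻¹ * M = 1 := Matrix.nonsing_inv_mul M (isUnit_iff_ne_zero.2 hdet)
  have h2 := congrArg (fun X => X j p) h1
  simpa [Matrix.mul_apply, Matrix.one_apply] using h2

lemma inv_isSymm {M : Matrix (Fin N) (Fin N) ℝ} (hM : M.IsSymm) : (M⁻¹).IsSymm := by
  unfold Matrix.IsSymm at *
  rw [Matrix.transpose_nonsing_inv, hM]

lemma isSymm_apply {M : Matrix (Fin N) (Fin N) ℝ} (hM : M.IsSymm) (i j : Fin N) :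
    M i j = M j i := by
  conv_lhs => rw [← hM]
  rfl

lemma eventually_det_ne {U : Set (Fin N → ℝ)} (hU : IsOpen U)
    {g : (Fin N → ℝ) → Matrix (Fin N) (Fin N) ℝ}
    (hg : ∀ i j, ContDiffOn ℝ (⊤ : ℕ∞) (fun v => g v i j) U) {u : Fin N → ℝ} (hu : u ∈ U)
    (hdet : (g u).det ≠ 0) : ∀ᶠ v in nhds u, (g v).det ≠ 0 := by
  have hc : ContinuousAt (fun v => (g v).det) u :=
    (det_diffAt (fun i j => entry_diffAt hU hg hu i j)).continuousAt
  exact hc.eventually_ne hdet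

lemma pdv_inv_entry {U : Set (Fin N → ℝ)} (hU : IsOpen U)
    {g : (Fin N → ℝ) → Matrix (Fin N) (Fin N) ℝ}
    (hg : ∀ i j, ContDiffOn ℝ (⊤ : ℕ∞) (fun v => g v i j) U)
    {u : Fin N → ℝ} (hu : u ∈ U) (hdet : (g u).det ≠ 0) (s k m : Fin N) :
    pdv (fun v => (g v)⁻¹ s k) m u
      = -∑ p, ∑ q, (g u)⁻¹ s p * pdv (fun v => g v p q) m u * (g u)⁻¹ q k := by
  have hgd : ∀ i j, DifferentiableAt ℝ (fun v => g v i j) u := entry_diffAt hU hg hu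
  have hid : ∀ i j, DifferentiableAt ℝ (fun v => (g v)⁻¹ i j) u :=
    fun i j => inv_entry_diffAt hgd hdet i j
  have key : ∀ m' : Fin N, ∑ t, (pdv (fun v => (g v)⁻¹ s t) m u * g u t m'
      + (g u)⁻¹ s t * pdv (fun v => g v t m') m u) = 0 := by
    intro m'
    have h0 : pdv (fun v => ∑ t, (g v)⁻¹ s t * g v t m') m u = 0 := by
      have hev : (fun v => ∑ t, (g v)⁻¹ s t * g v t m') =ᶠ[nhds u]
          (fun _ => if s = m' then (1:ℝ) else 0) := by
        filter_upwards [eventually_det_ne hU hg hu hdet] with v hv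
        have h1 : (g v)⁻¹ * g v = 1 := Matrix.nonsing_inv_mul _ (isUnit_iff_ne_zero.2 hv)
        have h2 := congrArg (fun X => X s m') h1
        simpa [Matrix.mul_apply, Matrix.one_apply] using h2
      rw [pdv_congr_nhds hev, pdv_const]
    rw [pdv_sum (fun t _ => ((hid s t).fun_mul (hgd t m')))] at h0
    rw [← h0]
    refine Finset.sum_congr rfl fun t _ => ?_
    rw [pdv_mul (hid s t) (hgd t m')]; ring
  have step : ∀ m' : Fin N, ∑ t, pdv (fun v => (g v)⁻¹ s t) m u * g u t m'
      = -∑ t, (g u)⁻¹ s t * pdv (fun v => g v t m') m u := by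
    intro m'
    have h := key m'
    rw [Finset.sum_add_distrib] at h
    linarith
  have collapse : ∑ m', (∑ t, pdv (fun v => (g v)⁻¹ s t) m u * g u t m') * (g u)⁻¹ m' k
      = pdv (fun v => (g v)⁻¹ s k) m u := by
    simp only [Finset.sum_mul]
    rw [Finset.sum_comm]
    have hrow : ∀ t, ∑ m', pdv (fun v => (g v)⁻¹ s t) m u * g u t m' * (g u)⁻¹ m' k
        = pdv (fun v => (g v)⁻¹ s t) m u * (if t = k then 1 else 0) := by
      intro t
      rw [← mul_inv_delta hdet t k, Finset.mul_sum]
      exact Finset.sum_congr rfl fun m' _ => by ring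
    rw [Finset.sum_congr rfl (fun t _ => hrow t)]
    simp
  rw [← collapse, Finset.sum_congr rfl (fun m' _ => by rw [step m'])]
  simp only [neg_mul, Finset.sum_neg_distrib]
  congr 1
  simp only [Finset.sum_mul]
  rw [Finset.sum_comm]



section Tensors
variable {N : ℕ}

/-- Bilinear `E` tensor: `Ebil g h i j q = ∑_t (g_{jt} ∂_t h_{iq} − g_{it} ∂_t h_{jq})`. -/
noncomputable def Ebil (g h : (Fin N → ℝ) → Matrix (Fin N) (Fin N) ℝ)
    (i j q : Fin N) (u : Fin N → ℝ) : ℝ :=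
  ∑ t, (g u j t * pdv (fun v => h v i q) t u - g u i t * pdv (fun v => h v j q) t u)

/-- The obstruction tensor `D`. -/
noncomputable def Dten (g₁ g₂ : (Fin N → ℝ) → Matrix (Fin N) (Fin N) ℝ)
    (i j k : Fin N) (u : Fin N → ℝ) : ℝ :=
  Ebil g₂ g₁ i j k u + Ebil g₁ g₂ i j k u
    - ∑ t, (Ebil g₁ g₁ i j t u * ((g₁ u)⁻¹ * g₂ u) t k
          + Ebil g₂ g₂ i j t u * ((g₂ u)⁻¹ * g₁ u) t k)

variable {U : Set (Fin N → ℝ)} (hU : IsOpen U)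
  {g : (Fin N → ℝ) → Matrix (Fin N) (Fin N) ℝ}
  (hg : ∀ i j, ContDiffOn ℝ (⊤ : ℕ∞) (fun v => g v i j) U)
  {u : Fin N → ℝ} (hu : u ∈ U) (hdet : (g u).det ≠ 0)

lemma contractM {M : Matrix (Fin N) (Fin N) ℝ} (hdet : M.det ≠ 0) (j : Fin N) (f : Fin N → ℝ) :
    ∑ x, (∑ t, M j t * M⁻¹ t x) * f x = f j := by
  rw [Finset.sum_congr rfl fun x (_ : x ∈ Finset.univ) => by rw [mul_inv_delta hdet j x]]
  simp

include hU hg hu hdet in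
lemma mini1 (j k : Fin N) : ∀ s, ∑ t, g u j t * pdv (fun v => (g v)⁻¹ t k) s u
    = -∑ q, pdv (fun v => g v j q) s u * (g u)⁻¹ q k := by
  intro s
  rw [Finset.sum_congr rfl fun t (_ : t ∈ Finset.univ) => by
    rw [pdv_inv_entry hU hg hu hdet t k s]]
  simp only [mul_neg, Finset.sum_neg_distrib, neg_inj]
  calc ∑ t, g u j t * ∑ p, ∑ q, (g u)⁻¹ t p * pdv (fun v => g v p q) s u * (g u)⁻¹ q k
      = ∑ t, ∑ p, (g u j t * (g u)⁻¹ t p) * ∑ q, pdv (fun v => g v p q) s u * (g u)⁻¹ q k := by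
        refine Finset.sum_congr rfl fun t _ => ?_
        rw [Finset.mul_sum]
        refine Finset.sum_congr rfl fun p _ => ?_
        rw [Finset.mul_sum, Finset.mul_sum]
        exact Finset.sum_congr rfl fun q _ => by ring
    _ = ∑ p, (∑ t, g u j t * (g u)⁻¹ t p) * ∑ q, pdv (fun v => g v p q) s u * (g u)⁻¹ q k := by
        rw [Finset.sum_comm]
        exact Finset.sum_congr rfl fun p _ => (Finset.sum_mul _ _ _).symm
    _ = ∑ q, pdv (fun v => g v j q) s u * (g u)⁻¹ q k := contractM hdet j _

include hU hg hu hdet in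
lemma mini2 (i j k : Fin N) :
    ∑ s, g u i s * ∑ t, g u j t * pdv (fun v => (g v)⁻¹ s k) t u
      = -∑ q, (∑ t, g u j t * pdv (fun v => g v i q) t u) * (g u)⁻¹ q k := by
  rw [Finset.sum_congr rfl fun s (_ : s ∈ Finset.univ) => by
    rw [Finset.sum_congr rfl fun t (_ : t ∈ Finset.univ) => by
      rw [pdv_inv_entry hU hg hu hdet s k t]]]
  simp only [mul_neg, Finset.sum_neg_distrib, neg_inj]
  calc ∑ s, g u i s * ∑ t, g u j t * ∑ p, ∑ q, (g u)⁻¹ s p * pdv (fun v => g v p q) t u * (g u)⁻¹ q k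
      = ∑ s, ∑ p, (g u i s * (g u)⁻¹ s p) *
          ∑ t, ∑ q, g u j t * pdv (fun v => g v p q) t u * (g u)⁻¹ q k := by
        refine Finset.sum_congr rfl fun s _ => ?_
        calc g u i s * ∑ t, g u j t * ∑ p, ∑ q,
              (g u)⁻¹ s p * pdv (fun v => g v p q) t u * (g u)⁻¹ q k
            = ∑ t, ∑ p, ∑ q, (g u i s * (g u)⁻¹ s p)
                * (g u j t * pdv (fun v => g v p q) t u * (g u)⁻¹ q k) := by
              simp only [Finset.mul_sum]
              refine Finset.sum_congr rfl fun t _ => Finset.sum_congr rfl fun p _ =>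
                Finset.sum_congr rfl fun q _ => by ring
          _ = ∑ p, ∑ t, ∑ q, (g u i s * (g u)⁻¹ s p)
                * (g u j t * pdv (fun v => g v p q) t u * (g u)⁻¹ q k) := Finset.sum_comm
          _ = ∑ p, (g u i s * (g u)⁻¹ s p) *
                ∑ t, ∑ q, g u j t * pdv (fun v => g v p q) t u * (g u)⁻¹ q k := by
              refine Finset.sum_congr rfl fun p _ => ?_
              rw [Finset.mul_sum]
              exact Finset.sum_congr rfl fun t _ => (Finset.mul_sum _ _ _).symm
    _ = ∑ p, (∑ s, g u i s * (g u)⁻¹ s p) *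
          ∑ t, ∑ q, g u j t * pdv (fun v => g v p q) t u * (g u)⁻¹ q k := by
        rw [Finset.sum_comm]
        exact Finset.sum_congr rfl fun p _ => (Finset.sum_mul _ _ _).symm
    _ = ∑ t, ∑ q, g u j t * pdv (fun v => g v i q) t u * (g u)⁻¹ q k :=
        contractM hdet i _
    _ = ∑ q, (∑ t, g u j t * pdv (fun v => g v i q) t u) * (g u)⁻¹ q k := by
        rw [Finset.sum_comm]
        exact Finset.sum_congr rfl fun q _ => (Finset.sum_mul _ _ _).symm

include hU hg hu hdet in
lemma mini3 (hsym : (g u).IsSymm) (i j k : Fin N) :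
    ∑ s, g u i s * ∑ t, g u j t * pdv (fun v => (g v)⁻¹ s t) k u
      = -pdv (fun v => g v i j) k u := by
  have hinvsym := inv_isSymm (M := g u) hsym
  rw [Finset.sum_congr rfl fun s (_ : s ∈ Finset.univ) => by
    rw [Finset.sum_congr rfl fun t (_ : t ∈ Finset.univ) => by
      rw [pdv_inv_entry hU hg hu hdet s t k]]]
  simp only [mul_neg, Finset.sum_neg_distrib, neg_inj]
  calc ∑ s, g u i s * ∑ t, g u j t * ∑ p, ∑ q, (g u)⁻¹ s p * pdv (fun v => g v p q) k u * (g u)⁻¹ q t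
      = ∑ s, ∑ p, (g u i s * (g u)⁻¹ s p) *
          ∑ q, (∑ t, g u j t * (g u)⁻¹ t q) * pdv (fun v => g v p q) k u := by
        refine Finset.sum_congr rfl fun s _ => ?_
        calc g u i s * ∑ t, g u j t * ∑ p, ∑ q,
              (g u)⁻¹ s p * pdv (fun v => g v p q) k u * (g u)⁻¹ q t
            = ∑ t, ∑ p, ∑ q, (g u i s * (g u)⁻¹ s p)
                * ((g u j t * (g u)⁻¹ t q) * pdv (fun v => g v p q) k u) := by
              simp only [Finset.mul_sum]
              refine Finset.sum_congr rfl fun t _ => Finset.sum_congr rfl fun p _ =>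
                Finset.sum_congr rfl fun q _ => by rw [isSymm_apply hinvsym q t]; ring
          _ = ∑ p, ∑ t, ∑ q, (g u i s * (g u)⁻¹ s p)
                * ((g u j t * (g u)⁻¹ t q) * pdv (fun v => g v p q) k u) := Finset.sum_comm
          _ = ∑ p, (g u i s * (g u)⁻¹ s p) *
                ∑ q, (∑ t, g u j t * (g u)⁻¹ t q) * pdv (fun v => g v p q) k u := by
              refine Finset.sum_congr rfl fun p _ => ?_
              simp only [Finset.mul_sum]
              rw [Finset.sum_comm]
              refine Finset.sum_congr rfl fun q _ => ?_
              rw [Finset.sum_mul, Finset.mul_sum]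
    _ = ∑ p, (∑ s, g u i s * (g u)⁻¹ s p) *
          ∑ q, (∑ t, g u j t * (g u)⁻¹ t q) * pdv (fun v => g v p q) k u := by
        rw [Finset.sum_comm]
        exact Finset.sum_congr rfl fun p _ => (Finset.sum_mul _ _ _).symm
    _ = ∑ q, (∑ t, g u j t * (g u)⁻¹ t q) * pdv (fun v => g v i q) k u := contractM hdet i _
    _ = pdv (fun v => g v i j) k u := contractM hdet j _

include hU hg hu hdet in
lemma christoffelCon_eq (hsym : (g u).IsSymm) (i j k : Fin N) :
    christoffelCon g i j k u
      = (1/2) * ((∑ q, Ebil g g i j q u * (g u)⁻¹ q k) - pdv (fun v => g v i j) k u) := by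
  unfold christoffelCon christoffel
  have expand : ∀ s : Fin N,
      g u i s * ((1/2) * ∑ t, g u j t *
        (pdv (fun v => (g v)⁻¹ t k) s u + pdv (fun v => (g v)⁻¹ s t) k u
          - pdv (fun v => (g v)⁻¹ s k) t u))
      = (1/2) * (g u i s * ∑ t, g u j t * pdv (fun v => (g v)⁻¹ t k) s u
          + g u i s * ∑ t, g u j t * pdv (fun v => (g v)⁻¹ s t) k u
          - g u i s * ∑ t, g u j t * pdv (fun v => (g v)⁻¹ s k) t u) := by
    intro s
    have hsplit : ∑ t, g u j t *
        (pdv (fun v => (g v)⁻¹ t k) s u + pdv (fun v => (g v)⁻¹ s t) k u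
          - pdv (fun v => (g v)⁻¹ s k) t u)
        = (∑ t, g u j t * pdv (fun v => (g v)⁻¹ t k) s u)
          + (∑ t, g u j t * pdv (fun v => (g v)⁻¹ s t) k u)
          - (∑ t, g u j t * pdv (fun v => (g v)⁻¹ s k) t u) := by
      rw [← Finset.sum_add_distrib, ← Finset.sum_sub_distrib]
      exact Finset.sum_congr rfl fun t _ => by ring
    rw [hsplit]; ring
  rw [Finset.sum_congr rfl fun s _ => expand s]
  rw [← Finset.mul_sum, Finset.sum_sub_distrib, Finset.sum_add_distrib]
  have hS1 : ∑ s, g u i s * ∑ t, g u j t * pdv (fun v => (g v)⁻¹ t k) s u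
      = -∑ q, (∑ s, g u i s * pdv (fun v => g v j q) s u) * (g u)⁻¹ q k := by
    rw [Finset.sum_congr rfl fun s _ => by rw [mini1 hU hg hu hdet j k s]]
    simp only [mul_neg, Finset.sum_neg_distrib, Finset.mul_sum, Finset.sum_mul]
    congr 1
    rw [Finset.sum_comm]
    exact Finset.sum_congr rfl fun q _ => Finset.sum_congr rfl fun s _ => by ring
  rw [hS1, mini3 hU hg hu hdet hsym i j k, mini2 hU hg hu hdet i j k]
  have hE : ∑ q, Ebil g g i j q u * (g u)⁻¹ q k
      = (∑ q, (∑ t, g u j t * pdv (fun v => g v i q) t u) * (g u)⁻¹ q k)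
        - (∑ q, (∑ t, g u i t * pdv (fun v => g v j q) t u) * (g u)⁻¹ q k) := by
    unfold Ebil
    rw [← Finset.sum_sub_distrib]
    exact Finset.sum_congr rfl fun q _ => by rw [Finset.sum_sub_distrib, sub_mul]
  rw [hE]
  ring
end Tensors

section Pencil
variable {N : ℕ}

lemma pencil_entry (l₁ l₂ : ℝ) (g₁ g₂ : (Fin N → ℝ) → Matrix (Fin N) (Fin N) ℝ) (i j : Fin N) :
    (fun v => (l₁ • g₁ v + l₂ • g₂ v) i j) = fun v => l₁ * g₁ v i j + l₂ * g₂ v i j := by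
  funext v; simp

variable {U : Set (Fin N → ℝ)} (hU : IsOpen U)
  {g₁ g₂ : (Fin N → ℝ) → Matrix (Fin N) (Fin N) ℝ}
  (hg₁ : ∀ i j, ContDiffOn ℝ (⊤ : ℕ∞) (fun v => g₁ v i j) U)
  (hg₂ : ∀ i j, ContDiffOn ℝ (⊤ : ℕ∞) (fun v => g₂ v i j) U)
  {u : Fin N → ℝ} (hu : u ∈ U)

include hg₁ hg₂ in
lemma pencil_contDiff (l₁ l₂ : ℝ) :
    ∀ i j, ContDiffOn ℝ (⊤ : ℕ∞) (fun v => (l₁ • g₁ v + l₂ • g₂ v) i j) U := by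
  intro i j
  rw [pencil_entry]
  exact (contDiffOn_const.mul (hg₁ i j)).add (contDiffOn_const.mul (hg₂ i j))

include hU hg₁ hg₂ hu in
lemma pencil_pdv (l₁ l₂ : ℝ) (i j t : Fin N) :
    pdv (fun v => (l₁ • g₁ v + l₂ • g₂ v) i j) t u
      = l₁ * pdv (fun v => g₁ v i j) t u + l₂ * pdv (fun v => g₂ v i j) t u := by
  rw [pencil_entry]
  rw [pdv_add ((differentiableAt_const l₁).fun_mul (entry_diffAt hU hg₁ hu i j))
    ((differentiableAt_const l₂).fun_mul (entry_diffAt hU hg₂ hu i j))]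
  rw [pdv_const_mul l₁ (entry_diffAt hU hg₁ hu i j),
    pdv_const_mul l₂ (entry_diffAt hU hg₂ hu i j)]

include hU hg₁ hg₂ hu in
lemma Ebil_pencil (l₁ l₂ : ℝ) (i j q : Fin N) :
    Ebil (fun v => l₁ • g₁ v + l₂ • g₂ v) (fun v => l₁ • g₁ v + l₂ • g₂ v) i j q u
      = l₁^2 * Ebil g₁ g₁ i j q u + l₁*l₂*(Ebil g₁ g₂ i j q u + Ebil g₂ g₁ i j q u)
        + l₂^2 * Ebil g₂ g₂ i j q u := by
  unfold Ebil
  simp only [mul_add, Finset.mul_sum, ← Finset.sum_add_distrib]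
  refine Finset.sum_congr rfl fun t _ => ?_
  rw [pencil_pdv hU hg₁ hg₂ hu l₁ l₂ i q t, pencil_pdv hU hg₁ hg₂ hu l₁ l₂ j q t]
  simp only [Matrix.add_apply, Matrix.smul_apply, smul_eq_mul]
  ring

lemma contractM2 {M : Matrix (Fin N) (Fin N) ℝ} (hdet : M.det ≠ 0) (k : Fin N) (f : Fin N → ℝ) :
    ∑ x, (∑ q, f q * M⁻¹ q x) * M x k = f k := by
  have h1 : ∀ x, (∑ q, f q * M⁻¹ q x) * M x k = ∑ q, f q * (M⁻¹ q x * M x k) :=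
    fun x => by rw [Finset.sum_mul]; exact Finset.sum_congr rfl fun q _ => by ring
  rw [Finset.sum_congr rfl fun x (_ : x ∈ Finset.univ) => h1 x, Finset.sum_comm]
  calc ∑ q, ∑ x, f q * (M⁻¹ q x * M x k)
      = ∑ q, f q * (if q = k then 1 else 0) := by
        refine Finset.sum_congr rfl fun q _ => ?_
        rw [← Finset.mul_sum, inv_mul_delta hdet q k]
    _ = f k := by simp

lemma contractM3 {M : Matrix (Fin N) (Fin N) ℝ} (hdet : M.det ≠ 0) (k : Fin N) (f : Fin N → ℝ) :
    ∑ q, (∑ x, f x * M x q) * M⁻¹ q k = f k := by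
  have h1 : ∀ q, (∑ x, f x * M x q) * M⁻¹ q k = ∑ x, f x * (M x q * M⁻¹ q k) :=
    fun q => by rw [Finset.sum_mul]; exact Finset.sum_congr rfl fun x _ => by ring
  rw [Finset.sum_congr rfl fun q (_ : q ∈ Finset.univ) => h1 q, Finset.sum_comm]
  calc ∑ x, ∑ q, f x * (M x q * M⁻¹ q k)
      = ∑ x, f x * (if x = k then 1 else 0) := by
        refine Finset.sum_congr rfl fun x _ => ?_
        rw [← Finset.mul_sum, mul_inv_delta hdet x k]
    _ = f k := by simp

lemma exists_eps (a b : Matrix (Fin N) (Fin N) ℝ) (ha : a.det ≠ 0) :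
    ∃ ε : ℝ, ε ≠ 0 ∧ ((1:ℝ) • a + ε • b).det ≠ 0 := by
  have hc : Continuous (fun ε : ℝ => ((1:ℝ) • a + ε • b).det) := by
    apply Continuous.matrix_det
    apply continuous_matrix
    intro i j
    simp only [Matrix.add_apply, Matrix.smul_apply, smul_eq_mul, one_mul]
    exact continuous_const.add (continuous_id.mul continuous_const)
  have h0 : ((1:ℝ) • a + (0:ℝ) • b).det ≠ 0 := by simpa using ha
  have hev : ∀ᶠ ε in nhds (0:ℝ), ((1:ℝ) • a + ε • b).det ≠ 0 :=
    hc.continuousAt.eventually_ne h0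
  rw [Metric.eventually_nhds_iff] at hev
  obtain ⟨δ, hδ, hball⟩ := hev
  refine ⟨δ/2, by positivity, hball ?_⟩
  rw [Real.dist_eq, sub_zero, abs_of_pos (by positivity : (0:ℝ) < δ/2)]
  linarith

end Pencil

section Equiv
variable {N : ℕ}

lemma contract_mix (M₁ M₂ : Matrix (Fin N) (Fin N) ℝ) (f : Fin N → ℝ) (q : Fin N) :
    ∑ x, (∑ m, f m * M₁ m x) * M₂ x q = ∑ m, f m * (M₁ * M₂) m q := by
  have h1 : ∀ x, (∑ m, f m * M₁ m x) * M₂ x q = ∑ m, f m * (M₁ m x * M₂ x q) :=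
    fun x => by rw [Finset.sum_mul]; exact Finset.sum_congr rfl fun m _ => by ring
  rw [Finset.sum_congr rfl fun x (_ : x ∈ Finset.univ) => h1 x, Finset.sum_comm]
  exact Finset.sum_congr rfl fun m _ => by rw [← Finset.mul_sum, Matrix.mul_apply]

variable {U : Set (Fin N → ℝ)} (hU : IsOpen U)
  {g₁ g₂ : (Fin N → ℝ) → Matrix (Fin N) (Fin N) ℝ}

include hU in
lemma ac_backward (hg₁ : IsMetricOn U g₁) (hg₂ : IsMetricOn U g₂)
    (hD : ∀ u ∈ U, ∀ i j k, Dten g₁ g₂ i j k u = 0) :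
    AlmostCompatibleOn U g₁ g₂ := by
  obtain ⟨hs₁, hsym₁, hd₁⟩ := hg₁
  obtain ⟨hs₂, hsym₂, hd₂⟩ := hg₂
  intro l₁ l₂ _hex u hu hdet i j k
  have hGs : ∀ i' j', ContDiffOn ℝ (⊤ : ℕ∞) (fun v => (l₁ • g₁ v + l₂ • g₂ v) i' j') U :=
    pencil_contDiff hs₁ hs₂ l₁ l₂
  have hGsym : (l₁ • g₁ u + l₂ • g₂ u).IsSymm :=
    ((hsym₁ u hu).smul l₁).add ((hsym₂ u hu).smul l₂)
  rw [christoffelCon_eq hU hGs hu hdet hGsym i j k,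
      christoffelCon_eq hU hs₁ hu (hd₁ u hu) (hsym₁ u hu) i j k,
      christoffelCon_eq hU hs₂ hu (hd₂ u hu) (hsym₂ u hu) i j k]
  rw [Finset.sum_congr rfl fun q (_ : q ∈ Finset.univ) => by
        rw [Ebil_pencil hU hs₁ hs₂ hu l₁ l₂ i j q]]
  rw [pencil_pdv hU hs₁ hs₂ hu l₁ l₂ i j k]
  have claim1 : ∀ q : Fin N, l₁^2 * Ebil g₁ g₁ i j q u
        + l₁*l₂*(Ebil g₁ g₂ i j q u + Ebil g₂ g₁ i j q u) + l₂^2 * Ebil g₂ g₂ i j q u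
      = ∑ x, (l₁ * ∑ m, Ebil g₁ g₁ i j m u * (g₁ u)⁻¹ m x
              + l₂ * ∑ m, Ebil g₂ g₂ i j m u * (g₂ u)⁻¹ m x) * (l₁ • g₁ u + l₂ • g₂ u) x q := by
    intro q
    have hexp : ∀ x : Fin N, (l₁ * ∑ m, Ebil g₁ g₁ i j m u * (g₁ u)⁻¹ m x
              + l₂ * ∑ m, Ebil g₂ g₂ i j m u * (g₂ u)⁻¹ m x) * (l₁ • g₁ u + l₂ • g₂ u) x q
        = l₁^2 * ((∑ m, Ebil g₁ g₁ i j m u * (g₁ u)⁻¹ m x) * g₁ u x q)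
          + (l₁*l₂ * ((∑ m, Ebil g₁ g₁ i j m u * (g₁ u)⁻¹ m x) * g₂ u x q)
          + (l₁*l₂ * ((∑ m, Ebil g₂ g₂ i j m u * (g₂ u)⁻¹ m x) * g₁ u x q)
          + l₂^2 * ((∑ m, Ebil g₂ g₂ i j m u * (g₂ u)⁻¹ m x) * g₂ u x q))) := by
      intro x
      simp only [Matrix.add_apply, Matrix.smul_apply, smul_eq_mul]
      ring
    rw [Finset.sum_congr rfl fun x (_ : x ∈ Finset.univ) => hexp x]
    rw [Finset.sum_add_distrib, Finset.sum_add_distrib, Finset.sum_add_distrib,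
        ← Finset.mul_sum, ← Finset.mul_sum, ← Finset.mul_sum, ← Finset.mul_sum]
    rw [contractM2 (hd₁ u hu) q (fun m => Ebil g₁ g₁ i j m u),
        contractM2 (hd₂ u hu) q (fun m => Ebil g₂ g₂ i j m u),
        contract_mix (g₁ u)⁻¹ (g₂ u) (fun m => Ebil g₁ g₁ i j m u) q,
        contract_mix (g₂ u)⁻¹ (g₁ u) (fun m => Ebil g₂ g₂ i j m u) q]
    have hDq := hD u hu i j q
    unfold Dten at hDq
    rw [Finset.sum_add_distrib] at hDq
    linear_combination (l₁*l₂) * hDq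
  rw [Finset.sum_congr rfl fun q (_ : q ∈ Finset.univ) => by rw [claim1 q]]
  rw [contractM3 hdet k (fun x => l₁ * ∑ m, Ebil g₁ g₁ i j m u * (g₁ u)⁻¹ m x
              + l₂ * ∑ m, Ebil g₂ g₂ i j m u * (g₂ u)⁻¹ m x)]
  ring

include hU in
lemma ac_forward (hg₁ : IsMetricOn U g₁) (hg₂ : IsMetricOn U g₂)
    (hac : AlmostCompatibleOn U g₁ g₂) :
    ∀ u ∈ U, ∀ i j k, Dten g₁ g₂ i j k u = 0 := by
  obtain ⟨hs₁, hsym₁, hd₁⟩ := hg₁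
  obtain ⟨hs₂, hsym₂, hd₂⟩ := hg₂
  intro u hu i j k
  obtain ⟨ε, hε0, hεdet⟩ := exists_eps (g₁ u) (g₂ u) (hd₁ u hu)
  have hGs : ∀ i' j', ContDiffOn ℝ (⊤ : ℕ∞) (fun v => ((1:ℝ) • g₁ v + ε • g₂ v) i' j') U :=
    pencil_contDiff hs₁ hs₂ 1 ε
  have hGsym : ((1:ℝ) • g₁ u + ε • g₂ u).IsSymm :=
    ((hsym₁ u hu).smul 1).add ((hsym₂ u hu).smul ε)
  have hJ : ∀ k' : Fin N, ∑ q, ((1:ℝ)^2 * Ebil g₁ g₁ i j q u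
        + 1*ε*(Ebil g₁ g₂ i j q u + Ebil g₂ g₁ i j q u) + ε^2 * Ebil g₂ g₂ i j q u)
          * ((1:ℝ) • g₁ u + ε • g₂ u)⁻¹ q k'
      = (∑ q, Ebil g₁ g₁ i j q u * (g₁ u)⁻¹ q k')
        + ε * ∑ q, Ebil g₂ g₂ i j q u * (g₂ u)⁻¹ q k' := by
    intro k'
    have h := hac 1 ε ⟨u, hu, hεdet⟩ u hu hεdet i j k'
    rw [christoffelCon_eq hU hGs hu hεdet hGsym i j k',
        christoffelCon_eq hU hs₁ hu (hd₁ u hu) (hsym₁ u hu) i j k',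
        christoffelCon_eq hU hs₂ hu (hd₂ u hu) (hsym₂ u hu) i j k',
        Finset.sum_congr rfl fun q (_ : q ∈ Finset.univ) => by
          rw [Ebil_pencil hU hs₁ hs₂ hu 1 ε i j q],
        pencil_pdv hU hs₁ hs₂ hu 1 ε i j k'] at h
    linear_combination 2 * h
  have hK : ((1:ℝ)^2 * Ebil g₁ g₁ i j k u
        + 1*ε*(Ebil g₁ g₂ i j k u + Ebil g₂ g₁ i j k u) + ε^2 * Ebil g₂ g₂ i j k u)
      = Ebil g₁ g₁ i j k u
        + ε * ((∑ m, Ebil g₁ g₁ i j m u * ((g₁ u)⁻¹ * g₂ u) m k)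
              + ((∑ m, Ebil g₂ g₂ i j m u * ((g₂ u)⁻¹ * g₁ u) m k)
              + ε * Ebil g₂ g₂ i j k u)) := by
    have hL : ∑ x, (∑ q, ((1:ℝ)^2 * Ebil g₁ g₁ i j q u
          + 1*ε*(Ebil g₁ g₂ i j q u + Ebil g₂ g₁ i j q u) + ε^2 * Ebil g₂ g₂ i j q u)
            * ((1:ℝ) • g₁ u + ε • g₂ u)⁻¹ q x) * ((1:ℝ) • g₁ u + ε • g₂ u) x k
        = (1:ℝ)^2 * Ebil g₁ g₁ i j k u
          + 1*ε*(Ebil g₁ g₂ i j k u + Ebil g₂ g₁ i j k u) + ε^2 * Ebil g₂ g₂ i j k u :=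
      contractM2 hεdet k _
    rw [Finset.sum_congr rfl fun x (_ : x ∈ Finset.univ) => by rw [hJ x]] at hL
    rw [← hL]
    have hexp : ∀ x : Fin N, ((∑ q, Ebil g₁ g₁ i j q u * (g₁ u)⁻¹ q x)
          + ε * ∑ q, Ebil g₂ g₂ i j q u * (g₂ u)⁻¹ q x) * ((1:ℝ) • g₁ u + ε • g₂ u) x k
        = ((∑ q, Ebil g₁ g₁ i j q u * (g₁ u)⁻¹ q x) * g₁ u x k
          + (ε * ((∑ q, Ebil g₁ g₁ i j q u * (g₁ u)⁻¹ q x) * g₂ u x k)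
          + (ε * ((∑ q, Ebil g₂ g₂ i j q u * (g₂ u)⁻¹ q x) * g₁ u x k)
          + ε^2 * ((∑ q, Ebil g₂ g₂ i j q u * (g₂ u)⁻¹ q x) * g₂ u x k)))) := by
      intro x
      simp only [Matrix.add_apply, Matrix.smul_apply, smul_eq_mul]
      ring
    rw [Finset.sum_congr rfl fun x (_ : x ∈ Finset.univ) => hexp x]
    rw [Finset.sum_add_distrib, Finset.sum_add_distrib, Finset.sum_add_distrib,
        ← Finset.mul_sum, ← Finset.mul_sum, ← Finset.mul_sum]
    rw [contractM2 (hd₁ u hu) k (fun m => Ebil g₁ g₁ i j m u),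
        contractM2 (hd₂ u hu) k (fun m => Ebil g₂ g₂ i j m u),
        contract_mix (g₁ u)⁻¹ (g₂ u) (fun m => Ebil g₁ g₁ i j m u) k,
        contract_mix (g₂ u)⁻¹ (g₁ u) (fun m => Ebil g₂ g₂ i j m u) k]
    ring
  unfold Dten
  rw [Finset.sum_add_distrib]
  have hmul : ε * (Ebil g₂ g₁ i j k u + Ebil g₁ g₂ i j k u
      - ((∑ t, Ebil g₁ g₁ i j t u * ((g₁ u)⁻¹ * g₂ u) t k)
        + ∑ t, Ebil g₂ g₂ i j t u * ((g₂ u)⁻¹ * g₁ u) t k)) = ε * 0 := by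
    rw [mul_zero]
    linear_combination hK
  have := mul_left_cancel₀ hε0 hmul
  linarith

end Equiv

section MasterAlg
variable {N : ℕ}

/-- contraction `(P*Q) x y` as an explicit sum -/
noncomputable def vv (P Q : Matrix (Fin N) (Fin N) ℝ) (x y : Fin N) : ℝ := ∑ t, P x t * Q t y

/-- `E`-tensor in pointwise form -/
noncomputable def Ee (P : Matrix (Fin N) (Fin N) ℝ) (pp : Fin N → Matrix (Fin N) (Fin N) ℝ)
    (p q t : Fin N) : ℝ :=
  ∑ x, (P q x * pp x p t - P p x * pp x q t)

variable {a b A B : Matrix (Fin N) (Fin N) ℝ} {pa pb : Fin N → Matrix (Fin N) (Fin N) ℝ}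

lemma vv_symm (ha : a.IsSymm) (hB : B.IsSymm) (x y : Fin N) : vv a B x y = vv B a y x := by
  unfold vv
  refine Finset.sum_congr rfl fun t _ => ?_
  rw [isSymm_apply ha x t, isSymm_apply hB t y]
  ring

lemma contract_one {M M' : Matrix (Fin N) (Fin N) ℝ} (h : M * M' = 1) (j : Fin N)
    (f : Fin N → ℝ) : ∑ x, (∑ q, M j q * M' q x) * f x = f j := by
  have h1 : ∀ x, (∑ q, M j q * M' q x) = if j = x then 1 else 0 := fun x => by
    rw [← Matrix.mul_apply, h, Matrix.one_apply]
  rw [Finset.sum_congr rfl fun x (_ : x ∈ Finset.univ) => by rw [h1 x]]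
  simp

lemma P1 (hB : B.IsSymm) (hpa : ∀ s, (pa s).IsSymm) (k i j : Fin N) :
    ∑ s, vv a B k s * (∑ t, pa j s t * B t i)
      = ∑ m, (∑ c, B i c * pa j c m) * vv a B k m := by
  simp only [Finset.mul_sum, Finset.sum_mul]
  refine Finset.sum_congr rfl fun s _ => Finset.sum_congr rfl fun t _ => ?_
  rw [isSymm_apply hB t i, isSymm_apply (hpa j) s t]
  ring

lemma P2 (ha : a.IsSymm) (hB : B.IsSymm) (hpa : ∀ s, (pa s).IsSymm) (k i j : Fin N) :
    ∑ s, vv a B s i * (∑ t, pa s k t * B t j)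
      = ∑ t, vv B a i t * (∑ c, B j c * pa t c k) := by
  simp only [Finset.mul_sum, Finset.sum_mul]
  refine Finset.sum_congr rfl fun s _ => Finset.sum_congr rfl fun t _ => ?_
  rw [vv_symm ha hB s i, isSymm_apply hB t j, isSymm_apply (hpa s) k t]
  ring


lemma P3 (ha : a.IsSymm) (hB : B.IsSymm) (hpb : ∀ s, (pb s).IsSymm) (k i j : Fin N) :
    ∑ s, vv a B s i * (∑ p, ∑ q, vv a B k p * pb s p q * B q j)
      = ∑ t, ∑ m, (vv B a i t * (∑ p, B j p * pb t p m)) * vv a B k m := by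
  simp only [Finset.mul_sum, Finset.sum_mul]
  refine Finset.sum_congr rfl fun s _ => Finset.sum_congr rfl fun p _ =>
    Finset.sum_congr rfl fun q _ => ?_
  rw [vv_symm ha hB s i, isSymm_apply (hpb s) p q, isSymm_apply hB q j]
  ring

lemma P4 (ha : a.IsSymm) (hB : B.IsSymm) (hpb : ∀ s, (pb s).IsSymm) (k i j : Fin N) :
    ∑ s, vv a B k s * (∑ p, ∑ q, vv a B s p * pb j p q * B q i)
      = ∑ t, (∑ p, B i p * pb j p t) * (∑ e, vv B a t e * vv B a e k) := by
  simp only [Finset.mul_sum, Finset.sum_mul]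
  conv_lhs => rw [Finset.sum_comm]
  refine Finset.sum_congr rfl fun t _ => Finset.sum_congr rfl fun e _ =>
    Finset.sum_congr rfl fun q _ => ?_
  rw [vv_symm ha hB k e, vv_symm ha hB e t, isSymm_apply (hpb j) t q, isSymm_apply hB q i]
  ring

lemma QA (hBb : B * b = 1) (i j : Fin N) (f : Fin N → Fin N → ℝ) :
    ∑ p, ∑ q, B i p * B j q * (∑ x, b q x * f x p) = ∑ c, B i c * f j c := by
  have step1 : ∑ p, ∑ q, B i p * B j q * (∑ x, b q x * f x p)
      = ∑ x, (∑ q, B j q * b q x) * (∑ p, B i p * f x p) := by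
    simp only [Finset.mul_sum, Finset.sum_mul]
    conv_lhs => enter [2, p]; rw [Finset.sum_comm]
    conv_lhs => rw [Finset.sum_comm]
    refine Finset.sum_congr rfl fun x _ => Finset.sum_congr rfl fun q _ =>
      Finset.sum_congr rfl fun p _ => by ring
  rw [step1, contract_one hBb j (fun x => ∑ p, B i p * f x p)]

lemma QA' (hBb : B * b = 1) (i j : Fin N) (f : Fin N → Fin N → ℝ) :
    ∑ p, ∑ q, B i p * B j q * (∑ x, b p x * f x q) = ∑ c, B j c * f i c := by
  rw [Finset.sum_comm]
  rw [Finset.sum_congr rfl fun q (_ : q ∈ Finset.univ) =>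
    Finset.sum_congr rfl fun p (_ : p ∈ Finset.univ) =>
      (by ring : B i p * B j q * (∑ x, b p x * f x q)
        = B j q * B i p * (∑ x, b p x * f x q))]
  exact QA hBb j i f

lemma QB (i j : Fin N) (f : Fin N → Fin N → ℝ) :
    ∑ p, ∑ q, B i p * B j q * (∑ x, a q x * f x p)
      = ∑ x, vv B a j x * (∑ p, B i p * f x p) := by
  have step1 : ∑ p, ∑ q, B i p * B j q * (∑ x, a q x * f x p)
      = ∑ x, (∑ q, B j q * a q x) * (∑ p, B i p * f x p) := by
    simp only [Finset.mul_sum, Finset.sum_mul]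
    conv_lhs => enter [2, p]; rw [Finset.sum_comm]
    conv_lhs => rw [Finset.sum_comm]
    refine Finset.sum_congr rfl fun x _ => Finset.sum_congr rfl fun q _ =>
      Finset.sum_congr rfl fun p _ => by ring
  rw [step1]
  rfl

lemma QB' (i j : Fin N) (f : Fin N → Fin N → ℝ) :
    ∑ p, ∑ q, B i p * B j q * (∑ x, a p x * f x q)
      = ∑ x, vv B a i x * (∑ p, B j p * f x p) := by
  rw [Finset.sum_comm]
  rw [Finset.sum_congr rfl fun q (_ : q ∈ Finset.univ) =>
    Finset.sum_congr rfl fun p (_ : p ∈ Finset.univ) =>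
      (by ring : B i p * B j q * (∑ x, a p x * f x q)
        = B j q * B i p * (∑ x, a p x * f x q))]
  exact QB j i f

lemma Q4 (ha : a.IsSymm) (hB : B.IsSymm) (hbB : b * B = 1) (hAa : A * a = 1) (t k : Fin N) :
    ∑ m, (A * b) t m * vv a B k m = if t = k then 1 else 0 := by
  have step1 : ∑ m, (A * b) t m * vv a B k m
      = ∑ x, ∑ c, (A t x * a k c) * (∑ m, b x m * B m c) := by
    simp only [Matrix.mul_apply, vv, Finset.mul_sum, Finset.sum_mul]
    conv_lhs => rw [Finset.sum_comm]
    conv_lhs => enter [2, x]; rw [Finset.sum_comm]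
    conv_lhs => rw [Finset.sum_comm]
    refine Finset.sum_congr rfl fun x _ => Finset.sum_congr rfl fun c _ =>
      Finset.sum_congr rfl fun m _ => ?_
    rw [isSymm_apply hB c m]
    ring
  rw [step1]
  rw [Finset.sum_congr rfl fun x (_ : x ∈ Finset.univ) =>
    Finset.sum_congr rfl fun c (_ : c ∈ Finset.univ) => by
      rw [← Matrix.mul_apply, hbB, Matrix.one_apply]]
  have step2 : ∀ x : Fin N, ∑ c, (A t x * a k c) * (if x = c then (1:ℝ) else 0)
      = A t x * a x k := by
    intro x
    rw [Finset.sum_eq_single x (fun c _ hc => by rw [if_neg (Ne.symm hc), mul_zero])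
      (fun h => absurd (Finset.mem_univ x) h)]
    rw [if_pos rfl, mul_one, isSymm_apply ha k x]
  rw [Finset.sum_congr rfl fun x (_ : x ∈ Finset.univ) => step2 x]
  rw [← Matrix.mul_apply, hAa, Matrix.one_apply]

lemma Q5 (ha : a.IsSymm) (hB : B.IsSymm) (t k : Fin N) :
    ∑ m, (B * a) t m * vv a B k m = ∑ e, vv B a t e * vv B a e k := by
  refine Finset.sum_congr rfl fun m _ => ?_
  rw [vv_symm ha hB k m]
  congr 1


lemma rot3 (f : Fin N → Fin N → Fin N → ℝ) :
    ∑ p, ∑ q, ∑ m, f p q m = ∑ m, ∑ p, ∑ q, f p q m := by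
  calc ∑ p, ∑ q, ∑ m, f p q m = ∑ p, ∑ m, ∑ q, f p q m :=
        Finset.sum_congr rfl fun p _ => Finset.sum_comm
    _ = ∑ m, ∑ p, ∑ q, f p q m := Finset.sum_comm

lemma rot4 (f : Fin N → Fin N → Fin N → Fin N → ℝ) :
    ∑ p, ∑ q, ∑ m, ∑ t, f p q m t = ∑ t, ∑ p, ∑ q, ∑ m, f p q m t := by
  calc ∑ p, ∑ q, ∑ m, ∑ t, f p q m t
      = ∑ p, ∑ q, ∑ t, ∑ m, f p q m t :=
        Finset.sum_congr rfl fun p _ => Finset.sum_congr rfl fun q _ => Finset.sum_comm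
    _ = ∑ p, ∑ t, ∑ q, ∑ m, f p q m t :=
        Finset.sum_congr rfl fun p _ => Finset.sum_comm
    _ = ∑ t, ∑ p, ∑ q, ∑ m, f p q m t := Finset.sum_comm

lemma sum_factor (F : Fin N → Fin N → ℝ) (H : Fin N → ℝ) :
    ∑ p, ∑ q, ∑ m, F p q * H m = (∑ p, ∑ q, F p q) * ∑ m, H m := by
  rw [Finset.sum_mul]
  refine Finset.sum_congr rfl fun p _ => ?_
  rw [Finset.sum_mul]
  exact Finset.sum_congr rfl fun q _ => (Finset.mul_sum _ _ _).symm

lemma sum_ite_right (W : Fin N → ℝ) (k : Fin N) :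
    ∑ t, W t * (if t = k then (1:ℝ) else 0) = W k := by simp

lemma Ee_split (P : Matrix (Fin N) (Fin N) ℝ) (pp : Fin N → Matrix (Fin N) (Fin N) ℝ)
    (p q m : Fin N) :
    Ee P pp p q m = (∑ x, P q x * pp x p m) - ∑ x, P p x * pp x q m := by
  unfold Ee; exact Finset.sum_sub_distrib _ _

lemma BBEe_pa (hBb : B * b = 1) (i j m : Fin N) (v : ℝ) (pp : Fin N → Matrix (Fin N) (Fin N) ℝ) :
    ∑ p, ∑ q, B i p * B j q * (Ee b pp p q m * v)
      = (∑ c, B i c * pp j c m) * v - (∑ c, B j c * pp i c m) * v := by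
  have h1 : ∀ p q : Fin N, B i p * B j q * (Ee b pp p q m * v)
      = B i p * B j q * (∑ x, b q x * (pp x p m * v))
        - B i p * B j q * (∑ x, b p x * (pp x q m * v)) := by
    intro p q
    rw [Ee_split]
    rw [show (∑ x, b q x * (pp x p m * v)) = (∑ x, b q x * pp x p m) * v by
      rw [Finset.sum_mul]; exact Finset.sum_congr rfl fun x _ => by ring]
    rw [show (∑ x, b p x * (pp x q m * v)) = (∑ x, b p x * pp x q m) * v by
      rw [Finset.sum_mul]; exact Finset.sum_congr rfl fun x _ => by ring]
    ring
  rw [Finset.sum_congr rfl fun p (_ : p ∈ Finset.univ) =>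
    Finset.sum_congr rfl fun q (_ : q ∈ Finset.univ) => h1 p q]
  rw [Finset.sum_congr rfl fun p (_ : p ∈ Finset.univ) =>
    (Finset.sum_sub_distrib (s := Finset.univ) _ _), Finset.sum_sub_distrib]
  rw [QA hBb i j (fun x p => pp x p m * v), QA' hBb i j (fun x q => pp x q m * v)]
  rw [show (∑ c, B i c * (pp j c m * v)) = (∑ c, B i c * pp j c m) * v by
    rw [Finset.sum_mul]; exact Finset.sum_congr rfl fun c _ => by ring]
  rw [show (∑ c, B j c * (pp i c m * v)) = (∑ c, B j c * pp i c m) * v by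
    rw [Finset.sum_mul]; exact Finset.sum_congr rfl fun c _ => by ring]

lemma BBEe_pb (i j m : Fin N) (v : ℝ) (pp : Fin N → Matrix (Fin N) (Fin N) ℝ) :
    ∑ p, ∑ q, B i p * B j q * (Ee a pp p q m * v)
      = (∑ x, vv B a j x * (∑ p, B i p * pp x p m)) * v
        - (∑ x, vv B a i x * (∑ p, B j p * pp x p m)) * v := by
  have h1 : ∀ p q : Fin N, B i p * B j q * (Ee a pp p q m * v)
      = B i p * B j q * (∑ x, a q x * (pp x p m * v))
        - B i p * B j q * (∑ x, a p x * (pp x q m * v)) := by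
    intro p q
    rw [Ee_split]
    rw [show (∑ x, a q x * (pp x p m * v)) = (∑ x, a q x * pp x p m) * v by
      rw [Finset.sum_mul]; exact Finset.sum_congr rfl fun x _ => by ring]
    rw [show (∑ x, a p x * (pp x q m * v)) = (∑ x, a p x * pp x q m) * v by
      rw [Finset.sum_mul]; exact Finset.sum_congr rfl fun x _ => by ring]
    ring
  rw [Finset.sum_congr rfl fun p (_ : p ∈ Finset.univ) =>
    Finset.sum_congr rfl fun q (_ : q ∈ Finset.univ) => h1 p q]
  rw [Finset.sum_congr rfl fun p (_ : p ∈ Finset.univ) =>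
    (Finset.sum_sub_distrib (s := Finset.univ) _ _), Finset.sum_sub_distrib]
  rw [QB i j (fun x p => pp x p m * v), QB' i j (fun x q => pp x q m * v)]
  rw [show (∑ x, vv B a j x * (∑ p, B i p * (pp x p m * v)))
      = (∑ x, vv B a j x * (∑ p, B i p * pp x p m)) * v by
    rw [Finset.sum_mul]
    refine Finset.sum_congr rfl fun x _ => ?_
    rw [show (∑ p, B i p * (pp x p m * v)) = (∑ p, B i p * pp x p m) * v by
      rw [Finset.sum_mul]; exact Finset.sum_congr rfl fun p _ => by ring]
    ring]
  rw [show (∑ x, vv B a i x * (∑ p, B j p * (pp x p m * v)))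
      = (∑ x, vv B a i x * (∑ p, B j p * pp x p m)) * v by
    rw [Finset.sum_mul]
    refine Finset.sum_congr rfl fun x _ => ?_
    rw [show (∑ p, B j p * (pp x p m * v)) = (∑ p, B j p * pp x p m) * v by
      rw [Finset.sum_mul]; exact Finset.sum_congr rfl fun p _ => by ring]
    ring]


lemma groupA (hBb : B * b = 1) (k i j : Fin N) :
    ∑ p, ∑ q, ∑ m, B i p * B j q * (Ee b pa p q m * vv a B k m)
      = (∑ m, (∑ c, B i c * pa j c m) * vv a B k m)
        - ∑ m, (∑ c, B j c * pa i c m) * vv a B k m := by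
  rw [rot3]
  rw [Finset.sum_congr rfl fun m (_ : m ∈ Finset.univ) => BBEe_pa hBb i j m (vv a B k m) pa]
  exact Finset.sum_sub_distrib _ _

lemma groupB (k i j : Fin N) :
    ∑ p, ∑ q, ∑ m, B i p * B j q * (Ee a pb p q m * vv a B k m)
      = (∑ x, ∑ m, (vv B a j x * (∑ p, B i p * pb x p m)) * vv a B k m)
        - ∑ x, ∑ m, (vv B a i x * (∑ p, B j p * pb x p m)) * vv a B k m := by
  rw [rot3]
  rw [Finset.sum_congr rfl fun m (_ : m ∈ Finset.univ) => BBEe_pb i j m (vv a B k m) pb]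
  rw [Finset.sum_sub_distrib]
  congr 1
  · rw [Finset.sum_congr rfl fun m (_ : m ∈ Finset.univ) => Finset.sum_mul _ _ _]
    exact Finset.sum_comm
  · rw [Finset.sum_congr rfl fun m (_ : m ∈ Finset.univ) => Finset.sum_mul _ _ _]
    exact Finset.sum_comm

lemma groupC (ha : a.IsSymm) (hB : B.IsSymm) (hbB : b * B = 1) (hAa : A * a = 1)
    (k i j : Fin N) :
    ∑ p, ∑ q, ∑ m, ∑ t, B i p * B j q * (Ee a pa p q t * ((A * b) t m * vv a B k m))
      = (∑ x, vv B a j x * (∑ p, B i p * pa x p k))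
        - ∑ x, vv B a i x * (∑ p, B j p * pa x p k) := by
  have h0 : ∀ p q m t : Fin N, B i p * B j q * (Ee a pa p q t * ((A * b) t m * vv a B k m))
      = B i p * B j q * (Ee a pa p q t * (1:ℝ)) * ((A * b) t m * vv a B k m) := fun p q m t => by
    ring
  rw [Finset.sum_congr rfl fun p (_ : p ∈ Finset.univ) =>
    Finset.sum_congr rfl fun q (_ : q ∈ Finset.univ) =>
      Finset.sum_congr rfl fun m (_ : m ∈ Finset.univ) =>
        Finset.sum_congr rfl fun t (_ : t ∈ Finset.univ) => h0 p q m t]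
  rw [rot4]
  rw [Finset.sum_congr rfl fun t (_ : t ∈ Finset.univ) =>
    sum_factor (fun p q => B i p * B j q * (Ee a pa p q t * (1:ℝ)))
      (fun m => (A * b) t m * vv a B k m)]
  rw [Finset.sum_congr rfl fun t (_ : t ∈ Finset.univ) => by rw [Q4 ha hB hbB hAa t k]]
  rw [sum_ite_right]
  rw [BBEe_pb i j k 1 pa, mul_one, mul_one]

lemma groupD (ha : a.IsSymm) (hB : B.IsSymm) (hBb : B * b = 1) (k i j : Fin N) :
    ∑ p, ∑ q, ∑ m, ∑ t, B i p * B j q * (Ee b pb p q t * ((B * a) t m * vv a B k m))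
      = (∑ t, (∑ c, B i c * pb j c t) * (∑ e, vv B a t e * vv B a e k))
        - ∑ t, (∑ c, B j c * pb i c t) * (∑ e, vv B a t e * vv B a e k) := by
  have h0 : ∀ p q m t : Fin N, B i p * B j q * (Ee b pb p q t * ((B * a) t m * vv a B k m))
      = B i p * B j q * (Ee b pb p q t * (1:ℝ)) * ((B * a) t m * vv a B k m) := fun p q m t => by
    ring
  rw [Finset.sum_congr rfl fun p (_ : p ∈ Finset.univ) =>
    Finset.sum_congr rfl fun q (_ : q ∈ Finset.univ) =>
      Finset.sum_congr rfl fun m (_ : m ∈ Finset.univ) =>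
        Finset.sum_congr rfl fun t (_ : t ∈ Finset.univ) => h0 p q m t]
  rw [rot4]
  rw [Finset.sum_congr rfl fun t (_ : t ∈ Finset.univ) =>
    sum_factor (fun p q => B i p * B j q * (Ee b pb p q t * (1:ℝ)))
      (fun m => (B * a) t m * vv a B k m)]
  rw [Finset.sum_congr rfl fun t (_ : t ∈ Finset.univ) => by
    rw [Q5 ha hB t k, BBEe_pa hBb i j t 1 pb, mul_one, mul_one, sub_mul]]
  exact Finset.sum_sub_distrib _ _


lemma master_alg (ha : a.IsSymm) (hB : B.IsSymm)
    (hpa : ∀ s, (pa s).IsSymm) (hpb : ∀ s, (pb s).IsSymm)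
    (hBb : B * b = 1) (hbB : b * B = 1) (hAa : A * a = 1) (k i j : Fin N) :
    ∑ s, (vv a B s i * ((∑ t, pa s k t * B t j) - ∑ p, ∑ q, vv a B k p * pb s p q * B q j)
        - vv a B s j * ((∑ t, pa s k t * B t i) - ∑ p, ∑ q, vv a B k p * pb s p q * B q i)
        + (vv a B k s * ((∑ t, pa j s t * B t i) - ∑ p, ∑ q, vv a B s p * pb j p q * B q i)
        - vv a B k s * ((∑ t, pa i s t * B t j) - ∑ p, ∑ q, vv a B s p * pb i p q * B q j)))
      = ∑ p, ∑ q, ∑ m, B i p * B j q *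
          ((Ee b pa p q m + Ee a pb p q m
            - ∑ t, (Ee a pa p q t * (A * b) t m + Ee b pb p q t * (B * a) t m)) * vv a B k m) := by
  have hsplit : ∀ s : Fin N,
      vv a B s i * ((∑ t, pa s k t * B t j) - ∑ p, ∑ q, vv a B k p * pb s p q * B q j)
        - vv a B s j * ((∑ t, pa s k t * B t i) - ∑ p, ∑ q, vv a B k p * pb s p q * B q i)
        + (vv a B k s * ((∑ t, pa j s t * B t i) - ∑ p, ∑ q, vv a B s p * pb j p q * B q i)
        - vv a B k s * ((∑ t, pa i s t * B t j) - ∑ p, ∑ q, vv a B s p * pb i p q * B q j))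
      = vv a B s i * (∑ t, pa s k t * B t j)
          - vv a B s i * (∑ p, ∑ q, vv a B k p * pb s p q * B q j)
        - (vv a B s j * (∑ t, pa s k t * B t i)
          - vv a B s j * (∑ p, ∑ q, vv a B k p * pb s p q * B q i))
        + (vv a B k s * (∑ t, pa j s t * B t i)
          - vv a B k s * (∑ p, ∑ q, vv a B s p * pb j p q * B q i)
        - (vv a B k s * (∑ t, pa i s t * B t j)
          - vv a B k s * (∑ p, ∑ q, vv a B s p * pb i p q * B q j))) := fun s => by ring
  rw [Finset.sum_congr rfl fun s (_ : s ∈ Finset.univ) => hsplit s]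
  simp only [Finset.sum_sub_distrib, Finset.sum_add_distrib]
  rw [P2 ha hB hpa k i j, P3 ha hB hpb k i j, P2 ha hB hpa k j i, P3 ha hB hpb k j i,
      P1 hB hpa k i j, P4 ha hB hpb k i j, P1 hB hpa k j i, P4 ha hB hpb k j i]
  have hpushX : ∀ p q m : Fin N,
      B i p * B j q * ((∑ t, Ee a pa p q t * (A * b) t m) * vv a B k m)
      = ∑ t, B i p * B j q * (Ee a pa p q t * ((A * b) t m * vv a B k m)) := by
    intro p q m
    rw [Finset.sum_mul, Finset.mul_sum]
    exact Finset.sum_congr rfl fun t _ => by ring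
  have hpushY : ∀ p q m : Fin N,
      B i p * B j q * ((∑ t, Ee b pb p q t * (B * a) t m) * vv a B k m)
      = ∑ t, B i p * B j q * (Ee b pb p q t * ((B * a) t m * vv a B k m)) := by
    intro p q m
    rw [Finset.sum_mul, Finset.mul_sum]
    exact Finset.sum_congr rfl fun t _ => by ring
  have hR : ∀ p q m : Fin N,
      B i p * B j q * ((Ee b pa p q m + Ee a pb p q m
          - ((∑ t, Ee a pa p q t * (A * b) t m) + ∑ t, Ee b pb p q t * (B * a) t m))
            * vv a B k m)
      = B i p * B j q * (Ee b pa p q m * vv a B k m)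
          + B i p * B j q * (Ee a pb p q m * vv a B k m)
        - ((∑ t, B i p * B j q * (Ee a pa p q t * ((A * b) t m * vv a B k m)))
          + ∑ t, B i p * B j q * (Ee b pb p q t * ((B * a) t m * vv a B k m))) := by
    intro p q m
    rw [← hpushX p q m, ← hpushY p q m]
    ring
  rw [Finset.sum_congr rfl fun p (_ : p ∈ Finset.univ) =>
    Finset.sum_congr rfl fun q (_ : q ∈ Finset.univ) =>
      Finset.sum_congr rfl fun m (_ : m ∈ Finset.univ) => hR p q m]
  simp only [Finset.sum_add_distrib, Finset.sum_sub_distrib]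
  rw [groupA hBb k i j, groupB k i j, groupC ha hB hbB hAa k i j, groupD ha hB hBb k i j]
  ring

end MasterAlg

section Bridge
variable {N : ℕ} {U : Set (Fin N → ℝ)} (hU : IsOpen U)
  {g₁ g₂ : (Fin N → ℝ) → Matrix (Fin N) (Fin N) ℝ} {u : Fin N → ℝ}

lemma affinor_apply (x y : Fin N) (u : Fin N → ℝ) :
    affinor g₁ g₂ u x y = vv (g₁ u) ((g₂ u)⁻¹) x y := by
  unfold affinor vv
  rw [Matrix.mul_apply]

include hU in
lemma pdv_matrix_symm {g : (Fin N → ℝ) → Matrix (Fin N) (Fin N) ℝ}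
    (hsym : ∀ v ∈ U, (g v).IsSymm) (hu : u ∈ U) (s : Fin N) :
    Matrix.IsSymm (Matrix.of fun p r => pdv (fun v => g v p r) s u) := by
  unfold Matrix.IsSymm
  ext p r
  show pdv (fun v => g v r p) s u = pdv (fun v => g v p r) s u
  refine pdv_congr_nhds ?_
  filter_upwards [hU.mem_nhds hu] with v hv
  exact isSymm_apply (hsym v hv) r p

include hU in
lemma affinor_pdv (hs₁ : ∀ i j, ContDiffOn ℝ (⊤ : ℕ∞) (fun v => g₁ v i j) U)
    (hs₂ : ∀ i j, ContDiffOn ℝ (⊤ : ℕ∞) (fun v => g₂ v i j) U) (hu : u ∈ U)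
    (hdet₂ : (g₂ u).det ≠ 0) (s k j : Fin N) :
    pdv (fun v => affinor g₁ g₂ v k j) s u
      = (∑ t, pdv (fun v => g₁ v k t) s u * (g₂ u)⁻¹ t j)
        - ∑ p, ∑ q, vv (g₁ u) ((g₂ u)⁻¹) k p * pdv (fun v => g₂ v p q) s u * (g₂ u)⁻¹ q j := by
  have h1 : (fun v => affinor g₁ g₂ v k j) = fun v => ∑ t, g₁ v k t * (g₂ v)⁻¹ t j := by
    funext v; unfold affinor; rw [Matrix.mul_apply]
  rw [h1, pdv_sum (fun t _ => (entry_diffAt hU hs₁ hu k t).fun_mul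
    (inv_entry_diffAt (entry_diffAt hU hs₂ hu) hdet₂ t j))]
  have h2 : ∀ t : Fin N, pdv (fun v => g₁ v k t * (g₂ v)⁻¹ t j) s u
      = pdv (fun v => g₁ v k t) s u * (g₂ u)⁻¹ t j
        - ∑ p, ∑ q, g₁ u k t * ((g₂ u)⁻¹ t p * pdv (fun v => g₂ v p q) s u * (g₂ u)⁻¹ q j) := by
    intro t
    rw [pdv_mul (entry_diffAt hU hs₁ hu k t)
      (inv_entry_diffAt (entry_diffAt hU hs₂ hu) hdet₂ t j),
      pdv_inv_entry hU hs₂ hu hdet₂ t j s]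
    rw [mul_neg, Finset.mul_sum]
    rw [Finset.sum_congr rfl fun p (_ : p ∈ Finset.univ) => Finset.mul_sum _ _ _]
    ring
  rw [Finset.sum_congr rfl fun t (_ : t ∈ Finset.univ) => h2 t, Finset.sum_sub_distrib]
  congr 1
  rw [← rot3 (fun p q t =>
    g₁ u k t * ((g₂ u)⁻¹ t p * pdv (fun v => g₂ v p q) s u * (g₂ u)⁻¹ q j))]
  refine Finset.sum_congr rfl fun p _ => Finset.sum_congr rfl fun q _ => ?_
  rw [show vv (g₁ u) ((g₂ u)⁻¹) k p * pdv (fun v => g₂ v p q) s u * (g₂ u)⁻¹ q j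
      = (∑ t, g₁ u k t * (g₂ u)⁻¹ t p) * (pdv (fun v => g₂ v p q) s u * (g₂ u)⁻¹ q j) from by
    rw [mul_assoc]; rfl]
  rw [Finset.sum_mul]
  exact Finset.sum_congr rfl fun t _ => by ring

end Bridge

section Final
variable {N : ℕ} {U : Set (Fin N → ℝ)} (hU : IsOpen U)
  {g₁ g₂ : (Fin N → ℝ) → Matrix (Fin N) (Fin N) ℝ} {u : Fin N → ℝ}

include hU in
lemma nij_eq (hg₁ : IsMetricOn U g₁) (hg₂ : IsMetricOn U g₂) (hu : u ∈ U) (k i j : Fin N) :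
    nijenhuis (affinor g₁ g₂) k i j u
      = ∑ p, ∑ q, ∑ m, (g₂ u)⁻¹ i p * (g₂ u)⁻¹ j q
          * (Dten g₁ g₂ p q m u * vv (g₁ u) ((g₂ u)⁻¹) k m) := by
  obtain ⟨hs₁, hsym₁, hd₁⟩ := hg₁
  obtain ⟨hs₂, hsym₂, hd₂⟩ := hg₂
  have key := master_alg (a := g₁ u) (b := g₂ u) (A := (g₁ u)⁻¹) (B := (g₂ u)⁻¹)
    (pa := fun s => Matrix.of fun p r => pdv (fun v => g₁ v p r) s u)
    (pb := fun s => Matrix.of fun p r => pdv (fun v => g₂ v p r) s u)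
    (hsym₁ u hu) (inv_isSymm (hsym₂ u hu))
    (fun s => pdv_matrix_symm hU hsym₁ hu s) (fun s => pdv_matrix_symm hU hsym₂ hu s)
    (Matrix.nonsing_inv_mul _ (isUnit_iff_ne_zero.2 (hd₂ u hu)))
    (Matrix.mul_nonsing_inv _ (isUnit_iff_ne_zero.2 (hd₂ u hu)))
    (Matrix.nonsing_inv_mul _ (isUnit_iff_ne_zero.2 (hd₁ u hu))) k i j
  refine Eq.trans ?_ (Eq.trans key ?_)
  · unfold nijenhuis
    refine Finset.sum_congr rfl fun s _ => ?_
    rw [affinor_apply s i u, affinor_apply s j u, affinor_apply k s u,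
        affinor_pdv hU hs₁ hs₂ hu (hd₂ u hu) s k j,
        affinor_pdv hU hs₁ hs₂ hu (hd₂ u hu) s k i,
        affinor_pdv hU hs₁ hs₂ hu (hd₂ u hu) j s i,
        affinor_pdv hU hs₁ hs₂ hu (hd₂ u hu) i s j]
    simp only [Matrix.of_apply]
    ring
  · rfl

lemma kill_contraction {M M' : Matrix (Fin N) (Fin N) ℝ} (h : M * M' = 1) (f : Fin N → ℝ)
    (hf : ∀ i, ∑ p, M' i p * f p = 0) (x : Fin N) : f x = 0 := by
  have h0 := contract_one h x f
  rw [← h0]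
  have h1 : ∀ p, (∑ i, M x i * M' i p) * f p = ∑ i, M x i * (M' i p * f p) := fun p => by
    rw [Finset.sum_mul]; exact Finset.sum_congr rfl fun i _ => by ring
  rw [Finset.sum_congr rfl fun p (_ : p ∈ Finset.univ) => h1 p, Finset.sum_comm]
  rw [Finset.sum_congr rfl fun i (_ : i ∈ Finset.univ) => by
    rw [← Finset.mul_sum, hf i, mul_zero]]
  exact Finset.sum_eq_zero fun i _ => rfl

include hU in
lemma Dten_iff_nij (hg₁ : IsMetricOn U g₁) (hg₂ : IsMetricOn U g₂) (hu : u ∈ U) :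
    (∀ i j k, Dten g₁ g₂ i j k u = 0)
      ↔ ∀ k i j, nijenhuis (affinor g₁ g₂) k i j u = 0 := by
  have hd₁ := hg₁.2.2 u hu
  have hd₂ := hg₂.2.2 u hu
  constructor
  · intro hD k i j
    rw [nij_eq hU hg₁ hg₂ hu k i j]
    refine Finset.sum_eq_zero fun p _ => Finset.sum_eq_zero fun q _ =>
      Finset.sum_eq_zero fun m _ => ?_
    rw [hD p q m, zero_mul, mul_zero]
  · intro hN i j k
    have hzero : ∀ k' i' j', ∑ p, ∑ q, ∑ m, (g₂ u)⁻¹ i' p * (g₂ u)⁻¹ j' q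
        * (Dten g₁ g₂ p q m u * vv (g₁ u) ((g₂ u)⁻¹) k' m) = 0 := fun k' i' j' => by
      rw [← nij_eq hU hg₁ hg₂ hu k' i' j']
      exact hN k' i' j'
    have hbB : g₂ u * (g₂ u)⁻¹ = 1 := Matrix.mul_nonsing_inv _ (isUnit_iff_ne_zero.2 hd₂)
    have step1 : ∀ k' j' p, ∑ q, ∑ m, (g₂ u)⁻¹ j' q
        * (Dten g₁ g₂ p q m u * vv (g₁ u) ((g₂ u)⁻¹) k' m) = 0 := by
      intro k' j' p
      refine kill_contraction hbB
        (fun p => ∑ q, ∑ m, (g₂ u)⁻¹ j' q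
          * (Dten g₁ g₂ p q m u * vv (g₁ u) ((g₂ u)⁻¹) k' m)) (fun i' => ?_) p
      rw [← hzero k' i' j']
      refine Finset.sum_congr rfl fun p _ => ?_
      rw [Finset.mul_sum]
      refine Finset.sum_congr rfl fun q _ => ?_
      rw [Finset.mul_sum]
      exact Finset.sum_congr rfl fun m _ => by ring
    have step2 : ∀ k' p q, ∑ m, Dten g₁ g₂ p q m u * vv (g₁ u) ((g₂ u)⁻¹) k' m = 0 := by
      intro k' p q
      refine kill_contraction hbB
        (fun q => ∑ m, Dten g₁ g₂ p q m u * vv (g₁ u) ((g₂ u)⁻¹) k' m) (fun j' => ?_) q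
      rw [← step1 k' j' p]
      refine Finset.sum_congr rfl fun q _ => ?_
      rw [Finset.mul_sum]
    have hw : (g₂ u * (g₁ u)⁻¹) * (g₁ u * (g₂ u)⁻¹) = 1 := by
      rw [mul_assoc, ← mul_assoc (g₁ u)⁻¹,
        Matrix.nonsing_inv_mul _ (isUnit_iff_ne_zero.2 hd₁), one_mul, hbB]
    refine kill_contraction hw (fun m => Dten g₁ g₂ i j m u) (fun k' => ?_) k
    rw [← step2 k' i j]
    refine Finset.sum_congr rfl fun m _ => ?_
    rw [show (g₁ u * (g₂ u)⁻¹) k' m = vv (g₁ u) ((g₂ u)⁻¹) k' m from affinor_apply k' m u]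
    ring

end Final
end Mok

/-- two metrics are almost compatible iff the Nijenhuis tensor of
their affinor vanishes identically. -/
theorem almost_compatible_iff_nijenhuis_vanishes {N : ℕ}
    (U : Set (Fin N → ℝ)) (hU : IsOpen U)
    (g₁ g₂ : (Fin N → ℝ) → Matrix (Fin N) (Fin N) ℝ)
    (hg₁ : IsMetricOn U g₁) (hg₂ : IsMetricOn U g₂) :
    AlmostCompatibleOn U g₁ g₂ ↔
      ∀ u ∈ U, ∀ k i j, nijenhuis (affinor g₁ g₂) k i j u = 0 := by
  constructor
  · intro hac u hu
    have hD := Mok.ac_forward hU hg₁ hg₂ hac u hu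
    exact (Mok.Dten_iff_nij hU hg₁ hg₂ hu).1 (fun i j k => hD i j k)
  · intro hN
    refine Mok.ac_backward hU hg₁ hg₂ (fun u hu => ?_)
    exact (Mok.Dten_iff_nij hU hg₁ hg₂ hu).2 (hN u hu)
end

section
/- For any two contravariant metrics g₁^{ij}(u) and g₂^{ij}(u) on an open set U ⊆ ℝ^N, the tensor M^{ijk}(u) vanishes identically on U if and only if the Nijenhuis tensor N^k_{ij}(u) of the affinor v^i_j(u) = g₁^{is}(u)g_{2,sj}(u) vanishes identically on U. -/
open Matrix

namespace MNaux
variable {N : ℕ}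

theorem pdv_congr {f h : (Fin N → ℝ) → ℝ} {u : Fin N → ℝ} (hfh : f =ᶠ[nhds u] h) (s : Fin N) :
    pdv f s u = pdv h s u := by
  unfold pdv
  rw [Filter.EventuallyEq.fderiv_eq hfh]

theorem pdv_const (c : ℝ) (s : Fin N) (u : Fin N → ℝ) : pdv (fun _ => c) s u = 0 := by
  unfold pdv; simp

theorem pdv_mul {f h : (Fin N → ℝ) → ℝ} {u : Fin N → ℝ} (hf : DifferentiableAt ℝ f u)
    (hh : DifferentiableAt ℝ h u) (s : Fin N) :
    pdv (fun v => f v * h v) s u = pdv f s u * h u + f u * pdv h s u := by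
  unfold pdv
  rw [fderiv_fun_mul hf hh]
  simp only [ContinuousLinearMap.add_apply, ContinuousLinearMap.smul_apply, smul_eq_mul]
  ring

theorem pdv_sum {ι : Type*} [Fintype ι] {f : ι → (Fin N → ℝ) → ℝ} {u : Fin N → ℝ}
    (hf : ∀ i, DifferentiableAt ℝ (f i) u) (s : Fin N) :
    pdv (fun v => ∑ i, f i v) s u = ∑ i, pdv (f i) s u := by
  unfold pdv
  rw [fderiv_fun_sum (fun i _ => hf i)]
  simp

theorem diffAt_det {A : (Fin N → ℝ) → Matrix (Fin N) (Fin N) ℝ} {u : Fin N → ℝ}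
    (h : ∀ i j, DifferentiableAt ℝ (fun v => A v i j) u) :
    DifferentiableAt ℝ (fun v => (A v).det) u := by
  simp only [Matrix.det_apply]
  apply DifferentiableAt.fun_sum
  intro σ _
  simp only [Units.smul_def, zsmul_eq_mul]
  exact (differentiableAt_const _).mul (HasFDerivAt.finset_prod (fun i _ => (h (σ i) i).hasFDerivAt)).differentiableAt

theorem diffAt_inv {g : (Fin N → ℝ) → Matrix (Fin N) (Fin N) ℝ} {u : Fin N → ℝ}
    (h : ∀ i j, DifferentiableAt ℝ (fun v => g v i j) u) (hdet : (g u).det ≠ 0) (i j : Fin N) :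
    DifferentiableAt ℝ (fun v => (g v)⁻¹ i j) u := by
  have hform : (fun v => (g v)⁻¹ i j) = fun v => ((g v).det)⁻¹ * (g v).adjugate i j := by
    funext v
    rw [Matrix.inv_def, Matrix.smul_apply, Ring.inverse_eq_inv, smul_eq_mul]
  rw [hform]
  have hadj : DifferentiableAt ℝ (fun v => (g v).adjugate i j) u := by
    simp only [Matrix.adjugate_apply]
    apply diffAt_det
    intro a b
    by_cases hab : a = j
    · simp only [Matrix.updateRow_apply, hab, if_true]
      exact differentiableAt_const _
    · simp only [Matrix.updateRow_apply, hab, if_false]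
      exact h a b
  exact ((diffAt_det h).inv hdet).mul hadj

theorem one_apply_sum (f : Fin N → ℝ) (i : Fin N) :
    ∑ t, (1 : Matrix (Fin N) (Fin N) ℝ) i t * f t = f i := by
  simp [Matrix.one_apply, ite_mul, Finset.sum_ite_eq]

theorem contract_sum {A B : Matrix (Fin N) (Fin N) ℝ} (h : B * A = 1) (f : Fin N → ℝ) (x : Fin N) :
    ∑ a, B x a * ∑ i, A a i * f i = f x := by
  calc ∑ a, B x a * ∑ i, A a i * f i
      = ∑ a, ∑ i, B x a * A a i * f i := by
        refine Finset.sum_congr rfl fun a _ => ?_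
        rw [Finset.mul_sum]
        exact Finset.sum_congr rfl fun i _ => (mul_assoc _ _ _).symm
    _ = ∑ i, (∑ a, B x a * A a i) * f i := by
        rw [Finset.sum_comm]
        exact Finset.sum_congr rfl fun i _ => (Finset.sum_mul _ _ _).symm
    _ = ∑ i, (1 : Matrix (Fin N) (Fin N) ℝ) x i * f i := by
        refine Finset.sum_congr rfl fun i _ => ?_
        rw [← Matrix.mul_apply, h]
    _ = f x := one_apply_sum f x

end MNaux
namespace MNaux
variable {N : ℕ} {g : (Fin N → ℝ) → Matrix (Fin N) (Fin N) ℝ} {u : Fin N → ℝ}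

theorem inv_symm_entry {A : Matrix (Fin N) (Fin N) ℝ} (h : A.IsSymm) (i j : Fin N) :
    A⁻¹ i j = A⁻¹ j i := by
  have h2 : A⁻¹ᵀ = A⁻¹ := by rw [Matrix.transpose_nonsing_inv, h.eq]
  conv_lhs => rw [← h2]
  rfl

theorem pdv_inv_symm (hsymm_ev : ∀ᶠ v in nhds u, (g v).IsSymm) (i j m : Fin N) :
    pdv (fun v => (g v)⁻¹ i j) m u = pdv (fun v => (g v)⁻¹ j i) m u :=
  pdv_congr (hsymm_ev.mono fun v hv => inv_symm_entry hv i j) m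

theorem christoffel_symm (hsymm_ev : ∀ᶠ v in nhds u, (g v).IsSymm) (i j k : Fin N) :
    christoffel g i j k u = christoffel g i k j u := by
  unfold christoffel
  congr 1
  refine Finset.sum_congr rfl fun s _ => ?_
  rw [pdv_inv_symm hsymm_ev s k j, pdv_inv_symm hsymm_ev j s k, pdv_inv_symm hsymm_ev j k s]
  ring

theorem det_ne_ev (hd : ∀ i j, DifferentiableAt ℝ (fun v => g v i j) u)
    (hdet : (g u).det ≠ 0) : ∀ᶠ v in nhds u, (g v).det ≠ 0 :=
  (diffAt_det hd).continuousAt.eventually_ne hdet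

theorem lowered_christoffel (hdet : (g u).det ≠ 0) (p j m : Fin N) :
    ∑ s, (g u)⁻¹ p s * christoffel g s j m u
      = (1/2) * (pdv (fun v => (g v)⁻¹ p m) j u + pdv (fun v => (g v)⁻¹ j p) m u
          - pdv (fun v => (g v)⁻¹ j m) p u) := by
  have h1 : (g u)⁻¹ * g u = 1 := Matrix.nonsing_inv_mul _ (isUnit_iff_ne_zero.2 hdet)
  have h2 := contract_sum h1 (fun t => pdv (fun v => (g v)⁻¹ t m) j u
      + pdv (fun v => (g v)⁻¹ j t) m u - pdv (fun v => (g v)⁻¹ j m) t u) p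
  calc ∑ s, (g u)⁻¹ p s * christoffel g s j m u
      = (1/2) * ∑ s, (g u)⁻¹ p s * ∑ t, g u s t * (pdv (fun v => (g v)⁻¹ t m) j u
          + pdv (fun v => (g v)⁻¹ j t) m u - pdv (fun v => (g v)⁻¹ j m) t u) := by
        unfold christoffel
        rw [Finset.mul_sum]
        refine Finset.sum_congr rfl fun s _ => ?_
        ring
    _ = _ := by rw [h2]

theorem pdv_inv_eq (hdet : (g u).det ≠ 0) (hsymm_ev : ∀ᶠ v in nhds u, (g v).IsSymm)
    (i j m : Fin N) :
    pdv (fun v => (g v)⁻¹ i j) m u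
      = ∑ s, (g u)⁻¹ i s * christoffel g s j m u
        + ∑ s, (g u)⁻¹ j s * christoffel g s i m u := by
  rw [lowered_christoffel hdet i j m, lowered_christoffel hdet j i m]
  rw [pdv_inv_symm hsymm_ev j i m]
  ring

end MNaux
namespace MNaux
variable {N : ℕ} {g : (Fin N → ℝ) → Matrix (Fin N) (Fin N) ℝ} {u : Fin N → ℝ}

theorem one_apply_sum' (f : Fin N → ℝ) (i : Fin N) :
    ∑ t, f t * (1 : Matrix (Fin N) (Fin N) ℝ) t i = f i := by
  simp [Matrix.one_apply, mul_ite, Finset.sum_ite_eq']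

theorem contract_sum_right {A B : Matrix (Fin N) (Fin N) ℝ} (h : A * B = 1) (f : Fin N → ℝ)
    (x : Fin N) : ∑ j, (∑ t, f t * A t j) * B j x = f x := by
  calc ∑ j, (∑ t, f t * A t j) * B j x
      = ∑ j, ∑ t, f t * (A t j * B j x) := by
        refine Finset.sum_congr rfl fun j _ => ?_
        rw [Finset.sum_mul]
        exact Finset.sum_congr rfl fun t _ => (mul_assoc _ _ _)
    _ = ∑ t, f t * ∑ j, A t j * B j x := by
        rw [Finset.sum_comm]
        exact Finset.sum_congr rfl fun t _ => (Finset.mul_sum _ _ _).symm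
    _ = ∑ t, f t * (1 : Matrix (Fin N) (Fin N) ℝ) t x := by
        refine Finset.sum_congr rfl fun t _ => ?_
        rw [← Matrix.mul_apply, h]
    _ = f x := one_apply_sum' f x

theorem sum_swap_mul (X : Fin N → ℝ) (Y : Fin N → Fin N → ℝ) (Z : Fin N → ℝ) :
    ∑ j, (∑ t, X t * Y t j) * Z j = ∑ t, X t * (∑ j, Y t j * Z j) := by
  calc ∑ j, (∑ t, X t * Y t j) * Z j
      = ∑ j, ∑ t, X t * (Y t j * Z j) := by
        refine Finset.sum_congr rfl fun j _ => ?_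
        rw [Finset.sum_mul]
        exact Finset.sum_congr rfl fun t _ => (mul_assoc _ _ _)
    _ = ∑ t, ∑ j, X t * (Y t j * Z j) := Finset.sum_comm
    _ = ∑ t, X t * (∑ j, Y t j * Z j) := by
        exact Finset.sum_congr rfl fun t _ => (Finset.mul_sum _ _ _).symm

theorem contract_sum_mid {A B : Matrix (Fin N) (Fin N) ℝ}
    (hAB : ∀ s x, ∑ j, A j s * B j x = (1 : Matrix (Fin N) (Fin N) ℝ) s x) (f : Fin N → ℝ)
    (x : Fin N) : ∑ j, (∑ s, A j s * f s) * B j x = f x := by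
  calc ∑ j, (∑ s, A j s * f s) * B j x
      = ∑ j, (∑ s, f s * A j s) * B j x := by
        refine Finset.sum_congr rfl fun j _ => ?_
        congr 1
        exact Finset.sum_congr rfl fun s _ => mul_comm _ _
    _ = ∑ s, f s * ∑ j, A j s * B j x := sum_swap_mul f (fun s j => A j s) (fun j => B j x)
    _ = ∑ s, f s * (1 : Matrix (Fin N) (Fin N) ℝ) s x := by
        refine Finset.sum_congr rfl fun s _ => ?_
        rw [hAB s x]
    _ = f x := one_apply_sum' f x

theorem pdv_g_eq (hd : ∀ i j, DifferentiableAt ℝ (fun v => g v i j) u)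
    (hdet : (g u).det ≠ 0) (hsymm_ev : ∀ᶠ v in nhds u, (g v).IsSymm)
    (hsymm : (g u).IsSymm) (i q m : Fin N) :
    pdv (fun v => g v i q) m u
      = -(∑ p, christoffel g i p m u * g u p q)
        - ∑ p, g u i p * christoffel g q p m u := by
  have hdi : ∀ a b, DifferentiableAt ℝ (fun v => (g v)⁻¹ a b) u := diffAt_inv hd hdet
  have hGB : g u * (g u)⁻¹ = 1 := Matrix.mul_nonsing_inv _ (isUnit_iff_ne_zero.2 hdet)
  have hBG : (g u)⁻¹ * g u = 1 := Matrix.nonsing_inv_mul _ (isUnit_iff_ne_zero.2 hdet)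
  have hdet_ev := det_ne_ev hd hdet
  have hstep1 : ∀ j, ∑ t, pdv (fun v => g v i t) m u * (g u)⁻¹ t j
      = -(christoffel g i j m u)
        - ∑ t, g u i t * ∑ s, (g u)⁻¹ j s * christoffel g s t m u := by
    intro j
    have hconst : (fun v => ∑ t, g v i t * (g v)⁻¹ t j)
        =ᶠ[nhds u] (fun _ => (1 : Matrix (Fin N) (Fin N) ℝ) i j) :=
      hdet_ev.mono fun v hv => by
        show ∑ t, g v i t * (g v)⁻¹ t j = (1 : Matrix (Fin N) (Fin N) ℝ) i j
        rw [← Matrix.mul_apply, Matrix.mul_nonsing_inv _ (isUnit_iff_ne_zero.2 hv)]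
    have h0 : pdv (fun v => ∑ t, g v i t * (g v)⁻¹ t j) m u = 0 := by
      rw [pdv_congr hconst, pdv_const]
    rw [pdv_sum (fun t => (hd i t).fun_mul (hdi t j)) m] at h0
    rw [Finset.sum_congr rfl (fun t _ => pdv_mul (hd i t) (hdi t j) m)] at h0
    rw [Finset.sum_add_distrib] at h0
    have hsub : ∑ t, g u i t * pdv (fun v => (g v)⁻¹ t j) m u
        = christoffel g i j m u
          + ∑ t, g u i t * ∑ s, (g u)⁻¹ j s * christoffel g s t m u := by
      rw [Finset.sum_congr rfl fun t _ => by
        rw [pdv_inv_eq hdet hsymm_ev t j m]]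
      simp only [mul_add]
      rw [Finset.sum_add_distrib]
      congr 1
      exact contract_sum hGB (fun s => christoffel g s j m u) i
    rw [hsub] at h0
    linarith [h0]
  have hmain : pdv (fun v => g v i q) m u
      = ∑ j, (∑ t, pdv (fun v => g v i t) m u * (g u)⁻¹ t j) * g u j q :=
    (contract_sum_right hBG (fun t => pdv (fun v => g v i t) m u) q).symm
  rw [hmain, Finset.sum_congr rfl fun j _ => by rw [hstep1 j]]
  simp only [sub_mul, neg_mul]
  rw [Finset.sum_sub_distrib]
  congr 1
  · rw [← Finset.sum_neg_distrib]
  · -- ∑ j, (∑ t, g u i t * ∑ s, (g u)⁻¹ j s * christoffel g s t m u) * g u j q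
    --   = ∑ p, g u i p * christoffel g q p m u
    have hswap : ∑ j, (∑ t, g u i t * ∑ s, (g u)⁻¹ j s * christoffel g s t m u) * g u j q
        = ∑ t, g u i t * ∑ j, (∑ s, (g u)⁻¹ j s * christoffel g s t m u) * g u j q :=
      sum_swap_mul (fun t => g u i t)
        (fun t j => ∑ s, (g u)⁻¹ j s * christoffel g s t m u) (fun j => g u j q)
    rw [hswap]
    refine Finset.sum_congr rfl fun t _ => ?_
    congr 1
    refine contract_sum_mid (fun s x => ?_) (fun s => christoffel g s t m u) q
    calc ∑ j, (g u)⁻¹ j s * g u j x = ∑ j, (g u)⁻¹ s j * g u j x := by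
          refine Finset.sum_congr rfl fun j _ => ?_
          rw [inv_symm_entry hsymm j s]
      _ = (1 : Matrix (Fin N) (Fin N) ℝ) s x := by rw [← Matrix.mul_apply, hBG]

end MNaux
namespace MNaux
variable {N : ℕ} {g₁ g₂ : (Fin N → ℝ) → Matrix (Fin N) (Fin N) ℝ} {u : Fin N → ℝ}

theorem affinor_apply (v : Fin N → ℝ) (k j : Fin N) :
    affinor g₁ g₂ v k j = ∑ s, g₁ v k s * (g₂ v)⁻¹ s j := by
  simp [affinor, Matrix.mul_apply]

theorem pdv_affinor
    (hd₁ : ∀ i j, DifferentiableAt ℝ (fun v => g₁ v i j) u)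
    (hd₂ : ∀ i j, DifferentiableAt ℝ (fun v => g₂ v i j) u)
    (hdet₁ : (g₁ u).det ≠ 0) (hdet₂ : (g₂ u).det ≠ 0)
    (hsymm_ev₁ : ∀ᶠ v in nhds u, (g₁ v).IsSymm)
    (hsymm_ev₂ : ∀ᶠ v in nhds u, (g₂ v).IsSymm)
    (hsymm₁ : (g₁ u).IsSymm) (hsymm₂ : (g₂ u).IsSymm) (k j m : Fin N) :
    pdv (fun v => affinor g₁ g₂ v k j) m u
      = -(∑ p, christoffel g₁ k p m u * affinor g₁ g₂ u p j)
        + ∑ p, affinor g₁ g₂ u k p * christoffel g₂ p j m u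
        + ∑ p, ∑ s, g₁ u k p
            * ((christoffel g₂ s p m u - christoffel g₁ s p m u) * (g₂ u)⁻¹ s j) := by
  have hdi₂ : ∀ a b, DifferentiableAt ℝ (fun v => (g₂ v)⁻¹ a b) u := diffAt_inv hd₂ hdet₂
  have hrepr : (fun v => affinor g₁ g₂ v k j) = fun v => ∑ s, g₁ v k s * (g₂ v)⁻¹ s j := by
    funext v; exact affinor_apply v k j
  rw [hrepr, pdv_sum (fun s => (hd₁ k s).fun_mul (hdi₂ s j)) m,
    Finset.sum_congr rfl fun s _ => pdv_mul (hd₁ k s) (hdi₂ s j) m,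
    Finset.sum_congr rfl fun s _ => by
      rw [pdv_g_eq hd₁ hdet₁ hsymm_ev₁ hsymm₁ k s m, pdv_inv_eq hdet₂ hsymm_ev₂ s j m]]
  calc ∑ s, ((-(∑ p, christoffel g₁ k p m u * g₁ u p s)
            - ∑ p, g₁ u k p * christoffel g₁ s p m u) * (g₂ u)⁻¹ s j
          + g₁ u k s * (∑ t, (g₂ u)⁻¹ s t * christoffel g₂ t j m u
            + ∑ t, (g₂ u)⁻¹ j t * christoffel g₂ t s m u))
      = ∑ s, (-((∑ p, christoffel g₁ k p m u * g₁ u p s) * (g₂ u)⁻¹ s j)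
          + g₁ u k s * (∑ t, (g₂ u)⁻¹ s t * christoffel g₂ t j m u)
          + (g₁ u k s * (∑ t, (g₂ u)⁻¹ j t * christoffel g₂ t s m u)
            - (∑ p, g₁ u k p * christoffel g₁ s p m u) * (g₂ u)⁻¹ s j)) := by
        refine Finset.sum_congr rfl fun s _ => ?_; ring
    _ = (∑ s, -((∑ p, christoffel g₁ k p m u * g₁ u p s) * (g₂ u)⁻¹ s j))
        + (∑ s, g₁ u k s * (∑ t, (g₂ u)⁻¹ s t * christoffel g₂ t j m u))
        + ∑ s, (g₁ u k s * (∑ t, (g₂ u)⁻¹ j t * christoffel g₂ t s m u)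
            - (∑ p, g₁ u k p * christoffel g₁ s p m u) * (g₂ u)⁻¹ s j) := by
        rw [Finset.sum_add_distrib, Finset.sum_add_distrib]
    _ = -(∑ p, christoffel g₁ k p m u * affinor g₁ g₂ u p j)
        + ∑ p, affinor g₁ g₂ u k p * christoffel g₂ p j m u
        + ∑ p, ∑ s, g₁ u k p
            * ((christoffel g₂ s p m u - christoffel g₁ s p m u) * (g₂ u)⁻¹ s j) := by
        congr 1
        · congr 1
          · rw [Finset.sum_neg_distrib,
              sum_swap_mul (fun p => christoffel g₁ k p m u)
                (fun p s => g₁ u p s) (fun s => (g₂ u)⁻¹ s j)]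
            congr 1
          · rw [← sum_swap_mul (fun s => g₁ u k s) (fun s t => (g₂ u)⁻¹ s t)
              (fun t => christoffel g₂ t j m u)]
            refine Finset.sum_congr rfl fun p _ => ?_
            rw [affinor_apply]
        · have h4 : ∑ s, g₁ u k s * (∑ t, (g₂ u)⁻¹ j t * christoffel g₂ t s m u)
              = ∑ p, ∑ s, g₁ u k p * (christoffel g₂ s p m u * (g₂ u)⁻¹ s j) := by
            calc ∑ s, g₁ u k s * (∑ t, (g₂ u)⁻¹ j t * christoffel g₂ t s m u)
                = ∑ s, ∑ t, g₁ u k s * ((g₂ u)⁻¹ j t * christoffel g₂ t s m u) :=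
                  Finset.sum_congr rfl fun s _ => Finset.mul_sum _ _ _
              _ = ∑ p, ∑ s, g₁ u k p * (christoffel g₂ s p m u * (g₂ u)⁻¹ s j) := by
                  refine Finset.sum_congr rfl fun p _ => Finset.sum_congr rfl fun s _ => ?_
                  rw [inv_symm_entry hsymm₂ j s]
                  ring
          have h2 : ∑ s, (∑ p, g₁ u k p * christoffel g₁ s p m u) * (g₂ u)⁻¹ s j
              = ∑ p, ∑ s, g₁ u k p * (christoffel g₁ s p m u * (g₂ u)⁻¹ s j) := by
            calc ∑ s, (∑ p, g₁ u k p * christoffel g₁ s p m u) * (g₂ u)⁻¹ s j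
                = ∑ s, ∑ p, g₁ u k p * (christoffel g₁ s p m u * (g₂ u)⁻¹ s j) := by
                  refine Finset.sum_congr rfl fun s _ => ?_
                  rw [Finset.sum_mul]
                  exact Finset.sum_congr rfl fun p _ => mul_assoc _ _ _
              _ = ∑ p, ∑ s, g₁ u k p * (christoffel g₁ s p m u * (g₂ u)⁻¹ s j) :=
                  Finset.sum_comm
          rw [Finset.sum_sub_distrib, h4, h2, ← Finset.sum_sub_distrib]
          refine Finset.sum_congr rfl fun p _ => ?_
          rw [← Finset.sum_sub_distrib]
          refine Finset.sum_congr rfl fun s _ => ?_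
          ring

end MNaux
namespace MNaux
variable {N : ℕ} {g₁ g₂ : (Fin N → ℝ) → Matrix (Fin N) (Fin N) ℝ} {u : Fin N → ℝ}

theorem sum2_split (f1 f2 f3 f4 : Fin N → Fin N → ℝ) :
    (∑ s, ∑ q, (f1 s q - f2 s q - f3 s q + f4 s q))
      = (∑ s, ∑ q, f1 s q) - (∑ s, ∑ q, f2 s q) - (∑ s, ∑ q, f3 s q)
        + (∑ s, ∑ q, f4 s q) := by
  simp only [Finset.sum_add_distrib, Finset.sum_sub_distrib]

theorem Mexp (hsymm_ev₂ : ∀ᶠ v in nhds u, (g₂ v).IsSymm) (i j k : Fin N) :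
    Mtensor g₁ g₂ i j k u
      = ∑ s, ∑ q, (g₁ u i s * g₂ u j q - g₁ u j s * g₂ u i q)
          * (christoffel g₂ k s q u - christoffel g₁ k s q u) := by
  have hR : ∑ s, ∑ q, (g₁ u i s * g₂ u j q - g₁ u j s * g₂ u i q)
          * (christoffel g₂ k s q u - christoffel g₁ k s q u)
      = (∑ s, ∑ q, g₁ u i s * g₂ u j q * christoffel g₂ k s q u)
        - (∑ s, ∑ q, g₁ u i s * g₂ u j q * christoffel g₁ k s q u)
        - (∑ s, ∑ q, g₁ u j s * g₂ u i q * christoffel g₂ k s q u)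
        + (∑ s, ∑ q, g₁ u j s * g₂ u i q * christoffel g₁ k s q u) := by
    rw [← sum2_split]
    refine Finset.sum_congr rfl fun s _ => Finset.sum_congr rfl fun q _ => ?_
    ring
  rw [hR]
  have hL : Mtensor g₁ g₂ i j k u
      = (∑ s, ∑ p, g₁ u i s * (g₂ u j p * christoffel g₂ k p s u))
        - (∑ s, ∑ p, g₂ u j s * (g₁ u i p * christoffel g₁ k p s u))
        - (∑ s, ∑ p, g₁ u j s * (g₂ u i p * christoffel g₂ k p s u))
        + (∑ s, ∑ p, g₂ u i s * (g₁ u j p * christoffel g₁ k p s u)) := by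
    unfold Mtensor christoffelCon
    rw [← sum2_split]
    refine Finset.sum_congr rfl fun s _ => ?_
    rw [Finset.mul_sum, Finset.mul_sum, Finset.mul_sum, Finset.mul_sum]
    simp only [Finset.sum_add_distrib, Finset.sum_sub_distrib]
  rw [hL]
  congr 1
  congr 1
  congr 1
  · -- P1 = c1
    refine Finset.sum_congr rfl fun s _ => Finset.sum_congr rfl fun q _ => ?_
    rw [christoffel_symm hsymm_ev₂ k q s]
    ring
  · -- P2 = c2
    rw [Finset.sum_comm]
    refine Finset.sum_congr rfl fun s _ => Finset.sum_congr rfl fun q _ => ?_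
    ring
  · -- P3 = c3
    refine Finset.sum_congr rfl fun s _ => Finset.sum_congr rfl fun q _ => ?_
    rw [christoffel_symm hsymm_ev₂ k q s]
    ring
  · -- P4 = c4
    rw [Finset.sum_comm]
    refine Finset.sum_congr rfl fun s _ => Finset.sum_congr rfl fun q _ => ?_
    ring

end MNaux
namespace MNaux
variable {N : ℕ} {g₁ g₂ : (Fin N → ℝ) → Matrix (Fin N) (Fin N) ℝ} {u : Fin N → ℝ}

theorem NexpA
    (hd₁ : ∀ i j, DifferentiableAt ℝ (fun v => g₁ v i j) u)
    (hd₂ : ∀ i j, DifferentiableAt ℝ (fun v => g₂ v i j) u)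
    (hdet₁ : (g₁ u).det ≠ 0) (hdet₂ : (g₂ u).det ≠ 0)
    (hsymm_ev₁ : ∀ᶠ v in nhds u, (g₁ v).IsSymm)
    (hsymm_ev₂ : ∀ᶠ v in nhds u, (g₂ v).IsSymm)
    (hsymm₁ : (g₁ u).IsSymm) (hsymm₂ : (g₂ u).IsSymm) (k i j : Fin N) :
    ∑ m, affinor g₁ g₂ u m i * pdv (fun v => affinor g₁ g₂ v k j) m u
      = -(∑ m, ∑ p, affinor g₁ g₂ u m i
            * (christoffel g₁ k p m u * affinor g₁ g₂ u p j))
        + ∑ m, ∑ p, affinor g₁ g₂ u m i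
            * (affinor g₁ g₂ u k p * christoffel g₂ p j m u)
        + ∑ m, ∑ p, ∑ s, affinor g₁ g₂ u m i * (g₁ u k p
            * ((christoffel g₂ s p m u - christoffel g₁ s p m u) * (g₂ u)⁻¹ s j)) := by
  have hper : ∀ m, affinor g₁ g₂ u m i * pdv (fun v => affinor g₁ g₂ v k j) m u
      = -(∑ p, affinor g₁ g₂ u m i
            * (christoffel g₁ k p m u * affinor g₁ g₂ u p j))
        + ∑ p, affinor g₁ g₂ u m i
            * (affinor g₁ g₂ u k p * christoffel g₂ p j m u)
        + ∑ p, ∑ s, affinor g₁ g₂ u m i * (g₁ u k p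
            * ((christoffel g₂ s p m u - christoffel g₁ s p m u) * (g₂ u)⁻¹ s j)) := by
    intro m
    rw [pdv_affinor hd₁ hd₂ hdet₁ hdet₂ hsymm_ev₁ hsymm_ev₂ hsymm₁ hsymm₂ k j m]
    rw [mul_add, mul_add, mul_neg]
    simp only [Finset.mul_sum]
  rw [Finset.sum_congr rfl fun m _ => hper m]
  simp only [Finset.sum_add_distrib, Finset.sum_neg_distrib]

theorem NexpC
    (hd₁ : ∀ i j, DifferentiableAt ℝ (fun v => g₁ v i j) u)
    (hd₂ : ∀ i j, DifferentiableAt ℝ (fun v => g₂ v i j) u)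
    (hdet₁ : (g₁ u).det ≠ 0) (hdet₂ : (g₂ u).det ≠ 0)
    (hsymm_ev₁ : ∀ᶠ v in nhds u, (g₁ v).IsSymm)
    (hsymm_ev₂ : ∀ᶠ v in nhds u, (g₂ v).IsSymm)
    (hsymm₁ : (g₁ u).IsSymm) (hsymm₂ : (g₂ u).IsSymm) (k i j : Fin N) :
    ∑ m, affinor g₁ g₂ u k m * pdv (fun v => affinor g₁ g₂ v m i) j u
      = -(∑ m, ∑ p, affinor g₁ g₂ u k m
            * (christoffel g₁ m p j u * affinor g₁ g₂ u p i))
        + ∑ m, ∑ p, affinor g₁ g₂ u k m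
            * (affinor g₁ g₂ u m p * christoffel g₂ p i j u)
        + ∑ m, ∑ p, ∑ s, affinor g₁ g₂ u k m * (g₁ u m p
            * ((christoffel g₂ s p j u - christoffel g₁ s p j u) * (g₂ u)⁻¹ s i)) := by
  have hper : ∀ m, affinor g₁ g₂ u k m * pdv (fun v => affinor g₁ g₂ v m i) j u
      = -(∑ p, affinor g₁ g₂ u k m
            * (christoffel g₁ m p j u * affinor g₁ g₂ u p i))
        + ∑ p, affinor g₁ g₂ u k m
            * (affinor g₁ g₂ u m p * christoffel g₂ p i j u)
        + ∑ p, ∑ s, affinor g₁ g₂ u k m * (g₁ u m p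
            * ((christoffel g₂ s p j u - christoffel g₁ s p j u) * (g₂ u)⁻¹ s i)) := by
    intro m
    rw [pdv_affinor hd₁ hd₂ hdet₁ hdet₂ hsymm_ev₁ hsymm_ev₂ hsymm₁ hsymm₂ m i j]
    rw [mul_add, mul_add, mul_neg]
    simp only [Finset.mul_sum]
  rw [Finset.sum_congr rfl fun m _ => hper m]
  simp only [Finset.sum_add_distrib, Finset.sum_neg_distrib]

theorem Nexp
    (hd₁ : ∀ i j, DifferentiableAt ℝ (fun v => g₁ v i j) u)
    (hd₂ : ∀ i j, DifferentiableAt ℝ (fun v => g₂ v i j) u)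
    (hdet₁ : (g₁ u).det ≠ 0) (hdet₂ : (g₂ u).det ≠ 0)
    (hsymm_ev₁ : ∀ᶠ v in nhds u, (g₁ v).IsSymm)
    (hsymm_ev₂ : ∀ᶠ v in nhds u, (g₂ v).IsSymm)
    (hsymm₁ : (g₁ u).IsSymm) (hsymm₂ : (g₂ u).IsSymm) (k i j : Fin N) :
    nijenhuis (affinor g₁ g₂) k i j u
      = (∑ m, ∑ p, affinor g₁ g₂ u k p * (affinor g₁ g₂ u m i
            * (christoffel g₂ p j m u - christoffel g₁ p j m u)))
        - (∑ m, ∑ p, affinor g₁ g₂ u k p * (affinor g₁ g₂ u m j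
            * (christoffel g₂ p i m u - christoffel g₁ p i m u)))
        + ((∑ m, ∑ p, ∑ s, affinor g₁ g₂ u m i * (g₁ u k p
            * ((christoffel g₂ s p m u - christoffel g₁ s p m u) * (g₂ u)⁻¹ s j)))
          - ∑ m, ∑ p, ∑ s, affinor g₁ g₂ u m j * (g₁ u k p
            * ((christoffel g₂ s p m u - christoffel g₁ s p m u) * (g₂ u)⁻¹ s i)))
        + ((∑ m, ∑ p, ∑ s, affinor g₁ g₂ u k m * (g₁ u m p
            * ((christoffel g₂ s p j u - christoffel g₁ s p j u) * (g₂ u)⁻¹ s i)))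
          - ∑ m, ∑ p, ∑ s, affinor g₁ g₂ u k m * (g₁ u m p
            * ((christoffel g₂ s p i u - christoffel g₁ s p i u) * (g₂ u)⁻¹ s j))) := by
  have h0 : nijenhuis (affinor g₁ g₂) k i j u
      = (∑ m, affinor g₁ g₂ u m i * pdv (fun v => affinor g₁ g₂ v k j) m u)
        - (∑ m, affinor g₁ g₂ u m j * pdv (fun v => affinor g₁ g₂ v k i) m u)
        + (∑ m, affinor g₁ g₂ u k m * pdv (fun v => affinor g₁ g₂ v m i) j u)
        - (∑ m, affinor g₁ g₂ u k m * pdv (fun v => affinor g₁ g₂ v m j) i u) := by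
    unfold nijenhuis
    simp only [Finset.sum_add_distrib, Finset.sum_sub_distrib]
  rw [h0, NexpA hd₁ hd₂ hdet₁ hdet₂ hsymm_ev₁ hsymm_ev₂ hsymm₁ hsymm₂ k i j,
    NexpA hd₁ hd₂ hdet₁ hdet₂ hsymm_ev₁ hsymm_ev₂ hsymm₁ hsymm₂ k j i,
    NexpC hd₁ hd₂ hdet₁ hdet₂ hsymm_ev₁ hsymm_ev₂ hsymm₁ hsymm₂ k i j,
    NexpC hd₁ hd₂ hdet₁ hdet₂ hsymm_ev₁ hsymm_ev₂ hsymm₁ hsymm₂ k j i]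
  -- cancellation and merge facts
  have hA1B1 : ∑ m, ∑ p, affinor g₁ g₂ u m i
        * (christoffel g₁ k p m u * affinor g₁ g₂ u p j)
      = ∑ m, ∑ p, affinor g₁ g₂ u m j
        * (christoffel g₁ k p m u * affinor g₁ g₂ u p i) := by
    rw [Finset.sum_comm]
    refine Finset.sum_congr rfl fun m _ => Finset.sum_congr rfl fun p _ => ?_
    rw [christoffel_symm hsymm_ev₁ k p m]
    ring
  have hC2D2 : ∑ m, ∑ p, affinor g₁ g₂ u k m
        * (affinor g₁ g₂ u m p * christoffel g₂ p i j u)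
      = ∑ m, ∑ p, affinor g₁ g₂ u k m
        * (affinor g₁ g₂ u m p * christoffel g₂ p j i u) := by
    refine Finset.sum_congr rfl fun m _ => Finset.sum_congr rfl fun p _ => ?_
    rw [christoffel_symm hsymm_ev₂ p i j]
  have hT1 : ∑ m, ∑ p, affinor g₁ g₂ u m i
        * (affinor g₁ g₂ u k p * christoffel g₂ p j m u)
      - ∑ m, ∑ p, affinor g₁ g₂ u k m
        * (christoffel g₁ m p j u * affinor g₁ g₂ u p i)
      = ∑ m, ∑ p, affinor g₁ g₂ u k p * (affinor g₁ g₂ u m i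
            * (christoffel g₂ p j m u - christoffel g₁ p j m u)) := by
    have hc : ∑ m, ∑ p, affinor g₁ g₂ u k m
          * (christoffel g₁ m p j u * affinor g₁ g₂ u p i)
        = ∑ m, ∑ p, affinor g₁ g₂ u k p * (affinor g₁ g₂ u m i
            * christoffel g₁ p j m u) := by
      rw [Finset.sum_comm]
      refine Finset.sum_congr rfl fun m _ => Finset.sum_congr rfl fun p _ => ?_
      rw [christoffel_symm hsymm_ev₁ p m j]
      ring
    rw [hc, ← Finset.sum_sub_distrib]
    refine Finset.sum_congr rfl fun m _ => ?_
    rw [← Finset.sum_sub_distrib]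
    refine Finset.sum_congr rfl fun p _ => ?_
    ring
  have hT2 : ∑ m, ∑ p, affinor g₁ g₂ u m j
        * (affinor g₁ g₂ u k p * christoffel g₂ p i m u)
      - ∑ m, ∑ p, affinor g₁ g₂ u k m
        * (christoffel g₁ m p i u * affinor g₁ g₂ u p j)
      = ∑ m, ∑ p, affinor g₁ g₂ u k p * (affinor g₁ g₂ u m j
            * (christoffel g₂ p i m u - christoffel g₁ p i m u)) := by
    have hc : ∑ m, ∑ p, affinor g₁ g₂ u k m
          * (christoffel g₁ m p i u * affinor g₁ g₂ u p j)
        = ∑ m, ∑ p, affinor g₁ g₂ u k p * (affinor g₁ g₂ u m j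
            * christoffel g₁ p i m u) := by
      rw [Finset.sum_comm]
      refine Finset.sum_congr rfl fun m _ => Finset.sum_congr rfl fun p _ => ?_
      rw [christoffel_symm hsymm_ev₁ p m i]
      ring
    rw [hc, ← Finset.sum_sub_distrib]
    refine Finset.sum_congr rfl fun m _ => ?_
    rw [← Finset.sum_sub_distrib]
    refine Finset.sum_congr rfl fun p _ => ?_
    ring
  linarith [hA1B1, hC2D2, hT1, hT2]

end MNaux
namespace MNaux
variable {N : ℕ}

theorem sum3_rot (f : Fin N → Fin N → Fin N → ℝ) :
    (∑ m, ∑ s, ∑ q, f m s q) = ∑ s, ∑ q, ∑ m, f m s q := by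
  rw [Finset.sum_comm]
  exact Finset.sum_congr rfl fun s _ => Finset.sum_comm

theorem sum4_rev (f : Fin N → Fin N → Fin N → Fin N → ℝ) :
    (∑ i, ∑ j, ∑ m, ∑ p, f i j m p) = ∑ p, ∑ m, ∑ j, ∑ i, f i j m p := by
  calc (∑ i, ∑ j, ∑ m, ∑ p, f i j m p)
      = ∑ i, ∑ j, ∑ p, ∑ m, f i j m p :=
        Finset.sum_congr rfl fun i _ => Finset.sum_congr rfl fun j _ => Finset.sum_comm
    _ = ∑ i, ∑ p, ∑ j, ∑ m, f i j m p :=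
        Finset.sum_congr rfl fun i _ => Finset.sum_comm
    _ = ∑ p, ∑ i, ∑ j, ∑ m, f i j m p := Finset.sum_comm
    _ = ∑ p, ∑ i, ∑ m, ∑ j, f i j m p :=
        Finset.sum_congr rfl fun p _ => Finset.sum_congr rfl fun i _ => Finset.sum_comm
    _ = ∑ p, ∑ m, ∑ i, ∑ j, f i j m p :=
        Finset.sum_congr rfl fun p _ => Finset.sum_comm
    _ = ∑ p, ∑ m, ∑ j, ∑ i, f i j m p :=
        Finset.sum_congr rfl fun p _ => Finset.sum_congr rfl fun m _ => Finset.sum_comm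

theorem sum5_perm1 (f : Fin N → Fin N → Fin N → Fin N → Fin N → ℝ) :
    (∑ i, ∑ j, ∑ m, ∑ p, ∑ s, f i j m p s)
      = ∑ m, ∑ p, ∑ i, ∑ s, ∑ j, f i j m p s := by
  calc (∑ i, ∑ j, ∑ m, ∑ p, ∑ s, f i j m p s)
      = ∑ i, ∑ m, ∑ j, ∑ p, ∑ s, f i j m p s :=
        Finset.sum_congr rfl fun i _ => Finset.sum_comm
    _ = ∑ m, ∑ i, ∑ j, ∑ p, ∑ s, f i j m p s := Finset.sum_comm
    _ = ∑ m, ∑ i, ∑ p, ∑ j, ∑ s, f i j m p s :=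
        Finset.sum_congr rfl fun m _ => Finset.sum_congr rfl fun i _ => Finset.sum_comm
    _ = ∑ m, ∑ p, ∑ i, ∑ j, ∑ s, f i j m p s :=
        Finset.sum_congr rfl fun m _ => Finset.sum_comm
    _ = ∑ m, ∑ p, ∑ i, ∑ s, ∑ j, f i j m p s :=
        Finset.sum_congr rfl fun m _ => Finset.sum_congr rfl fun p _ =>
          Finset.sum_congr rfl fun i _ => Finset.sum_comm

theorem sum5_perm2 (f : Fin N → Fin N → Fin N → Fin N → Fin N → ℝ) :
    (∑ i, ∑ j, ∑ m, ∑ p, ∑ s, f i j m p s)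
      = ∑ m, ∑ p, ∑ j, ∑ s, ∑ i, f i j m p s := by
  calc (∑ i, ∑ j, ∑ m, ∑ p, ∑ s, f i j m p s)
      = ∑ i, ∑ m, ∑ j, ∑ p, ∑ s, f i j m p s :=
        Finset.sum_congr rfl fun i _ => Finset.sum_comm
    _ = ∑ m, ∑ i, ∑ j, ∑ p, ∑ s, f i j m p s := Finset.sum_comm
    _ = ∑ m, ∑ i, ∑ p, ∑ j, ∑ s, f i j m p s :=
        Finset.sum_congr rfl fun m _ => Finset.sum_congr rfl fun i _ => Finset.sum_comm
    _ = ∑ m, ∑ p, ∑ i, ∑ j, ∑ s, f i j m p s :=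
        Finset.sum_congr rfl fun m _ => Finset.sum_comm
    _ = ∑ m, ∑ p, ∑ j, ∑ i, ∑ s, f i j m p s :=
        Finset.sum_congr rfl fun m _ => Finset.sum_congr rfl fun p _ => Finset.sum_comm
    _ = ∑ m, ∑ p, ∑ j, ∑ s, ∑ i, f i j m p s :=
        Finset.sum_congr rfl fun m _ => Finset.sum_congr rfl fun p _ =>
          Finset.sum_congr rfl fun j _ => Finset.sum_comm

theorem keyAlg (G1 G2 B2 W : Matrix (Fin N) (Fin N) ℝ) (Δ : Fin N → Fin N → Fin N → ℝ)
    (hΔ : ∀ x y z, Δ x y z = Δ x z y)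
    (hG1s : ∀ i j, G1 i j = G1 j i)
    (hB2s : ∀ i j, B2 i j = B2 j i)
    (hG2B2 : G2 * B2 = 1)
    (hW : ∀ i j, W i j = ∑ t, G1 i t * B2 t j)
    (k a b : Fin N) :
    ∑ i, ∑ j, G2 a i * (G2 b j *
      ((∑ m, ∑ p, W k p * (W m i * Δ p j m))
        - (∑ m, ∑ p, W k p * (W m j * Δ p i m))
        + ((∑ m, ∑ p, ∑ s, W m i * (G1 k p * (Δ s p m * B2 s j)))
          - ∑ m, ∑ p, ∑ s, W m j * (G1 k p * (Δ s p m * B2 s i)))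
        + ((∑ m, ∑ p, ∑ s, W k m * (G1 m p * (Δ s p j * B2 s i)))
          - ∑ m, ∑ p, ∑ s, W k m * (G1 m p * (Δ s p i * B2 s j)))))
      = ∑ m, W k m *
          ((∑ s, ∑ q, (G1 a s * G2 m q - G1 m s * G2 a q) * Δ b s q)
            - (∑ s, ∑ q, (G1 b s * G2 m q - G1 m s * G2 b q) * Δ a s q)
            + ∑ s, ∑ q, (G1 a s * G2 b q - G1 b s * G2 a q) * Δ m s q) := by
  have hB2G2 : B2 * G2 = 1 := mul_eq_one_comm.1 hG2B2
  have hdel : ∀ x s, ∑ j, G2 x j * B2 s j = (1 : Matrix (Fin N) (Fin N) ℝ) x s := by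
    intro x s
    calc ∑ j, G2 x j * B2 s j = ∑ j, G2 x j * B2 j s :=
          Finset.sum_congr rfl fun j _ => by rw [hB2s s j]
      _ = (G2 * B2) x s := (Matrix.mul_apply).symm
      _ = (1 : Matrix (Fin N) (Fin N) ℝ) x s := by rw [hG2B2]
  have hone : ∀ (f : Fin N → ℝ) (x : Fin N),
      ∑ t, f t * (1 : Matrix (Fin N) (Fin N) ℝ) x t = f x := by
    intro f x
    simp [Matrix.one_apply, mul_ite, Finset.sum_ite_eq]
  have hGa : ∀ (x m : Fin N), G1 m x = ∑ i, G2 x i * W m i := by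
    intro x m
    symm
    calc ∑ i, G2 x i * W m i = ∑ i, G2 x i * ∑ t, G1 m t * B2 t i :=
          Finset.sum_congr rfl fun i _ => by rw [hW]
      _ = ∑ i, ∑ t, G2 x i * (G1 m t * B2 t i) :=
          Finset.sum_congr rfl fun i _ => Finset.mul_sum _ _ _
      _ = ∑ t, ∑ i, G2 x i * (G1 m t * B2 t i) := Finset.sum_comm
      _ = ∑ t, G1 m t * ∑ i, G2 x i * B2 t i := by
          refine Finset.sum_congr rfl fun t _ => ?_
          rw [Finset.mul_sum]
          exact Finset.sum_congr rfl fun i _ => by ring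
      _ = ∑ t, G1 m t * (1 : Matrix (Fin N) (Fin N) ℝ) x t :=
          Finset.sum_congr rfl fun t _ => by rw [hdel x t]
      _ = G1 m x := hone _ x
  have hvG2 : ∀ (x q : Fin N), G1 x q = ∑ m, W x m * G2 m q := by
    intro x q
    symm
    calc ∑ m, W x m * G2 m q = ∑ m, (∑ t, G1 x t * B2 t m) * G2 m q :=
          Finset.sum_congr rfl fun m _ => by rw [hW]
      _ = G1 x q := contract_sum_right hB2G2 (fun t => G1 x t) q
  have hins : ∀ (x s q : Fin N), Δ x s q = ∑ t, (∑ j, G2 x j * B2 t j) * Δ t s q := by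
    intro x s q
    symm
    calc ∑ t, (∑ j, G2 x j * B2 t j) * Δ t s q
        = ∑ t, (1 : Matrix (Fin N) (Fin N) ℝ) x t * Δ t s q :=
          Finset.sum_congr rfl fun t _ => by rw [hdel x t]
      _ = Δ x s q := one_apply_sum _ x
  have hperm4b : ∀ f : Fin N → Fin N → Fin N → Fin N → ℝ,
      (∑ i, ∑ j, ∑ m, ∑ p, f i j m p) = ∑ p, ∑ m, ∑ i, ∑ j, f i j m p := by
    intro f
    calc (∑ i, ∑ j, ∑ m, ∑ p, f i j m p)
        = ∑ i, ∑ j, ∑ p, ∑ m, f i j m p :=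
          Finset.sum_congr rfl fun i _ => Finset.sum_congr rfl fun j _ => Finset.sum_comm
      _ = ∑ i, ∑ p, ∑ j, ∑ m, f i j m p :=
          Finset.sum_congr rfl fun i _ => Finset.sum_comm
      _ = ∑ p, ∑ i, ∑ j, ∑ m, f i j m p := Finset.sum_comm
      _ = ∑ p, ∑ i, ∑ m, ∑ j, f i j m p :=
          Finset.sum_congr rfl fun p _ => Finset.sum_congr rfl fun i _ => Finset.sum_comm
      _ = ∑ p, ∑ m, ∑ i, ∑ j, f i j m p :=
          Finset.sum_congr rfl fun p _ => Finset.sum_comm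
  -- named pieces
  set Q1 := ∑ i, ∑ j, ∑ m, ∑ p, G2 a i * (G2 b j * (W k p * (W m i * Δ p j m))) with hQ1def
  set Q2 := ∑ i, ∑ j, ∑ m, ∑ p, G2 a i * (G2 b j * (W k p * (W m j * Δ p i m))) with hQ2def
  set Q3 := ∑ i, ∑ j, ∑ m, ∑ p, ∑ s,
      G2 a i * (G2 b j * (W m i * (G1 k p * (Δ s p m * B2 s j)))) with hQ3def
  set Q4 := ∑ i, ∑ j, ∑ m, ∑ p, ∑ s,
      G2 a i * (G2 b j * (W m j * (G1 k p * (Δ s p m * B2 s i)))) with hQ4def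
  set Q5 := ∑ i, ∑ j, ∑ m, ∑ p, ∑ s,
      G2 a i * (G2 b j * (W k m * (G1 m p * (Δ s p j * B2 s i)))) with hQ5def
  set Q6 := ∑ i, ∑ j, ∑ m, ∑ p, ∑ s,
      G2 a i * (G2 b j * (W k m * (G1 m p * (Δ s p i * B2 s j)))) with hQ6def
  set R1 := ∑ m, ∑ s, ∑ q, W k m * ((G1 a s * G2 m q) * Δ b s q) with hR1def
  set R2 := ∑ m, ∑ s, ∑ q, W k m * ((G1 m s * G2 a q) * Δ b s q) with hR2def
  set R3 := ∑ m, ∑ s, ∑ q, W k m * ((G1 b s * G2 m q) * Δ a s q) with hR3def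
  set R4 := ∑ m, ∑ s, ∑ q, W k m * ((G1 m s * G2 b q) * Δ a s q) with hR4def
  set R5 := ∑ m, ∑ s, ∑ q, W k m * ((G1 a s * G2 b q) * Δ m s q) with hR5def
  set R6 := ∑ m, ∑ s, ∑ q, W k m * ((G1 b s * G2 a q) * Δ m s q) with hR6def
  have hL : ∑ i, ∑ j, G2 a i * (G2 b j *
      ((∑ m, ∑ p, W k p * (W m i * Δ p j m))
        - (∑ m, ∑ p, W k p * (W m j * Δ p i m))
        + ((∑ m, ∑ p, ∑ s, W m i * (G1 k p * (Δ s p m * B2 s j)))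
          - ∑ m, ∑ p, ∑ s, W m j * (G1 k p * (Δ s p m * B2 s i)))
        + ((∑ m, ∑ p, ∑ s, W k m * (G1 m p * (Δ s p j * B2 s i)))
          - ∑ m, ∑ p, ∑ s, W k m * (G1 m p * (Δ s p i * B2 s j)))))
      = Q1 - Q2 + (Q3 - Q4) + (Q5 - Q6) := by
    rw [hQ1def, hQ2def, hQ3def, hQ4def, hQ5def, hQ6def]
    calc ∑ i, ∑ j, G2 a i * (G2 b j *
        ((∑ m, ∑ p, W k p * (W m i * Δ p j m))
          - (∑ m, ∑ p, W k p * (W m j * Δ p i m))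
          + ((∑ m, ∑ p, ∑ s, W m i * (G1 k p * (Δ s p m * B2 s j)))
            - ∑ m, ∑ p, ∑ s, W m j * (G1 k p * (Δ s p m * B2 s i)))
          + ((∑ m, ∑ p, ∑ s, W k m * (G1 m p * (Δ s p j * B2 s i)))
            - ∑ m, ∑ p, ∑ s, W k m * (G1 m p * (Δ s p i * B2 s j)))))
        = ∑ i, ∑ j,
            (G2 a i * (G2 b j * (∑ m, ∑ p, W k p * (W m i * Δ p j m)))
            - G2 a i * (G2 b j * (∑ m, ∑ p, W k p * (W m j * Δ p i m)))
            + (G2 a i * (G2 b j * (∑ m, ∑ p, ∑ s, W m i * (G1 k p * (Δ s p m * B2 s j))))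
              - G2 a i * (G2 b j * (∑ m, ∑ p, ∑ s, W m j * (G1 k p * (Δ s p m * B2 s i)))))
            + (G2 a i * (G2 b j * (∑ m, ∑ p, ∑ s, W k m * (G1 m p * (Δ s p j * B2 s i))))
              - G2 a i * (G2 b j * (∑ m, ∑ p, ∑ s, W k m * (G1 m p * (Δ s p i * B2 s j)))))) :=
          Finset.sum_congr rfl fun i _ => Finset.sum_congr rfl fun j _ => by ring
      _ = _ := by
          simp only [Finset.sum_add_distrib, Finset.sum_sub_distrib, Finset.mul_sum]
  have hR : ∑ m, W k m *
        ((∑ s, ∑ q, (G1 a s * G2 m q - G1 m s * G2 a q) * Δ b s q)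
          - (∑ s, ∑ q, (G1 b s * G2 m q - G1 m s * G2 b q) * Δ a s q)
          + ∑ s, ∑ q, (G1 a s * G2 b q - G1 b s * G2 a q) * Δ m s q)
      = R1 - R2 - (R3 - R4) + (R5 - R6) := by
    rw [hR1def, hR2def, hR3def, hR4def, hR5def, hR6def]
    calc ∑ m, W k m *
          ((∑ s, ∑ q, (G1 a s * G2 m q - G1 m s * G2 a q) * Δ b s q)
            - (∑ s, ∑ q, (G1 b s * G2 m q - G1 m s * G2 b q) * Δ a s q)
            + ∑ s, ∑ q, (G1 a s * G2 b q - G1 b s * G2 a q) * Δ m s q)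
        = ∑ m, ∑ s, ∑ q,
            (W k m * ((G1 a s * G2 m q) * Δ b s q)
              - W k m * ((G1 m s * G2 a q) * Δ b s q)
              - (W k m * ((G1 b s * G2 m q) * Δ a s q)
                - W k m * ((G1 m s * G2 b q) * Δ a s q))
              + (W k m * ((G1 a s * G2 b q) * Δ m s q)
                - W k m * ((G1 b s * G2 a q) * Δ m s q))) := by
          refine Finset.sum_congr rfl fun m _ => ?_
          rw [mul_add, mul_sub]
          simp only [Finset.mul_sum]
          simp only [← Finset.sum_sub_distrib, ← Finset.sum_add_distrib]
          refine Finset.sum_congr rfl fun s _ => Finset.sum_congr rfl fun q _ => ?_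
          ring
      _ = _ := by
          simp only [Finset.sum_add_distrib, Finset.sum_sub_distrib]
  have hQ1R5 : Q1 = R5 := by
    rw [hQ1def, hR5def]
    have h5 : (∑ m, ∑ s, ∑ q, W k m * ((G1 a s * G2 b q) * Δ m s q))
        = ∑ m, ∑ s, ∑ q, ∑ i, W k m * ((G2 a i * W s i) * (G2 b q * Δ m s q)) := by
      refine Finset.sum_congr rfl fun m _ => Finset.sum_congr rfl fun s _ =>
        Finset.sum_congr rfl fun q _ => ?_
      rw [hG1s a s, hGa a s, Finset.sum_mul, Finset.sum_mul, Finset.mul_sum]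
      all_goals exact Finset.sum_congr rfl fun i _ => by ring
    rw [h5, sum4_rev]
    refine Finset.sum_congr rfl fun p _ => Finset.sum_congr rfl fun m _ =>
      Finset.sum_congr rfl fun j _ => Finset.sum_congr rfl fun i _ => ?_
    rw [hΔ p j m]
    ring
  have hQ2R6 : Q2 = R6 := by
    rw [hQ2def, hR6def]
    have h6 : (∑ m, ∑ s, ∑ q, W k m * ((G1 b s * G2 a q) * Δ m s q))
        = ∑ m, ∑ s, ∑ q, ∑ j, W k m * ((G2 b j * W s j) * (G2 a q * Δ m s q)) := by
      refine Finset.sum_congr rfl fun m _ => Finset.sum_congr rfl fun s _ =>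
        Finset.sum_congr rfl fun q _ => ?_
      rw [hG1s b s, hGa b s, Finset.sum_mul, Finset.sum_mul, Finset.mul_sum]
      all_goals exact Finset.sum_congr rfl fun j _ => by ring
    rw [h6, hperm4b]
    refine Finset.sum_congr rfl fun p _ => Finset.sum_congr rfl fun m _ =>
      Finset.sum_congr rfl fun i _ => Finset.sum_congr rfl fun j _ => ?_
    rw [hΔ p i m]
    ring
  have hQ3n3 : Q3 = ∑ s, ∑ q, G1 a s * (G1 k q * Δ b s q) := by
    rw [hQ3def, sum5_perm1]
    symm
    calc (∑ s, ∑ q, G1 a s * (G1 k q * Δ b s q))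
        = ∑ m, ∑ p, ∑ i, ∑ s, ∑ j,
            (G2 a i * W m i) * (G1 k p * ((G2 b j * B2 s j) * Δ s m p)) := by
          refine Finset.sum_congr rfl fun m _ => Finset.sum_congr rfl fun p _ => ?_
          rw [hG1s a m, hGa a m, hins b m p, Finset.sum_mul]
          all_goals refine Finset.sum_congr rfl fun i _ => ?_
          all_goals rw [Finset.mul_sum, Finset.mul_sum]
          all_goals refine Finset.sum_congr rfl fun s _ => ?_
          all_goals rw [Finset.sum_mul, Finset.mul_sum, Finset.mul_sum]
          all_goals refine Finset.sum_congr rfl fun j _ => ?_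
          all_goals ring
      _ = _ := by
          refine Finset.sum_congr rfl fun m _ => Finset.sum_congr rfl fun p _ =>
            Finset.sum_congr rfl fun i _ => Finset.sum_congr rfl fun s _ =>
            Finset.sum_congr rfl fun j _ => ?_
          rw [hΔ s m p]
          ring
  have hQ4n4 : Q4 = ∑ s, ∑ q, G1 b s * (G1 k q * Δ a s q) := by
    rw [hQ4def, sum5_perm2]
    symm
    calc (∑ s, ∑ q, G1 b s * (G1 k q * Δ a s q))
        = ∑ m, ∑ p, ∑ j, ∑ s, ∑ i,
            (G2 b j * W m j) * (G1 k p * ((G2 a i * B2 s i) * Δ s m p)) := by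
          refine Finset.sum_congr rfl fun m _ => Finset.sum_congr rfl fun p _ => ?_
          rw [hG1s b m, hGa b m, hins a m p, Finset.sum_mul]
          all_goals refine Finset.sum_congr rfl fun j _ => ?_
          all_goals rw [Finset.mul_sum, Finset.mul_sum]
          all_goals refine Finset.sum_congr rfl fun s _ => ?_
          all_goals rw [Finset.sum_mul, Finset.mul_sum, Finset.mul_sum]
          all_goals refine Finset.sum_congr rfl fun i _ => ?_
          all_goals ring
      _ = _ := by
          refine Finset.sum_congr rfl fun m _ => Finset.sum_congr rfl fun p _ =>
            Finset.sum_congr rfl fun j _ => Finset.sum_congr rfl fun s _ =>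
            Finset.sum_congr rfl fun i _ => ?_
          rw [hΔ s m p]
          ring
  have hR1n3 : R1 = ∑ s, ∑ q, G1 a s * (G1 k q * Δ b s q) := by
    rw [hR1def, sum3_rot]
    symm
    calc (∑ s, ∑ q, G1 a s * (G1 k q * Δ b s q))
        = ∑ s, ∑ q, ∑ m, G1 a s * ((W k m * G2 m q) * Δ b s q) := by
          refine Finset.sum_congr rfl fun s _ => Finset.sum_congr rfl fun q _ => ?_
          rw [hvG2 k q, Finset.sum_mul, Finset.mul_sum]
          all_goals exact Finset.sum_congr rfl fun m _ => by ring
      _ = _ := by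
          refine Finset.sum_congr rfl fun s _ => Finset.sum_congr rfl fun q _ =>
            Finset.sum_congr rfl fun m _ => ?_
          ring
  have hR3n4 : R3 = ∑ s, ∑ q, G1 b s * (G1 k q * Δ a s q) := by
    rw [hR3def, sum3_rot]
    symm
    calc (∑ s, ∑ q, G1 b s * (G1 k q * Δ a s q))
        = ∑ s, ∑ q, ∑ m, G1 b s * ((W k m * G2 m q) * Δ a s q) := by
          refine Finset.sum_congr rfl fun s _ => Finset.sum_congr rfl fun q _ => ?_
          rw [hvG2 k q, Finset.sum_mul, Finset.mul_sum]
          all_goals exact Finset.sum_congr rfl fun m _ => by ring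
      _ = _ := by
          refine Finset.sum_congr rfl fun s _ => Finset.sum_congr rfl fun q _ =>
            Finset.sum_congr rfl fun m _ => ?_
          ring
  have hQ5R4 : Q5 = R4 := by
    rw [hQ5def, hR4def, sum5_perm2]
    symm
    calc (∑ m, ∑ s, ∑ q, W k m * ((G1 m s * G2 b q) * Δ a s q))
        = ∑ m, ∑ s, ∑ q, ∑ t, ∑ i,
            W k m * ((G1 m s * G2 b q) * ((G2 a i * B2 t i) * Δ t s q)) := by
          refine Finset.sum_congr rfl fun m _ => Finset.sum_congr rfl fun s _ =>
            Finset.sum_congr rfl fun q _ => ?_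
          rw [hins a s q, Finset.mul_sum, Finset.mul_sum]
          all_goals refine Finset.sum_congr rfl fun t _ => ?_
          all_goals rw [Finset.sum_mul, Finset.mul_sum, Finset.mul_sum]
          all_goals refine Finset.sum_congr rfl fun i _ => ?_
          all_goals ring
      _ = _ := by
          refine Finset.sum_congr rfl fun m _ => Finset.sum_congr rfl fun p _ =>
            Finset.sum_congr rfl fun j _ => Finset.sum_congr rfl fun s _ =>
            Finset.sum_congr rfl fun i _ => ?_
          ring
  have hQ6R2 : Q6 = R2 := by
    rw [hQ6def, hR2def, sum5_perm1]
    symm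
    calc (∑ m, ∑ s, ∑ q, W k m * ((G1 m s * G2 a q) * Δ b s q))
        = ∑ m, ∑ s, ∑ q, ∑ t, ∑ j,
            W k m * ((G1 m s * G2 a q) * ((G2 b j * B2 t j) * Δ t s q)) := by
          refine Finset.sum_congr rfl fun m _ => Finset.sum_congr rfl fun s _ =>
            Finset.sum_congr rfl fun q _ => ?_
          rw [hins b s q, Finset.mul_sum, Finset.mul_sum]
          all_goals refine Finset.sum_congr rfl fun t _ => ?_
          all_goals rw [Finset.sum_mul, Finset.mul_sum, Finset.mul_sum]
          all_goals refine Finset.sum_congr rfl fun j _ => ?_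
          all_goals ring
      _ = _ := by
          refine Finset.sum_congr rfl fun m _ => Finset.sum_congr rfl fun p _ =>
            Finset.sum_congr rfl fun i _ => Finset.sum_congr rfl fun s _ =>
            Finset.sum_congr rfl fun j _ => ?_
          ring
  rw [hL, hR]
  linarith [hQ1R5, hQ2R6, hQ3n3, hQ4n4, hR1n3, hR3n4, hQ5R4, hQ6R2]

end MNaux
namespace MNaux
variable {N : ℕ} {g₁ g₂ : (Fin N → ℝ) → Matrix (Fin N) (Fin N) ℝ} {u : Fin N → ℝ}

theorem sum_exchange (X Y : Fin N → ℝ) (W : Fin N → Fin N → ℝ) :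
    ∑ b, X b * ∑ i, Y i * W i b = ∑ i, Y i * ∑ b, X b * W i b := by
  calc ∑ b, X b * ∑ i, Y i * W i b
      = ∑ b, ∑ i, X b * (Y i * W i b) :=
        Finset.sum_congr rfl fun b _ => Finset.mul_sum _ _ _
    _ = ∑ i, ∑ b, X b * (Y i * W i b) := Finset.sum_comm
    _ = ∑ i, Y i * ∑ b, X b * W i b := by
        refine Finset.sum_congr rfl fun i _ => ?_
        rw [Finset.mul_sum]
        exact Finset.sum_congr rfl fun b _ => by ring

theorem KeyV
    (hd₁ : ∀ i j, DifferentiableAt ℝ (fun v => g₁ v i j) u)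
    (hd₂ : ∀ i j, DifferentiableAt ℝ (fun v => g₂ v i j) u)
    (hdet₁ : (g₁ u).det ≠ 0) (hdet₂ : (g₂ u).det ≠ 0)
    (hsymm_ev₁ : ∀ᶠ v in nhds u, (g₁ v).IsSymm)
    (hsymm_ev₂ : ∀ᶠ v in nhds u, (g₂ v).IsSymm)
    (hsymm₁ : (g₁ u).IsSymm) (hsymm₂ : (g₂ u).IsSymm) (k a b : Fin N) :
    ∑ i, ∑ j, g₂ u a i * (g₂ u b j * nijenhuis (affinor g₁ g₂) k i j u)
      = ∑ m, affinor g₁ g₂ u k m * (Mtensor g₁ g₂ a m b u - Mtensor g₁ g₂ b m a u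
          + Mtensor g₁ g₂ a b m u) := by
  have hkey := keyAlg (g₁ u) (g₂ u) ((g₂ u)⁻¹) (affinor g₁ g₂ u)
    (fun x y z => christoffel g₂ x y z u - christoffel g₁ x y z u)
    (fun x y z => by
      show christoffel g₂ x y z u - christoffel g₁ x y z u = christoffel g₂ x z y u - christoffel g₁ x z y u
      rw [christoffel_symm hsymm_ev₂ x y z, christoffel_symm hsymm_ev₁ x y z])
    (fun i j => hsymm₁.apply j i)
    (fun i j => inv_symm_entry hsymm₂ i j)
    (Matrix.mul_nonsing_inv _ (isUnit_iff_ne_zero.2 hdet₂))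
    (fun i j => affinor_apply u i j)
    k a b
  calc ∑ i, ∑ j, g₂ u a i * (g₂ u b j * nijenhuis (affinor g₁ g₂) k i j u)
      = ∑ i, ∑ j, g₂ u a i * (g₂ u b j *
          ((∑ m, ∑ p, affinor g₁ g₂ u k p * (affinor g₁ g₂ u m i
              * (christoffel g₂ p j m u - christoffel g₁ p j m u)))
            - (∑ m, ∑ p, affinor g₁ g₂ u k p * (affinor g₁ g₂ u m j
              * (christoffel g₂ p i m u - christoffel g₁ p i m u)))
            + ((∑ m, ∑ p, ∑ s, affinor g₁ g₂ u m i * (g₁ u k p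
              * ((christoffel g₂ s p m u - christoffel g₁ s p m u) * (g₂ u)⁻¹ s j)))
              - ∑ m, ∑ p, ∑ s, affinor g₁ g₂ u m j * (g₁ u k p
              * ((christoffel g₂ s p m u - christoffel g₁ s p m u) * (g₂ u)⁻¹ s i)))
            + ((∑ m, ∑ p, ∑ s, affinor g₁ g₂ u k m * (g₁ u m p
              * ((christoffel g₂ s p j u - christoffel g₁ s p j u) * (g₂ u)⁻¹ s i)))
              - ∑ m, ∑ p, ∑ s, affinor g₁ g₂ u k m * (g₁ u m p
              * ((christoffel g₂ s p i u - christoffel g₁ s p i u) * (g₂ u)⁻¹ s j))))) := by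
        refine Finset.sum_congr rfl fun i _ => Finset.sum_congr rfl fun j _ => ?_
        rw [Nexp hd₁ hd₂ hdet₁ hdet₂ hsymm_ev₁ hsymm_ev₂ hsymm₁ hsymm₂ k i j]
    _ = ∑ m, affinor g₁ g₂ u k m *
          ((∑ s, ∑ q, (g₁ u a s * g₂ u m q - g₁ u m s * g₂ u a q)
              * (christoffel g₂ b s q u - christoffel g₁ b s q u))
            - (∑ s, ∑ q, (g₁ u b s * g₂ u m q - g₁ u m s * g₂ u b q)
              * (christoffel g₂ a s q u - christoffel g₁ a s q u))
            + ∑ s, ∑ q, (g₁ u a s * g₂ u b q - g₁ u b s * g₂ u a q)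
              * (christoffel g₂ m s q u - christoffel g₁ m s q u)) := hkey
    _ = ∑ m, affinor g₁ g₂ u k m * (Mtensor g₁ g₂ a m b u - Mtensor g₁ g₂ b m a u
          + Mtensor g₁ g₂ a b m u) := by
        refine Finset.sum_congr rfl fun m _ => ?_
        rw [Mexp (g₁ := g₁) hsymm_ev₂ a m b, Mexp (g₁ := g₁) hsymm_ev₂ b m a,
          Mexp (g₁ := g₁) hsymm_ev₂ a b m]

theorem Mtensor_antisymm (i j k : Fin N) :
    Mtensor g₁ g₂ j i k u = -Mtensor g₁ g₂ i j k u := by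
  unfold Mtensor
  rw [← Finset.sum_neg_distrib]
  exact Finset.sum_congr rfl fun s _ => by ring

end MNaux


/-- the tensor `M^{ijk}` vanishes identically iff the Nijenhuis tensor
of the affinor vanishes identically. -/
theorem Mtensor_vanishes_iff_nijenhuis_vanishes {N : ℕ}
    (U : Set (Fin N → ℝ)) (hU : IsOpen U)
    (g₁ g₂ : (Fin N → ℝ) → Matrix (Fin N) (Fin N) ℝ)
    (hg₁ : IsMetricOn U g₁) (hg₂ : IsMetricOn U g₂) :
    (∀ u ∈ U, ∀ i j k, Mtensor g₁ g₂ i j k u = 0) ↔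
      ∀ u ∈ U, ∀ k i j, nijenhuis (affinor g₁ g₂) k i j u = 0 := by
  obtain ⟨hc₁, hs₁, hdet₁⟩ := hg₁
  obtain ⟨hc₂, hs₂, hdet₂⟩ := hg₂
  constructor
  · intro hM u hu k i j
    have hUnhds : U ∈ nhds u := hU.mem_nhds hu
    have hd₁ : ∀ i j, DifferentiableAt ℝ (fun v => g₁ v i j) u := fun i j =>
      ((hc₁ i j).contDiffAt hUnhds).differentiableAt (by simp)
    have hd₂ : ∀ i j, DifferentiableAt ℝ (fun v => g₂ v i j) u := fun i j =>
      ((hc₂ i j).contDiffAt hUnhds).differentiableAt (by simp)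
    have hse₁ : ∀ᶠ v in nhds u, (g₁ v).IsSymm :=
      Filter.eventually_of_mem hUnhds fun v hv => hs₁ v hv
    have hse₂ : ∀ᶠ v in nhds u, (g₂ v).IsSymm :=
      Filter.eventually_of_mem hUnhds fun v hv => hs₂ v hv
    have hkey := MNaux.KeyV hd₁ hd₂ (hdet₁ u hu) (hdet₂ u hu) hse₁ hse₂
      (hs₁ u hu) (hs₂ u hu)
    have hz : ∀ a b, ∑ i', ∑ j', g₂ u a i' * (g₂ u b j'
        * nijenhuis (affinor g₁ g₂) k i' j' u) = 0 := by
      intro a b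
      rw [hkey k a b]
      refine Finset.sum_eq_zero fun m _ => ?_
      rw [hM u hu a m b, hM u hu b m a, hM u hu a b m]
      ring
    have hB2G2 : (g₂ u)⁻¹ * g₂ u = 1 :=
      Matrix.nonsing_inv_mul _ (isUnit_iff_ne_zero.2 (hdet₂ u hu))
    have hcol : ∀ (h : Fin N → ℝ) (x : Fin N),
        ∑ a, (g₂ u)⁻¹ x a * ∑ i', g₂ u a i' * h i' = h x :=
      fun h x => MNaux.contract_sum hB2G2 h x
    have hfold : ∀ a b, ∑ i', g₂ u a i' * ∑ j', g₂ u b j'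
        * nijenhuis (affinor g₁ g₂) k i' j' u = 0 := by
      intro a b
      rw [← hz a b]
      exact Finset.sum_congr rfl fun i' _ => Finset.mul_sum _ _ _
    calc nijenhuis (affinor g₁ g₂) k i j u
        = ∑ a, (g₂ u)⁻¹ i a * ∑ i', g₂ u a i'
            * nijenhuis (affinor g₁ g₂) k i' j u :=
          (hcol (fun t => nijenhuis (affinor g₁ g₂) k t j u) i).symm
      _ = ∑ a, (g₂ u)⁻¹ i a * ∑ i', g₂ u a i'
            * (∑ b, (g₂ u)⁻¹ j b * ∑ j', g₂ u b j'
              * nijenhuis (affinor g₁ g₂) k i' j' u) := by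
          refine Finset.sum_congr rfl fun a _ => ?_
          congr 1
          refine Finset.sum_congr rfl fun i' _ => ?_
          congr 1
          exact (hcol (fun t => nijenhuis (affinor g₁ g₂) k i' t u) j).symm
      _ = ∑ a, (g₂ u)⁻¹ i a * ∑ b, (g₂ u)⁻¹ j b * (∑ i', g₂ u a i'
            * ∑ j', g₂ u b j' * nijenhuis (affinor g₁ g₂) k i' j' u) := by
          refine Finset.sum_congr rfl fun a _ => ?_
          congr 1
          exact (MNaux.sum_exchange (fun b => (g₂ u)⁻¹ j b) (fun i' => g₂ u a i')
            (fun i' b => ∑ j', g₂ u b j' * nijenhuis (affinor g₁ g₂) k i' j' u)).symm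
      _ = 0 := by
          refine Finset.sum_eq_zero fun a _ => ?_
          have hzero : ∑ b, (g₂ u)⁻¹ j b * (∑ i', g₂ u a i'
              * ∑ j', g₂ u b j' * nijenhuis (affinor g₁ g₂) k i' j' u) = 0 :=
            Finset.sum_eq_zero fun b _ => by rw [hfold a b, mul_zero]
          rw [hzero, mul_zero]
  · intro hN u hu i j k
    have hUnhds : U ∈ nhds u := hU.mem_nhds hu
    have hd₁ : ∀ i j, DifferentiableAt ℝ (fun v => g₁ v i j) u := fun i j =>
      ((hc₁ i j).contDiffAt hUnhds).differentiableAt (by simp)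
    have hd₂ : ∀ i j, DifferentiableAt ℝ (fun v => g₂ v i j) u := fun i j =>
      ((hc₂ i j).contDiffAt hUnhds).differentiableAt (by simp)
    have hse₁ : ∀ᶠ v in nhds u, (g₁ v).IsSymm :=
      Filter.eventually_of_mem hUnhds fun v hv => hs₁ v hv
    have hse₂ : ∀ᶠ v in nhds u, (g₂ v).IsSymm :=
      Filter.eventually_of_mem hUnhds fun v hv => hs₂ v hv
    have hkey := MNaux.KeyV hd₁ hd₂ (hdet₁ u hu) (hdet₂ u hu) hse₁ hse₂
      (hs₁ u hu) (hs₂ u hu)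
    have hz : ∀ k' a b, ∑ m, affinor g₁ g₂ u k' m * (Mtensor g₁ g₂ a m b u
        - Mtensor g₁ g₂ b m a u + Mtensor g₁ g₂ a b m u) = 0 := by
      intro k' a b
      rw [← hkey k' a b]
      refine Finset.sum_eq_zero fun i' _ => Finset.sum_eq_zero fun j' _ => ?_
      rw [hN u hu k' i' j', mul_zero, mul_zero]
    have hw'w : (g₂ u * (g₁ u)⁻¹) * affinor g₁ g₂ u = 1 := by
      show (g₂ u * (g₁ u)⁻¹) * (g₁ u * (g₂ u)⁻¹) = 1
      rw [Matrix.mul_assoc, ← Matrix.mul_assoc ((g₁ u)⁻¹) (g₁ u) ((g₂ u)⁻¹),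
        Matrix.nonsing_inv_mul _ (isUnit_iff_ne_zero.2 (hdet₁ u hu)), Matrix.one_mul,
        Matrix.mul_nonsing_inv _ (isUnit_iff_ne_zero.2 (hdet₂ u hu))]
    have hT : ∀ a b c, Mtensor g₁ g₂ a c b u - Mtensor g₁ g₂ b c a u
        + Mtensor g₁ g₂ a b c u = 0 := by
      intro a b c
      have hcontr := MNaux.contract_sum hw'w
        (fun m => Mtensor g₁ g₂ a m b u - Mtensor g₁ g₂ b m a u
          + Mtensor g₁ g₂ a b m u) c
      rw [← hcontr]
      refine Finset.sum_eq_zero fun k' _ => ?_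
      rw [hz k' a b, mul_zero]
    have hanti : ∀ x y z, Mtensor g₁ g₂ y x z u = -Mtensor g₁ g₂ x y z u :=
      fun x y z => MNaux.Mtensor_antisymm x y z
    linarith [hT i j k, hT j k i, hT k i j, hT i k j, hT j i k, hT k j i,
      hanti i j k, hanti j k i, hanti k i j, hanti i k j, hanti j i k, hanti k j i]
end

section
/- Let a : U → ℝ be a nonconstant harmonic function on a connected open set U ⊆ ℝ² (i.e., ∂²a/∂(u¹)² + ∂²a/∂(u²)² = 0 and a is not constant). Then the flat metrics g₁^{ij}(u) = exp(a(u))δ^{ij} and g₂^{ij}(u) = δ^{ij} are almost compatible (the Nijenhuis tensor of the affinor v^i_j(u) = g₁^{is}(u)g_{2,sj}(u) vanishes identically) but they are NOT compatible. -/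
open Matrix

-- ## auxiliary lemmas

lemma hasFDerivAt_inv_comp {N : ℕ} {c : (Fin N → ℝ) → ℝ} {d : (Fin N → ℝ) →L[ℝ] ℝ}
    {x : Fin N → ℝ} (h : HasFDerivAt c d x) (hx : c x ≠ 0) :
    HasFDerivAt (fun y => (c y)⁻¹) (-((c x) ^ 2)⁻¹ • d) x := by
  have h2 := (hasFDerivAt_inv hx).comp x h
  refine h2.congr_fderiv ?_
  ext w
  simp [ContinuousLinearMap.smulRight]
  ring

lemma pdv_hasFDerivAt {N : ℕ} {f : (Fin N → ℝ) → ℝ} {L : (Fin N → ℝ) →L[ℝ] ℝ}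
    {u : Fin N → ℝ} (h : HasFDerivAt f L u) (s : Fin N) :
    pdv f s u = L (Pi.single s 1) := by
  rw [pdv, h.fderiv]

lemma pdv_congr_nhds {N : ℕ} {f g : (Fin N → ℝ) → ℝ} {u : Fin N → ℝ}
    (h : f =ᶠ[nhds u] g) (s : Fin N) : pdv f s u = pdv g s u := by
  rw [pdv, pdv, h.fderiv_eq]

lemma diag_inv (c : ℝ) :
    (Matrix.diagonal (fun _ : Fin 2 => c))⁻¹ = Matrix.diagonal (fun _ => c⁻¹) := by
  rcases eq_or_ne c 0 with rfl | hc
  · rw [show (Matrix.diagonal fun _ : Fin 2 => (0:ℝ)) = 0 from Matrix.diagonal_zero]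
    simp [Matrix.nonsing_inv_apply_not_isUnit]
  · apply Matrix.inv_eq_right_inv
    rw [Matrix.diagonal_mul_diagonal]
    simp [mul_inv_cancel₀ hc]

lemma christoffel_diag {F : (Fin 2 → ℝ) → ℝ} {v : Fin 2 → ℝ} {D : (Fin 2 → ℝ) →L[ℝ] ℝ}
    (hF : HasFDerivAt F D v) (hFv : F v ≠ 0) (i j k : Fin 2) :
    christoffel (fun w => Matrix.diagonal fun _ => F w) i j k v =
      -(1/2) * (F v)⁻¹ * ((if i = k then 1 else 0) * D (Pi.single j 1)
        + (if i = j then 1 else 0) * D (Pi.single k 1)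
        - (if j = k then 1 else 0) * D (Pi.single i 1)) := by
  have hpdv : ∀ (s k m : Fin 2), pdv (fun w => (Matrix.diagonal fun _ : Fin 2 => F w)⁻¹ s k) m v
      = (if s = k then 1 else 0) * (-((F v) ^ 2)⁻¹ * D (Pi.single m 1)) := by
    intro s k m
    by_cases h : s = k
    · have hf2 : (fun w => (Matrix.diagonal fun _ : Fin 2 => F w)⁻¹ s k) = fun w => (F w)⁻¹ := by
        funext w; rw [diag_inv, Matrix.diagonal_apply, if_pos h]
      rw [hf2, pdv_hasFDerivAt (hasFDerivAt_inv_comp hF hFv), if_pos h]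
      simp
    · have hf2 : (fun w => (Matrix.diagonal fun _ : Fin 2 => F w)⁻¹ s k) = fun _ => (0:ℝ) := by
        funext w; rw [diag_inv, Matrix.diagonal_apply, if_neg h]
      rw [hf2, if_neg h, pdv, fderiv_fun_const]
      simp
  have hFsq : F v * ((F v) ^ 2)⁻¹ = (F v)⁻¹ := by
    field_simp
  rw [christoffel]
  simp only [hpdv, Matrix.diagonal_apply, Fin.sum_univ_two]
  fin_cases i <;> fin_cases j <;> fin_cases k <;> simp <;> (try field_simp) <;> (try ring)

lemma christoffelCon_diag {F : (Fin 2 → ℝ) → ℝ} {v : Fin 2 → ℝ} {D : (Fin 2 → ℝ) →L[ℝ] ℝ}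
    (hF : HasFDerivAt F D v) (hFv : F v ≠ 0) (i j k : Fin 2) :
    christoffelCon (fun w => Matrix.diagonal fun _ => F w) i j k v =
      -(1/2) * ((if j = k then 1 else 0) * D (Pi.single i 1)
        + (if i = j then 1 else 0) * D (Pi.single k 1)
        - (if i = k then 1 else 0) * D (Pi.single j 1)) := by
  have h1 : F v * (F v)⁻¹ = 1 := mul_inv_cancel₀ hFv
  rw [christoffelCon]
  simp only [Matrix.diagonal_apply, Fin.sum_univ_two, christoffel_diag hF hFv]
  fin_cases i <;> fin_cases j <;> fin_cases k <;> simp <;> (try field_simp) <;> (try ring)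

lemma hasFDerivAt_F {a : (Fin 2 → ℝ) → ℝ} {v : Fin 2 → ℝ} (c₁ c₂ : ℝ)
    (hd : DifferentiableAt ℝ a v) :
    HasFDerivAt (fun w => c₁ * Real.exp (a w) + c₂)
      ((c₁ * Real.exp (a v)) • fderiv ℝ a v) v := by
  have h := (hd.hasFDerivAt.exp.const_mul c₁).add_const c₂
  rw [← smul_smul]
  exact h

lemma christoffel_conformal {a : (Fin 2 → ℝ) → ℝ} {v : Fin 2 → ℝ} (c₁ c₂ : ℝ)
    (hd : DifferentiableAt ℝ a v) (hFv : c₁ * Real.exp (a v) + c₂ ≠ 0) (i j k : Fin 2) :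
    christoffel (fun w => Matrix.diagonal fun _ => c₁ * Real.exp (a w) + c₂) i j k v =
      -(1/2) * (c₁ * Real.exp (a v) + c₂)⁻¹ * (c₁ * Real.exp (a v)) *
        ((if i = k then 1 else 0) * pdv a j v + (if i = j then 1 else 0) * pdv a k v
          - (if j = k then 1 else 0) * pdv a i v) := by
  rw [christoffel_diag (hasFDerivAt_F c₁ c₂ hd) hFv]
  simp only [ContinuousLinearMap.smul_apply, smul_eq_mul, pdv]
  ring

lemma christoffelCon_conformal {a : (Fin 2 → ℝ) → ℝ} {v : Fin 2 → ℝ} (c₁ c₂ : ℝ)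
    (hd : DifferentiableAt ℝ a v) (hFv : c₁ * Real.exp (a v) + c₂ ≠ 0) (i j k : Fin 2) :
    christoffelCon (fun w => Matrix.diagonal fun _ => c₁ * Real.exp (a w) + c₂) i j k v =
      -(1/2) * (c₁ * Real.exp (a v)) *
        ((if j = k then 1 else 0) * pdv a i v + (if i = j then 1 else 0) * pdv a k v
          - (if i = k then 1 else 0) * pdv a j v) := by
  rw [christoffelCon_diag (hasFDerivAt_F c₁ c₂ hd) hFv]
  simp only [ContinuousLinearMap.smul_apply, smul_eq_mul, pdv]
  ring

lemma riemann_conformal {U : Set (Fin 2 → ℝ)} (hU : IsOpen U) {a : (Fin 2 → ℝ) → ℝ}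
    (ha : ContDiffOn ℝ (⊤ : ℕ∞) a U) (c₁ c₂ : ℝ)
    (hFne : ∀ v, c₁ * Real.exp (a v) + c₂ ≠ 0) {u₀ : Fin 2 → ℝ} (hu₀ : u₀ ∈ U) :
    riemann (fun w => Matrix.diagonal fun _ => c₁ * Real.exp (a w) + c₂) 0 1 0 1 u₀ =
      -(1/2) * (c₁ * Real.exp (a u₀) * (c₁ * Real.exp (a u₀) + c₂)⁻¹ *
          (pdv a 0 u₀ ^ 2 + pdv a 1 u₀ ^ 2
            + (pdv (fun w => pdv a 0 w) 0 u₀ + pdv (fun w => pdv a 1 w) 1 u₀))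
        - (c₁ * Real.exp (a u₀))^2 * ((c₁ * Real.exp (a u₀) + c₂)^2)⁻¹ *
          (pdv a 0 u₀ ^ 2 + pdv a 1 u₀ ^ 2)) := by
  have hdiff : ∀ v ∈ U, DifferentiableAt ℝ a v := fun v hv =>
    ((ha.contDiffAt (hU.mem_nhds hv)).differentiableAt (by simp))
  have hd0 := hdiff u₀ hu₀
  have hpdv_def : ∀ (m : Fin 2) (w : Fin 2 → ℝ), fderiv ℝ a w (Pi.single m 1) = pdv a m w :=
    fun _ _ => rfl
  have hD2 : ∀ m : Fin 2, HasFDerivAt (fun w => pdv a m w)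
      (fderiv ℝ (fun w => pdv a m w) u₀) u₀ := by
    intro m
    have h1 : ContDiffAt ℝ (⊤ : ℕ∞) a u₀ := ha.contDiffAt (hU.mem_nhds hu₀)
    have h2 : ContDiffAt ℝ (⊤ : ℕ∞) (fderiv ℝ a) u₀ := h1.fderiv_right (by simp)
    have h3 : DifferentiableAt ℝ (fun w => fderiv ℝ a w (Pi.single m 1)) u₀ :=
      (h2.differentiableAt (by simp)).clm_apply (differentiableAt_const _)
    exact h3.hasFDerivAt
  have hpdv2_def : ∀ (m k : Fin 2), fderiv ℝ (fun w => pdv a m w) u₀ (Pi.single k 1)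
      = pdv (fun w => pdv a m w) k u₀ := fun _ _ => rfl
  have hE' : HasFDerivAt (fun w => c₁ * Real.exp (a w))
      (c₁ • (Real.exp (a u₀) • fderiv ℝ a u₀)) u₀ := hd0.hasFDerivAt.exp.const_mul c₁
  have hFd := hasFDerivAt_F c₁ c₂ hd0
  have hInv := hasFDerivAt_inv_comp hFd (hFne u₀)
  -- the two eventual identifications of the Christoffel symbols
  have hEv011 : (fun v => christoffel
        (fun w => Matrix.diagonal fun _ : Fin 2 => c₁ * Real.exp (a w) + c₂) 0 1 1 v)
      =ᶠ[nhds u₀] (fun v => (1/2) *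
        ((c₁ * Real.exp (a v) + c₂)⁻¹ * (c₁ * Real.exp (a v) * pdv a 0 v))) := by
    filter_upwards [hU.mem_nhds hu₀] with v hv
    rw [christoffel_conformal c₁ c₂ (hdiff v hv) (hFne v)]
    simp
    try ring
  have hEv010 : (fun v => christoffel
        (fun w => Matrix.diagonal fun _ : Fin 2 => c₁ * Real.exp (a w) + c₂) 0 1 0 v)
      =ᶠ[nhds u₀] (fun v => -(1/2) *
        ((c₁ * Real.exp (a v) + c₂)⁻¹ * (c₁ * Real.exp (a v) * pdv a 1 v))) := by
    filter_upwards [hU.mem_nhds hu₀] with v hv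
    rw [christoffel_conformal c₁ c₂ (hdiff v hv) (hFne v)]
    simp
    try ring
  have hB : ∀ m : Fin 2, HasFDerivAt
      (fun v => (c₁ * Real.exp (a v) + c₂)⁻¹ * (c₁ * Real.exp (a v) * pdv a m v))
      ((c₁ * Real.exp (a u₀) + c₂)⁻¹ •
          ((c₁ * Real.exp (a u₀)) • fderiv ℝ (fun w => pdv a m w) u₀
            + pdv a m u₀ • (c₁ • (Real.exp (a u₀) • fderiv ℝ a u₀)))
        + (c₁ * Real.exp (a u₀) * pdv a m u₀) •
          (-((c₁ * Real.exp (a u₀) + c₂) ^ 2)⁻¹ •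
            ((c₁ * Real.exp (a u₀)) • fderiv ℝ a u₀)) ) u₀ := by
    intro m
    exact hInv.mul (hE'.mul (hD2 m))
  have hP011 : pdv (fun v => christoffel
        (fun w => Matrix.diagonal fun _ : Fin 2 => c₁ * Real.exp (a w) + c₂) 0 1 1 v) 0 u₀
      = (1/2) * ((c₁ * Real.exp (a u₀) + c₂)⁻¹ *
            (c₁ * Real.exp (a u₀) * pdv (fun w => pdv a 0 w) 0 u₀
              + pdv a 0 u₀ * (c₁ * (Real.exp (a u₀) * pdv a 0 u₀)))
          + (c₁ * Real.exp (a u₀) * pdv a 0 u₀) *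
            (-((c₁ * Real.exp (a u₀) + c₂) ^ 2)⁻¹ * (c₁ * Real.exp (a u₀) * pdv a 0 u₀))) := by
    rw [pdv_congr_nhds hEv011, pdv_hasFDerivAt ((hB 0).const_mul (1/2))]
    simp only [ContinuousLinearMap.smul_apply, ContinuousLinearMap.add_apply, smul_eq_mul,
      hpdv_def, hpdv2_def]
    try ring
  have hP010 : pdv (fun v => christoffel
        (fun w => Matrix.diagonal fun _ : Fin 2 => c₁ * Real.exp (a w) + c₂) 0 1 0 v) 1 u₀
      = -((1/2) * ((c₁ * Real.exp (a u₀) + c₂)⁻¹ *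
            (c₁ * Real.exp (a u₀) * pdv (fun w => pdv a 1 w) 1 u₀
              + pdv a 1 u₀ * (c₁ * (Real.exp (a u₀) * pdv a 1 u₀)))
          + (c₁ * Real.exp (a u₀) * pdv a 1 u₀) *
            (-((c₁ * Real.exp (a u₀) + c₂) ^ 2)⁻¹ * (c₁ * Real.exp (a u₀) * pdv a 1 u₀)))) := by
    have h := (hB 1).const_mul (-(1/2))
    rw [pdv_congr_nhds hEv010, pdv_hasFDerivAt h]
    simp only [ContinuousLinearMap.smul_apply, ContinuousLinearMap.add_apply, smul_eq_mul,
      hpdv_def, hpdv2_def]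
    try ring
  rw [riemann, Fin.sum_univ_two, Fin.sum_univ_two, hP011, hP010]
  simp only [christoffel_conformal c₁ c₂ hd0 (hFne u₀)]
  simp
  try ring

lemma riemannCon_conformal_pt {a : (Fin 2 → ℝ) → ℝ} (c₁ c₂ : ℝ) (u₀ : Fin 2 → ℝ) :
    riemannCon (fun w => Matrix.diagonal fun _ => c₁ * Real.exp (a w) + c₂) 1 0 0 1 u₀ =
      (c₁ * Real.exp (a u₀) + c₂) *
        riemann (fun w => Matrix.diagonal fun _ => c₁ * Real.exp (a w) + c₂) 0 1 0 1 u₀ := by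
  rw [riemannCon, Fin.sum_univ_two]
  simp [Matrix.diagonal_apply]

lemma nijenhuis_conformal {a : (Fin 2 → ℝ) → ℝ} {u₀ : Fin 2 → ℝ}
    (hd : DifferentiableAt ℝ a u₀) (k i j : Fin 2) :
    nijenhuis (fun v => Matrix.diagonal fun _ : Fin 2 => Real.exp (a v)) k i j u₀ = 0 := by
  have hpdv : ∀ (p q m : Fin 2), pdv (fun v =>
      (Matrix.diagonal fun _ : Fin 2 => Real.exp (a v)) p q) m u₀
      = (if p = q then 1 else 0) * (Real.exp (a u₀) * pdv a m u₀) := by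
    intro p q m
    by_cases h : p = q
    · have hf : (fun v => (Matrix.diagonal fun _ : Fin 2 => Real.exp (a v)) p q)
          = fun v => Real.exp (a v) := by
        funext v; rw [Matrix.diagonal_apply, if_pos h]
      rw [hf, if_pos h, pdv_hasFDerivAt hd.hasFDerivAt.exp]
      simp [pdv]
    · have hf : (fun v => (Matrix.diagonal fun _ : Fin 2 => Real.exp (a v)) p q)
          = fun _ => (0:ℝ) := by
        funext v; rw [Matrix.diagonal_apply, if_neg h]
      rw [hf, if_neg h, pdv, fderiv_fun_const]
      simp
  rw [nijenhuis, Fin.sum_univ_two]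
  simp only [hpdv, Matrix.diagonal_apply]
  fin_cases k <;> fin_cases i <;> fin_cases j <;> simp <;> ring

lemma exists_grad_ne {U : Set (Fin 2 → ℝ)} (hU : IsOpen U) (hconn : IsConnected U)
    {a : (Fin 2 → ℝ) → ℝ} (ha : ContDiffOn ℝ (⊤ : ℕ∞) a U)
    (hnc : ∃ u ∈ U, ∃ v ∈ U, a u ≠ a v) :
    ∃ u₀ ∈ U, pdv a 0 u₀ ^ 2 + pdv a 1 u₀ ^ 2 ≠ 0 := by
  by_contra hcon
  push_neg at hcon
  have hgrad : ∀ u ∈ U, fderiv ℝ a u = 0 := by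
    intro u hu
    have h0 := hcon u hu
    have h1 : pdv a 0 u = 0 ∧ pdv a 1 u = 0 := by
      constructor <;> nlinarith [sq_nonneg (pdv a 0 u), sq_nonneg (pdv a 1 u)]
    ext x
    have hx : x = x 0 • (Pi.single 0 1 : Fin 2 → ℝ) + x 1 • (Pi.single 1 1 : Fin 2 → ℝ) := by
      funext m; fin_cases m <;> simp
    rw [hx, map_add, ContinuousLinearMap.map_smul, ContinuousLinearMap.map_smul]
    have e0 : fderiv ℝ a u (Pi.single 0 1) = 0 := h1.1
    have e1 : fderiv ℝ a u (Pi.single 1 1) = 0 := h1.2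
    simp [e0, e1]
  -- locally constant
  have hloc : ∀ x ∈ U, ∃ ε > 0, Metric.ball x ε ⊆ U ∧
      ∀ y ∈ Metric.ball x ε, a y = a x := by
    intro x hx
    obtain ⟨ε, hε, hball⟩ := Metric.isOpen_iff.mp hU x hx
    refine ⟨ε, hε, hball, ?_⟩
    intro y hy
    have hdiff : DifferentiableOn ℝ a (Metric.ball x ε) :=
      (ha.differentiableOn (by simp)).mono hball
    exact (convex_ball x ε).is_const_of_fderivWithin_eq_zero hdiff
      (fun z hz => by rw [fderivWithin_of_isOpen Metric.isOpen_ball hz, hgrad z (hball hz)] ) hy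
      (Metric.mem_ball_self hε)
  haveI : PreconnectedSpace ↥U := Subtype.preconnectedSpace hconn.isPreconnected
  have hlc : IsLocallyConstant (fun x : ↥U => a ↑x) := by
    rw [IsLocallyConstant.iff_exists_open]
    rintro ⟨x, hx⟩
    obtain ⟨ε, hε, hball, hconst⟩ := hloc x hx
    refine ⟨Subtype.val ⁻¹' Metric.ball x ε,
      Metric.isOpen_ball.preimage continuous_subtype_val, Metric.mem_ball_self hε, ?_⟩
    rintro ⟨y, hy⟩ hmem
    exact hconst y hmem
  obtain ⟨u, hu, v, hv, hne⟩ := hnc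
  exact hne (hlc.apply_eq_of_preconnectedSpace ⟨u, hu⟩ ⟨v, hv⟩)


/-- for a nonconstant harmonic `a` on a connected open `U ⊆ ℝ²`, the flat
metrics `g₁ = e^{a} δ` and `g₂ = δ` are almost compatible (vanishing Nijenhuis
tensor) but not compatible. -/
theorem harmonic_conformal_almost_compatible_not_compatible
    (U : Set (Fin 2 → ℝ)) (hU : IsOpen U) (hconn : IsConnected U)
    (a : (Fin 2 → ℝ) → ℝ) (ha : ContDiffOn ℝ (⊤ : ℕ∞) a U)
    (hharm : ∀ u ∈ U, pdv (fun v => pdv a 0 v) 0 u + pdv (fun v => pdv a 1 v) 1 u = 0)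
    (hnc : ∃ u ∈ U, ∃ v ∈ U, a u ≠ a v)
    (g₁ g₂ : (Fin 2 → ℝ) → Matrix (Fin 2) (Fin 2) ℝ)
    (hg₁ : ∀ u, g₁ u = Matrix.diagonal (fun _ => Real.exp (a u)))
    (hg₂ : ∀ u, g₂ u = 1) :
    AlmostCompatibleOn U g₁ g₂ ∧
    (∀ u ∈ U, ∀ k i j, nijenhuis (affinor g₁ g₂) k i j u = 0) ∧
    ¬ CompatibleOn U g₁ g₂ := by
  have hdiffat : ∀ v ∈ U, DifferentiableAt ℝ a v := fun v hv =>
    (ha.contDiffAt (hU.mem_nhds hv)).differentiableAt (by simp)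
  have hg₁' : g₁ = fun v => Matrix.diagonal (fun _ : Fin 2 => 1 * Real.exp (a v) + 0) := by
    funext v; rw [hg₁]; norm_num
  have hg₂' : g₂ = fun v => Matrix.diagonal (fun _ : Fin 2 => 0 * Real.exp (a v) + 1) := by
    funext v; rw [hg₂]
    ext i j
    rw [Matrix.diagonal_apply]
    simp [Matrix.one_apply]
  have hcombo : ∀ (l₁ l₂ : ℝ) (v : Fin 2 → ℝ), l₁ • g₁ v + l₂ • g₂ v
      = Matrix.diagonal (fun _ : Fin 2 => l₁ * Real.exp (a v) + l₂) := by
    intro l₁ l₂ v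
    rw [hg₁, hg₂]
    ext i j
    rw [Matrix.add_apply, Matrix.smul_apply, Matrix.smul_apply, Matrix.diagonal_apply,
      Matrix.diagonal_apply]
    simp [Matrix.one_apply]
    split_ifs <;> simp
  have hcomboF : ∀ (l₁ l₂ : ℝ), (fun v => l₁ • g₁ v + l₂ • g₂ v)
      = fun v => Matrix.diagonal (fun _ : Fin 2 => l₁ * Real.exp (a v) + l₂) :=
    fun l₁ l₂ => funext fun v => hcombo l₁ l₂ v
  have hexp : ∀ (v : Fin 2 → ℝ), (1:ℝ) * Real.exp (a v) + 0 ≠ 0 := fun v => by positivity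
  have hone : ∀ (v : Fin 2 → ℝ), (0:ℝ) * Real.exp (a v) + 1 ≠ 0 := fun v => by norm_num
  refine ⟨?_, ?_, ?_⟩
  · -- almost compatible
    intro l₁ l₂ _hex u hu hdetu i j k
    have hFu : l₁ * Real.exp (a u) + l₂ ≠ 0 := by
      intro h0
      apply hdetu
      rw [hcombo l₁ l₂ u, Matrix.det_diagonal, Fin.prod_univ_two, h0, zero_mul]
    rw [hcomboF l₁ l₂, hg₁', hg₂',
      christoffelCon_conformal l₁ l₂ (hdiffat u hu) hFu,
      christoffelCon_conformal 1 0 (hdiffat u hu) (hexp u),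
      christoffelCon_conformal 0 1 (hdiffat u hu) (hone u)]
    ring
  · -- vanishing Nijenhuis tensor
    intro u hu k i j
    have haff : affinor g₁ g₂ = fun v => Matrix.diagonal (fun _ : Fin 2 => Real.exp (a v)) := by
      funext v; rw [affinor, hg₁, hg₂, inv_one, mul_one]
    rw [haff]
    exact nijenhuis_conformal (hdiffat u hu) k i j
  · -- not compatible
    intro hcomp
    obtain ⟨u₀, hu₀, hq⟩ := exists_grad_ne hU hconn ha hnc
    have hFne : ∀ v : Fin 2 → ℝ, (1:ℝ) * Real.exp (a v) + 1 ≠ 0 := fun v => by positivity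
    have hdet1 : ∀ u ∈ U, ((1:ℝ) • g₁ u + (1:ℝ) • g₂ u).det ≠ 0 := by
      intro u _hu
      rw [hcombo 1 1 u, Matrix.det_diagonal, Fin.prod_univ_two]
      exact mul_ne_zero (hFne u) (hFne u)
    have h := hcomp.2 1 1 ⟨u₀, hu₀, hdet1 u₀ hu₀⟩ u₀ hu₀ (hdet1 u₀ hu₀) 1 0 0 1
    rw [hcomboF 1 1, hg₁', hg₂'] at h
    rw [riemannCon_conformal_pt 1 1 u₀, riemannCon_conformal_pt 1 0 u₀,
      riemannCon_conformal_pt 0 1 u₀,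
      riemann_conformal hU ha 1 1 hFne hu₀,
      riemann_conformal hU ha 1 0 hexp hu₀,
      riemann_conformal hU ha 0 1 hone hu₀,
      hharm u₀ hu₀] at h
    have hE : (0:ℝ) < Real.exp (a u₀) := Real.exp_pos _
    have hq' : (0:ℝ) < pdv a 0 u₀ ^ 2 + pdv a 1 u₀ ^ 2 := by
      rcases lt_or_eq_of_le (by positivity : (0:ℝ) ≤ pdv a 0 u₀ ^ 2 + pdv a 1 u₀ ^ 2) with h' | h'
      · exact h'
      · exact absurd h'.symm hq
    set E := Real.exp (a u₀) with hEdef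
    set Q := pdv a 0 u₀ ^ 2 + pdv a 1 u₀ ^ 2 with hQdef
    have hE1 : E + 1 ≠ 0 := by positivity
    have hEne : E ≠ 0 := ne_of_gt hE
    field_simp at h
    have hrw : (E + 1) * ((E + 1) * (E ^ 2 * Q) - E * Q * (E + 1) ^ 2)
        = -((E + 1) ^ 2 * (E * Q)) := by ring
    have h : -((E + 1) ^ 2 * (E * Q)) = 0 := by linear_combination (E + 1) ^ 2 * h
    have hpos : (0:ℝ) < (E + 1) ^ 2 * (E * Q) :=
      mul_pos (pow_pos (by linarith) 2) (mul_pos hE hq')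
    linarith
end
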